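/- arXiv:math/0312390 — 7 statements merged into one kernel-verified Lean document; each statement's English description precedes it below -/
import Mathlib

section
/- The 4×4 Hermitian partial matrix A with all diagonal entries 1, entries a₁₂ = a₂₃ = a₃₄ = 1, entry a₁₄ = -1 (and conjugate-symmetric counterparts), and unspecified entries a₁₃ and a₂₄, has the property that every Hermitian completion M (i.e., every Hermitian matrix agreeing with A on the specified entries) has at least one negative eigenvalue, even though every specified 2×2 principal submatrix of A is positive semidefinite. -/
open Matrix ComplexOrder

/-- Number of positive eigenvalues (with multiplicity) of a Hermitian matrix. -/
noncomputable def posCount {m : Type*} [Fintype m] [DecidableEq m]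
    {M : Matrix m m ℂ} (hM : M.IsHermitian) : ℕ :=
  Fintype.card {i // 0 < hM.eigenvalues i}

/-- Number of negative eigenvalues (with multiplicity) of a Hermitian matrix. -/
noncomputable def negCount {m : Type*} [Fintype m] [DecidableEq m]
    {M : Matrix m m ℂ} (hM : M.IsHermitian) : ℕ :=
  Fintype.card {i // hM.eigenvalues i < 0}

/-- Number of zero eigenvalues (with multiplicity) of a Hermitian matrix. -/
noncomputable def zeroCount {m : Type*} [Fintype m] [DecidableEq m]
    {M : Matrix m m ℂ} (hM : M.IsHermitian) : ℕ :=
  Fintype.card {i // hM.eigenvalues i = 0}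

/-- Every Hermitian completion of the partial matrix on the 4-cycle with specified
entries `a₁₂ = a₂₃ = a₃₄ = 1`, `a₁₄ = -1` and diagonal `1` has at least one negative
eigenvalue, even though every specified `2 × 2` principal submatrix is positive
semidefinite. -/
theorem stmt3 :
    ((!![1, 1; 1, 1] : Matrix (Fin 2) (Fin 2) ℂ).PosSemidef ∧
      (!![1, -1; -1, 1] : Matrix (Fin 2) (Fin 2) ℂ).PosSemidef) ∧
    ∀ x y : ℂ,
      ∀ hM : (!![1, 1, x, -1; 1, 1, 1, y; star x, 1, 1, 1; -1, star y, 1, 1] :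
          Matrix (Fin 4) (Fin 4) ℂ).IsHermitian,
        1 ≤ negCount hM := by
  refine ⟨⟨?_, ?_⟩, ?_⟩
  · have : (!![1, 1; 1, 1] : Matrix (Fin 2) (Fin 2) ℂ) =
        (!![1, 1; 0, 0] : Matrix (Fin 2) (Fin 2) ℂ)ᴴ * !![1, 1; 0, 0] := by
      ext i j
      fin_cases i <;> fin_cases j <;>
        simp [Matrix.mul_apply, Fin.sum_univ_two, Matrix.conjTranspose_apply]
    rw [this]
    exact posSemidef_conjTranspose_mul_self _
  · have : (!![1, -1; -1, 1] : Matrix (Fin 2) (Fin 2) ℂ) =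
        (!![1, -1; 0, 0] : Matrix (Fin 2) (Fin 2) ℂ)ᴴ * !![1, -1; 0, 0] := by
      ext i j
      fin_cases i <;> fin_cases j <;>
        simp [Matrix.mul_apply, Fin.sum_univ_two, Matrix.conjTranspose_apply]
    rw [this]
    exact posSemidef_conjTranspose_mul_self _
  · intro x y hM
    by_contra hc
    push_neg at hc
    interval_cases h : negCount hM
    have hzero : ∀ i, ¬ hM.eigenvalues i < 0 := by
      intro i hi
      have : 0 < negCount hM := Fintype.card_pos_iff.mpr ⟨⟨i, hi⟩⟩
      omega
    have hpsd : (!![1, 1, x, -1; 1, 1, 1, y; star x, 1, 1, 1; -1, star y, 1, 1] :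
        Matrix (Fin 4) (Fin 4) ℂ).PosSemidef :=
      (Matrix.IsHermitian.posSemidef_iff_eigenvalues_nonneg hM).mpr fun i => le_of_not_gt (hzero i)
    set M : Matrix (Fin 4) (Fin 4) ℂ :=
      !![1, 1, x, -1; 1, 1, 1, y; star x, 1, 1, 1; -1, star y, 1, 1] with hMdef
    have h1 : M *ᵥ ![1, -1, 0, 0] = 0 := by
      rw [← hpsd.dotProduct_mulVec_zero_iff]
      simp [hMdef, dotProduct, mulVec, Fin.sum_univ_four, vecHead, vecTail]
    have h2 : M *ᵥ ![0, 1, -1, 0] = 0 := by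
      rw [← hpsd.dotProduct_mulVec_zero_iff]
      simp [hMdef, dotProduct, mulVec, Fin.sum_univ_four, vecHead, vecTail]
    have e1 : (M *ᵥ ![1, -1, 0, 0]) 3 = 0 := by rw [h1]; rfl
    have e2 : (M *ᵥ ![0, 1, -1, 0]) 3 = 0 := by rw [h2]; rfl
    simp [hMdef, mulVec, dotProduct, Fin.sum_univ_four] at e1 e2
    exact absurd (by linear_combination e1 + e2 : (-2:ℂ) = 0) (by norm_num)
end

section
/- For every complex number x and y, the 4×4 Hermitian matrix M = [[1,1,x,-1],[1,1,1,y],[conj(x),1,1,1],[-1,conj(y),1,1]] is not positive semidefinite. -/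
/-!
A positive semidefinite matrix whose principal `2 × 2` submatrix on `{i, j}` is all ones has
`eᵢ - eⱼ` in its kernel, so its columns `i` and `j` coincide. The blocks on `{0, 1}` and `{2, 3}`
then force `x̄ = 1` (row 2) and `x = -1` (row 0).
-/

open Matrix ComplexOrder

theorem Matrix.PosSemidef.apply_eq_of_add_eq_add {n 𝕜 : Type*} [Fintype n] [DecidableEq n]
    [RCLike 𝕜] {A : Matrix n n 𝕜} (hA : A.PosSemidef) {i j : n}
    (hij : A i i + A j j = A i j + A j i) (k : n) : A k i = A k j := by
  set v : n → 𝕜 := Pi.single i 1 - Pi.single j 1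
  have hAv : A *ᵥ v = A.col i - A.col j := by
    simp only [v, mulVec_sub, mulVec_single_one]
  have hform : star v ⬝ᵥ A *ᵥ v = 0 := by
    simp only [v, hAv, star_sub, Pi.star_single, star_one, sub_dotProduct, single_dotProduct,
      Pi.sub_apply, col_apply, one_mul]
    linear_combination hij
  have hker := congrFun ((hA.dotProduct_mulVec_zero_iff v).mp hform) k
  rw [hAv, Pi.sub_apply, col_apply, col_apply, Pi.zero_apply] at hker
  exact sub_eq_zero.mp hker

/-- For all `x, y : ℂ`, the matrix `[[1,1,x,-1],[1,1,1,y],[x̄,1,1,1],[-1,ȳ,1,1]]`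
is not positive semidefinite. -/
theorem stmt4 (x y : ℂ) :
    ¬ (!![1, 1, x, -1; 1, 1, 1, y; star x, 1, 1, 1; -1, star y, 1, 1] :
        Matrix (Fin 4) (Fin 4) ℂ).PosSemidef := by
  intro h
  have hx_conj : star x = 1 := h.apply_eq_of_add_eq_add (i := 0) (j := 1) (by simp) 2
  have hx : x = -1 := h.apply_eq_of_add_eq_add (i := 2) (j := 3) (by simp) 0
  rw [hx] at hx_conj
  norm_num at hx_conj
end

section
/- Let G be the chordless cycle on 4 vertices {1,2,3,4} with edges 12, 23, 34, 14. Then every partial positive Hermitian matrix with graph G admits a Hermitian completion M with at most one negative eigenvalue, i.e., i₋(M) ≤ 1. -/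
open Matrix ComplexOrder

/-- `A` is a partial Hermitian matrix with graph `G`: the diagonal is real and the
specified (edge) entries are conjugate symmetric.  Non-edge entries of the array `A`
are regarded as unspecified. -/
def IsPartialHermitian {n : ℕ} (G : SimpleGraph (Fin n)) (A : Matrix (Fin n) (Fin n) ℂ) : Prop :=
  (∀ i : Fin n, (A i i).im = 0) ∧ ∀ i j : Fin n, G.Adj i j → A j i = star (A i j)

/-- The principal submatrix of `A` indexed by `K`. -/
def cliqueSub {n : ℕ} (A : Matrix (Fin n) (Fin n) ℂ) (K : Finset (Fin n)) :
    Matrix K K ℂ :=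
  A.submatrix (fun i => (i : Fin n)) (fun j => (j : Fin n))

/-- `A` is a partial positive matrix with graph `G`: it is partial Hermitian and every
fully specified principal submatrix `A(K)`, `K` a clique of `G`, is positive definite. -/
def IsPartialPositive {n : ℕ} (G : SimpleGraph (Fin n)) (A : Matrix (Fin n) (Fin n) ℂ) : Prop :=
  IsPartialHermitian G A ∧
    ∀ K : Finset (Fin n), G.IsClique (K : Set (Fin n)) → (cliqueSub A K).PosDef

/-- The completion number of `G` is `c`: `c` is the least `k` such that every partial
positive matrix with graph `G` has a Hermitian completion with at most `k` negative
eigenvalues. -/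
def CompletionNumberIs {n : ℕ} (G : SimpleGraph (Fin n)) (c : ℕ) : Prop :=
  IsLeast {k : ℕ | ∀ A : Matrix (Fin n) (Fin n) ℂ, IsPartialPositive G A →
    ∃ M : Matrix (Fin n) (Fin n) ℂ, ∃ hM : M.IsHermitian,
      (∀ i j : Fin n, (i = j ∨ G.Adj i j) → M i j = A i j) ∧ negCount hM ≤ k} c

/-- The cycle graph on `Fin n`: `i` is adjacent to `i + 1 (mod n)`. -/
def cycleG (n : ℕ) : SimpleGraph (Fin n) :=
  SimpleGraph.fromRel (fun i j => (j : ℕ) = ((i : ℕ) + 1) % n)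

section Aux

open Complex

/-- A hermitian matrix which is positive semidefinite on the orthogonal complement of a
single vector has at most one negative eigenvalue. -/
lemma negCount_le_one_aux {n : Type*} [Fintype n] [DecidableEq n] {M : Matrix n n ℂ}
    (hM : M.IsHermitian) (v : n → ℂ)
    (h : ∀ x : n → ℂ, star v ⬝ᵥ x = 0 → 0 ≤ star x ⬝ᵥ (M *ᵥ x)) :
    negCount hM ≤ 1 := by
  rw [negCount, Fintype.card_le_one_iff]
  rintro ⟨i, hi⟩ ⟨j, hj⟩
  ext
  by_contra hij
  set B : n → (n → ℂ) := fun k => ⇑(hM.eigenvectorBasis k) with hB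
  have horth : ∀ k l, star (B k) ⬝ᵥ B l = if k = l then 1 else 0 := by
    intro k l
    have h2 := (orthonormal_iff_ite.mp hM.eigenvectorBasis.orthonormal) k l
    rw [EuclideanSpace.inner_eq_star_dotProduct] at h2
    rw [← h2]; simp only [dotProduct, B, Pi.star_apply, RCLike.star_def, mul_comm]
  set ti := star v ⬝ᵥ B i with hti'
  set tj := star v ⬝ᵥ B j with htj'
  by_cases hti : ti = 0
  · have h1 := h (B i) hti
    rw [hM.mulVec_eigenvectorBasis, dotProduct_smul, horth i i] at h1
    simp only [if_pos rfl, smul_eq_mul, mul_one] at h1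
    rw [Complex.le_def] at h1
    simp only [Complex.zero_re, Complex.real_smul, if_true, mul_one, Complex.ofReal_re] at h1
    linarith [h1.1]
  · set x := tj • B i - ti • B j with hx
    have hvx : star v ⬝ᵥ x = 0 := by
      simp [hx, dotProduct_sub, dotProduct_smul, ← hti', ← htj', smul_eq_mul]; ring
    have h1 := h x hvx
    rw [hx, mulVec_sub, mulVec_smul, mulVec_smul, hM.mulVec_eigenvectorBasis,
      hM.mulVec_eigenvectorBasis] at h1
    have horth' : ∀ k l, star (B k) ⬝ᵥ (hM.eigenvectorBasis l).ofLp = if k = l then 1 else 0 := horth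
    simp only [star_sub, star_smul, sub_dotProduct, dotProduct_sub, smul_dotProduct,
      dotProduct_smul, horth', if_pos rfl, if_neg hij, if_neg (Ne.symm hij)] at h1
    have key : tj • hM.eigenvalues i • ((star tj • if True then (1:ℂ) else 0) - star ti • 0)
        - ti • hM.eigenvalues j • (star tj • 0 - star ti • if True then (1:ℂ) else 0)
        = ((Complex.normSq tj * hM.eigenvalues i + Complex.normSq ti * hM.eigenvalues j : ℝ) : ℂ) := by
      simp only [if_true, smul_eq_mul, mul_zero, zero_sub, sub_zero, mul_one,
        Complex.real_smul, Complex.star_def]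
      rw [Complex.ofReal_add, Complex.ofReal_mul, Complex.ofReal_mul,
        ← Complex.mul_conj, ← Complex.mul_conj]
      ring
    rw [key] at h1
    rw [Complex.zero_le_real] at h1
    nlinarith [mul_nonneg (Complex.normSq_nonneg tj) (neg_nonneg.mpr hi.le),
      mul_pos (Complex.normSq_pos.mpr hti) (neg_pos.mpr hj)]

/-- The explicit completion of the partial positive 4-cycle data. -/
noncomputable def Mc (D0 D1 D2 D3 : ℝ) (a b c e m13 : ℂ) : Matrix (Fin 4) (Fin 4) ℂ :=
  !![(D0:ℂ), a, 0, (starRingEnd ℂ) e;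
     (starRingEnd ℂ) a, (D1:ℂ), b, m13;
     0, (starRingEnd ℂ) b, (D2:ℂ), c;
     e, (starRingEnd ℂ) m13, (starRingEnd ℂ) c, (D3:ℂ)]

lemma Mc_isHermitian (D0 D1 D2 D3 : ℝ) (a b c e m13 : ℂ) :
    (Mc D0 D1 D2 D3 a b c e m13).IsHermitian := by
  rw [Matrix.IsHermitian]
  ext i j
  fin_cases i <;> fin_cases j <;>
    simp [Mc, Matrix.conjTranspose_apply, Complex.conj_ofReal]

lemma lem2 (D0 D1 D2 D3 : ℝ) (a b c e : ℂ) (h0 : 0 < D0) (h2 : 0 < D2)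
    (hb : normSq b < D1 * D2) (hc : normSq c < D2 * D3) :
    ∃ m13 : ℂ, ∀ x : Fin 4 → ℂ, x 0 = 0 →
      0 ≤ star x ⬝ᵥ ((Mc D0 D1 D2 D3 a b c e m13) *ᵥ x) := by
  obtain ⟨α, hα'⟩ : ∃ t, t = D1 - normSq b / D2 := ⟨_, rfl⟩
  obtain ⟨β, hβ'⟩ : ∃ t, t = D3 - normSq c / D2 := ⟨_, rfl⟩
  have hα : 0 < α := by rw [hα', sub_pos, div_lt_iff₀ h2]; linarith
  have hβ : 0 < β := by rw [hβ', sub_pos, div_lt_iff₀ h2]; nlinarith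
  obtain ⟨R, hR'⟩ : ∃ t, t = D0 + normSq a / α + normSq e / β := ⟨_, rfl⟩
  have hR : 0 < R := by
    rw [hR']
    have h1 := div_nonneg (normSq_nonneg a) hα.le
    have h2' := div_nonneg (normSq_nonneg e) hβ.le
    linarith
  have hdv1 : 0 ≤ α - normSq a / R := by
    rw [sub_nonneg, div_le_iff₀ hR, hR', mul_add, mul_add,
      mul_div_cancel₀ _ hα.ne']
    nlinarith [mul_pos hα h0, mul_nonneg hα.le (div_nonneg (normSq_nonneg e) hβ.le)]
  have hdv3 : 0 ≤ β - normSq e / R := by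
    rw [sub_nonneg, div_le_iff₀ hR, hR', mul_add, mul_add,
      mul_div_cancel₀ _ hβ.ne']
    nlinarith [mul_pos hβ h0, mul_nonneg hβ.le (div_nonneg (normSq_nonneg a) hα.le)]
  refine ⟨b * c / D2 + (starRingEnd ℂ) a * (starRingEnd ℂ) e / R, fun x hx0 => ?_⟩
  have hD2 : (D2:ℂ) ≠ 0 := ofReal_ne_zero.mpr h2.ne'
  have hRc : (R:ℂ) ≠ 0 := ofReal_ne_zero.mpr hR.ne'
  have key : star x ⬝ᵥ ((Mc D0 D1 D2 D3 a b c e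
        (b * c / D2 + (starRingEnd ℂ) a * (starRingEnd ℂ) e / R)) *ᵥ x)
      = ((normSq ((starRingEnd ℂ) b * x 1 + (D2:ℂ) * x 2 + c * x 3) / D2
        + normSq (a * x 1 + (starRingEnd ℂ) e * x 3) / R
        + (α - normSq a / R) * normSq (x 1)
        + (β - normSq e / R) * normSq (x 3) : ℝ) : ℂ) := by
    simp only [Mc, dotProduct, mulVec, Fin.sum_univ_four, Matrix.cons_val', Matrix.cons_val_zero,
      Matrix.cons_val_one, Matrix.head_cons, Matrix.empty_val', Matrix.cons_val_fin_one,
      Matrix.head_fin_const, Matrix.cons_val_two, Matrix.cons_val_three, Matrix.vecTail,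
      Matrix.vecHead, Matrix.of_apply, Function.comp, hx0, Pi.star_apply, RCLike.star_def]
    push_cast [hα', hβ']
    simp only [← Complex.mul_conj]
    simp only [map_add, _root_.map_mul, map_sub, map_div₀, Complex.conj_conj, Complex.conj_ofReal, map_zero]
    field_simp
    ring
  rw [key, Complex.zero_le_real]
  have n1 := normSq_nonneg ((starRingEnd ℂ) b * x 1 + (D2:ℂ) * x 2 + c * x 3)
  have n2 := normSq_nonneg (a * x 1 + (starRingEnd ℂ) e * x 3)
  have n3 := normSq_nonneg (x 1)
  have n4 := normSq_nonneg (x 3)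
  have := div_nonneg n1 h2.le
  have := div_nonneg n2 hR.le
  have := mul_nonneg hdv1 n3
  have := mul_nonneg hdv3 n4
  linarith

lemma diag_pos {n : ℕ} (A : Matrix (Fin n) (Fin n) ℂ) (i : Fin n)
    (h : (cliqueSub A {i}).PosDef) : 0 < (A i i).re := by
  have hx : (fun _ : ({i} : Finset (Fin n)) => (1:ℂ)) ≠ 0 := by
    intro hcon
    exact one_ne_zero (congrFun hcon ⟨i, Finset.mem_singleton_self i⟩)
  have h2 := h.dotProduct_mulVec_pos hx
  simp only [cliqueSub, dotProduct, mulVec, submatrix_apply, Pi.star_apply, star_one, one_mul,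
    mul_one, Finset.univ_eq_attach, Finset.sum_attach, Finset.sum_singleton] at h2
  rw [Finset.sum_attach ({i} : Finset (Fin n)) (fun k => A k i), Finset.sum_singleton,
    Complex.lt_def] at h2
  simpa using h2.1

lemma pair_lt {n : ℕ} (A : Matrix (Fin n) (Fin n) ℂ) (i j : Fin n) (hij : i ≠ j)
    (hpos : 0 < (A i i).re)
    (hii : A i i = (((A i i).re : ℝ) : ℂ)) (hjj : A j j = (((A j j).re : ℝ) : ℂ))
    (hji : A j i = (starRingEnd ℂ) (A i j))
    (h : (cliqueSub A {i,j}).PosDef) : normSq (A i j) < (A i i).re * (A j j).re := by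
  classical
  set x : ({i,j} : Finset (Fin n)) → ℂ :=
    fun k => if (k : Fin n) = i then A i j else (-(A i i).re : ℂ) with hx'
  have hx : x ≠ 0 := by
    intro hcon
    have h3 := congrFun hcon ⟨j, by simp⟩
    simp only [hx', if_neg (show (j : Fin n) ≠ i from hij.symm)] at h3
    rw [Pi.zero_apply] at h3
    have : ((A i i).re : ℂ) = 0 := by linear_combination -h3
    exact hpos.ne' (by exact_mod_cast this)
  have h2 := h.dotProduct_mulVec_pos hx
  simp only [cliqueSub, dotProduct, mulVec, submatrix_apply, Pi.star_apply,
    Finset.univ_eq_attach, Finset.sum_attach, hx'] at h2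
  rw [Finset.sum_attach ({i,j} : Finset (Fin n))
    (fun k => star (if k = i then A i j else (-(A i i).re : ℂ)) *
      ∑ l ∈ Finset.attach {i,j}, A k ↑l * (if (l:Fin n) = i then A i j else (-(A i i).re : ℂ)))] at h2
  have inner : ∀ k : Fin n, ∑ l ∈ ({i,j} : Finset (Fin n)).attach,
      A k ↑l * (if (l : Fin n) = i then A i j else (-(A i i).re : ℂ))
      = ∑ l ∈ ({i,j} : Finset (Fin n)), A k l * (if l = i then A i j else (-(A i i).re : ℂ)) :=
    fun k => Finset.sum_attach ({i,j} : Finset (Fin n))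
      (fun l => A k l * (if l = i then A i j else (-(A i i).re : ℂ)))
  simp only [inner, Finset.sum_pair hij, if_pos rfl, if_true, if_neg (Ne.symm hij)] at h2
  have key : star (A i j) * (A i i * A i j + A i j * (-((A i i).re : ℂ)))
      + star (-((A i i).re : ℂ)) * (A j i * A i j + A j j * (-((A i i).re : ℂ)))
      = (((A i i).re * ((A i i).re * (A j j).re - normSq (A i j)) : ℝ) : ℂ) := by
    rw [hji]
    nth_rewrite 1 [hii]
    nth_rewrite 1 [hjj]
    simp only [RCLike.star_def, map_neg, Complex.conj_ofReal]
    have hm : (starRingEnd ℂ) (A i j) * A i j = ((normSq (A i j) : ℝ) : ℂ) := by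
      rw [mul_comm, Complex.mul_conj]
    rw [hm]
    push_cast
    ring
  rw [key, Complex.lt_def] at h2
  have h3 := h2.1
  simp only [Complex.zero_re, Complex.ofReal_re] at h3
  nlinarith

end Aux

/-- Every partial positive matrix whose graph is the chordless 4-cycle admits a
Hermitian completion with at most one negative eigenvalue. -/
theorem stmt5 (A : Matrix (Fin 4) (Fin 4) ℂ) (hA : IsPartialPositive (cycleG 4) A) :
    ∃ M : Matrix (Fin 4) (Fin 4) ℂ, ∃ hM : M.IsHermitian,
      (∀ i j : Fin 4, (i = j ∨ (cycleG 4).Adj i j) → M i j = A i j) ∧ negCount hM ≤ 1 := by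
  obtain ⟨⟨him, hsym⟩, hcl⟩ := hA
  have hadj : ∀ i j : Fin 4, (cycleG 4).Adj i j ↔
      (i ≠ j ∧ (((j:ℕ) = ((i:ℕ)+1)%4) ∨ ((i:ℕ) = ((j:ℕ)+1)%4))) := by
    intro i j
    rw [cycleG]
    exact SimpleGraph.fromRel_adj _ i j
  have a01 : (cycleG 4).Adj 0 1 := (hadj 0 1).mpr (by decide)
  have a12 : (cycleG 4).Adj 1 2 := (hadj 1 2).mpr (by decide)
  have a23 : (cycleG 4).Adj 2 3 := (hadj 2 3).mpr (by decide)
  have a30 : (cycleG 4).Adj 3 0 := (hadj 3 0).mpr (by decide)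
  have hsingle : ∀ i : Fin 4, (cycleG 4).IsClique (↑({i} : Finset (Fin 4)) : Set (Fin 4)) := by
    intro i
    rw [Finset.coe_singleton]
    exact SimpleGraph.isClique_singleton i
  have hpair : ∀ i j : Fin 4, (cycleG 4).Adj i j →
      (cycleG 4).IsClique (↑({i,j} : Finset (Fin 4)) : Set (Fin 4)) := by
    intro i j hij
    rw [Finset.coe_insert, Finset.coe_singleton]
    exact SimpleGraph.isClique_pair.mpr fun _ => hij
  have hd : ∀ i : Fin 4, A i i = (((A i i).re : ℝ) : ℂ) := by
    intro i
    exact Complex.ext (by simp) (by simp [him i])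
  have h0 := diag_pos A 0 (hcl _ (hsingle 0))
  have h1 := diag_pos A 1 (hcl _ (hsingle 1))
  have h2 := diag_pos A 2 (hcl _ (hsingle 2))
  have hb : Complex.normSq (A 1 2) < (A 1 1).re * (A 2 2).re :=
    pair_lt A 1 2 (by decide) h1 (hd 1) (hd 2) (hsym 1 2 a12) (hcl _ (hpair 1 2 a12))
  have hc : Complex.normSq (A 2 3) < (A 2 2).re * (A 3 3).re :=
    pair_lt A 2 3 (by decide) h2 (hd 2) (hd 3) (hsym 2 3 a23) (hcl _ (hpair 2 3 a23))
  obtain ⟨m13, hq⟩ := lem2 (A 0 0).re (A 1 1).re (A 2 2).re (A 3 3).re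
    (A 0 1) (A 1 2) (A 2 3) (A 3 0) h0 h2 hb hc
  refine ⟨Mc (A 0 0).re (A 1 1).re (A 2 2).re (A 3 3).re (A 0 1) (A 1 2) (A 2 3) (A 3 0) m13,
    Mc_isHermitian _ _ _ _ _ _ _ _ _, ?_, ?_⟩
  · intro i j hij
    have h10 := hsym 0 1 a01
    have h21 := hsym 1 2 a12
    have h32 := hsym 2 3 a23
    have h03 := hsym 3 0 a30
    fin_cases i <;> fin_cases j <;>
      first
        | (exfalso
           rcases hij with hcon | hcon
           · exact absurd hcon (by decide)
           · rw [hadj] at hcon; exact absurd hcon (by decide))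
        | exact rfl
        | exact (hd 0).symm
        | exact (hd 1).symm
        | exact (hd 2).symm
        | exact (hd 3).symm
        | exact h10.symm
        | exact h21.symm
        | exact h32.symm
        | exact h03.symm
  · apply negCount_le_one_aux _ (Pi.single 0 1)
    intro x hvx
    apply hq
    simpa [dotProduct, Fin.sum_univ_four, Pi.single_apply] using hvx
end

section
/- Every partial positive Hermitian matrix whose graph is chordal admits a positive definite Hermitian completion. -/
open Matrix ComplexOrder

/-- A closed walk has a chord: an edge of `G` between two vertices of the walk that is
not an edge of the walk. -/
def HasChord {V : Type*} {G : SimpleGraph V} {v : V} (w : G.Walk v v) : Prop :=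
  ∃ x y : V, x ∈ w.support ∧ y ∈ w.support ∧ G.Adj x y ∧ s(x, y) ∉ w.edges

/-- A graph is chordal if every cycle of length at least 4 has a chord. -/
def IsChordal {V : Type*} (G : SimpleGraph V) : Prop :=
  ∀ ⦃v : V⦄ (w : G.Walk v v), w.IsCycle → 4 ≤ w.length → HasChord w

set_option linter.unusedSectionVars false
set_option linter.unusedVariables false
set_option maxHeartbeats 1000000
section AUX


section MatrixLemmas

variable {m n : Type*} [Fintype m] [DecidableEq m] [Fintype n] [DecidableEq n]

private lemma key_dot (e : m → n) (x : m → ℂ) (g : n → ℂ) :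
    (fun j => ∑ i, if j = e i then x i else 0) ⬝ᵥ g = ∑ i, x i * g (e i) := by
  simp only [dotProduct, Finset.sum_mul, ite_mul, zero_mul]
  rw [Finset.sum_comm]
  simp

theorem Matrix.PosDef.submatrix_inj {M : Matrix n n ℂ} (hM : M.PosDef) {e : m → n}
    (he : Function.Injective e) : (M.submatrix e e).PosDef := by
  refine Matrix.PosDef.of_dotProduct_mulVec_pos (hM.1.submatrix e) fun x hx => ?_
  set y : n → ℂ := fun j => ∑ i, if j = e i then x i else 0 with hy
  have hstar : star y = fun j => ∑ i, if j = e i then star (x i) else 0 := by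
    funext j
    simp [hy, star_sum, apply_ite]
  have hyne : y ≠ 0 := by
    obtain ⟨i, hi⟩ := Function.ne_iff.mp hx
    intro h0
    apply hi
    have h1 : y (e i) = 0 := by rw [h0]; rfl
    simpa [hy, he.eq_iff] using h1
  have h2 := hM.dotProduct_mulVec_pos hyne
  have hM2 : ∀ j, (M *ᵥ y) j = ∑ i, x i * M j (e i) := by
    intro j
    rw [mulVec, dotProduct_comm, hy, key_dot]
  have h3 : star y ⬝ᵥ (M *ᵥ y) = ∑ i, star (x i) * ∑ i', x i' * M (e i) (e i') := by
    rw [hstar]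
    rw [key_dot e (fun i => star (x i)) (M *ᵥ y)]
    exact Finset.sum_congr rfl fun i _ => by rw [hM2]
  rw [h3] at h2
  convert h2 using 1
  simp only [dotProduct, mulVec, submatrix_apply, Pi.star_apply]
  exact Finset.sum_congr rfl fun i _ =>
    congrArg _ (Finset.sum_congr rfl fun i' _ => mul_comm _ _)

theorem posDef_unit {N : Matrix Unit Unit ℂ} (h : 0 < N () ()) : N.PosDef := by
  obtain ⟨hre, him⟩ := Complex.lt_def.mp h
  have hsa : star (N () ()) = N () () := by
    apply Complex.ext <;> simp [← him]
  refine Matrix.PosDef.of_dotProduct_mulVec_pos ?_ ?_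
  · ext i j
    simpa using hsa
  · intro x hx
    have hx0 : x () ≠ 0 := by
      intro h0; apply hx; funext i; cases i; exact h0
    have : star x ⬝ᵥ (N *ᵥ x) = N () () * (star (x ()) * x ()) := by
      simp [dotProduct, mulVec]
      ring
    rw [this, mul_comm (star (x ())) (x ()), Complex.star_def, Complex.mul_conj]
    exact mul_pos h (Complex.zero_lt_real.mpr (Complex.normSq_pos.mpr hx0))

end MatrixLemmas

section Blocks
variable {m n : Type*} [Fintype m] [DecidableEq m] [Fintype n] [DecidableEq n]

theorem posDef_fromBlocks₁₁ {A : Matrix m m ℂ} (B : Matrix m n ℂ) {D : Matrix n n ℂ}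
    (hA : A.PosDef) [Invertible A] :
    (fromBlocks A B Bᴴ D).PosDef ↔ (D - Bᴴ * A⁻¹ * B).PosDef := by
  constructor
  · intro hP
    obtain ⟨h1, h2⟩ := Matrix.posDef_iff_dotProduct_mulVec.mp hP
    refine Matrix.PosDef.of_dotProduct_mulVec_pos ((Matrix.IsHermitian.fromBlocks₁₁ B D hA.1).mp h1) fun y hy => ?_
    have hz : (-((A⁻¹ * B) *ᵥ y) ⊕ᵥ y) ≠ 0 := by
      intro h0
      apply hy
      funext j
      exact congrFun h0 (Sum.inr j)
    have := h2 hz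
    rw [dotProduct_mulVec, schur_complement_eq₁₁ B D _ _ hA.1, neg_add_cancel] at this
    simpa [dotProduct_mulVec] using this
  · intro hP
    obtain ⟨h1, h2⟩ := Matrix.posDef_iff_dotProduct_mulVec.mp hP
    have hherm : (fromBlocks A B Bᴴ D).IsHermitian := by
      apply (Matrix.IsHermitian.fromBlocks₁₁ B D hA.1).mpr h1
    refine Matrix.PosDef.of_dotProduct_mulVec_pos hherm fun z hz => ?_
    rw [dotProduct_mulVec, ← Sum.elim_comp_inl_inr z, schur_complement_eq₁₁ B D _ _ hA.1]
    by_cases hzr : z ∘ Sum.inr = 0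
    · have hzl : z ∘ Sum.inl ≠ 0 := by
        intro h0
        apply hz
        funext j
        cases j with
        | inl j => exact congrFun h0 j
        | inr j => exact congrFun hzr j
      rw [hzr]
      have h4 := hA.dotProduct_mulVec_pos (by simpa [hzr] using hzl : z ∘ Sum.inl + (A⁻¹ * B) *ᵥ (0 : n → ℂ) ≠ 0)
      have h5 : (star (0 : n → ℂ)) ᵥ* (D - Bᴴ * A⁻¹ * B) ⬝ᵥ (0 : n → ℂ) = 0 := by simp
      rw [h5, add_zero, ← dotProduct_mulVec]
      exact h4
    · have h4 := h2 hzr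
      have h5 : 0 ≤ (star (z ∘ Sum.inl + (A⁻¹ * B) *ᵥ (z ∘ Sum.inr))) ᵥ* A ⬝ᵥ
          (z ∘ Sum.inl + (A⁻¹ * B) *ᵥ (z ∘ Sum.inr)) := by
        rw [← dotProduct_mulVec]
        exact hA.posSemidef.dotProduct_mulVec_nonneg _
      have h6 : 0 < (star (z ∘ Sum.inr)) ᵥ* (D - Bᴴ * A⁻¹ * B) ⬝ᵥ (z ∘ Sum.inr) := by
        rw [← dotProduct_mulVec]
        exact h4
      exact add_pos_of_nonneg_of_pos h5 h6

end Blocks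



theorem IsChordal.comap {V W : Type*} {G : SimpleGraph W} (hG : IsChordal G)
    (f : V → W) (hf : Function.Injective f) : IsChordal (G.comap f) := by
  intro v w hw hlen
  have hinj : Function.Injective (SimpleGraph.Hom.comap f G) := hf
  have hcyc : (w.map (SimpleGraph.Hom.comap f G)).IsCycle :=
    (SimpleGraph.Walk.map_isCycle_iff_of_injective hinj).mpr hw
  obtain ⟨x, y, hx, hy, hadj, hne⟩ := hG (w.map _) hcyc
    (by rwa [SimpleGraph.Walk.length_map])
  rw [SimpleGraph.Walk.support_map, List.mem_map] at hx hy
  obtain ⟨p, hp, rfl⟩ := hx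
  obtain ⟨q, hq, rfl⟩ := hy
  refine ⟨p, q, hp, hq, hadj, fun hmem => hne ?_⟩
  rw [SimpleGraph.Walk.edges_map]
  simpa using List.mem_map_of_mem (f := Sym2.map (SimpleGraph.Hom.comap f G)) hmem

theorem exists_shorter {V : Type*} {G : SimpleGraph V} {s t : V} (w : G.Walk s t) :
    ∀ (x y : V), x ∈ w.support → y ∈ w.support → G.Adj x y → s(x, y) ∉ w.edges →
      ∃ w' : G.Walk s t, w'.length < w.length ∧ ∀ u ∈ w'.support, u ∈ w.support := by
  classical
  induction w with
  | nil =>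
    intro x y hx hy hadj _
    rw [SimpleGraph.Walk.mem_support_nil_iff] at hx hy
    subst hx; subst hy
    exact absurd hadj (G.irrefl)
  | @cons u v t h p ih =>
    intro x y hx hy hadj hne
    rw [SimpleGraph.Walk.support_cons, List.mem_cons] at hx hy
    have hedge : s(x, y) ∉ p.edges := fun hmem => hne (by
      rw [SimpleGraph.Walk.edges_cons]; exact List.mem_cons_of_mem _ hmem)
    -- helper: head shortcut
    have main : ∀ x' y' : V, x' = u → y' ∈ p.support → G.Adj x' y' →
        s(x', y') ∉ (SimpleGraph.Walk.cons h p).edges →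
        ∃ w' : G.Walk u t, w'.length < (SimpleGraph.Walk.cons h p).length ∧
          ∀ z ∈ w'.support, z ∈ (SimpleGraph.Walk.cons h p).support := by
      rintro x' y' rfl hy' hadj' hne'
      have hvy : v ≠ y' := by
        rintro rfl
        exact hne' (by rw [SimpleGraph.Walk.edges_cons]; exact List.mem_cons_self)
      refine ⟨SimpleGraph.Walk.cons hadj' (p.dropUntil y' hy'), ?_, ?_⟩
      · simp only [SimpleGraph.Walk.length_cons, Nat.add_lt_add_iff_right]
        have hspec := congrArg SimpleGraph.Walk.length (p.take_spec hy')
        rw [SimpleGraph.Walk.length_append] at hspec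
        have htk : 1 ≤ (p.takeUntil y' hy').length := by
          rcases Nat.eq_zero_or_pos (p.takeUntil y' hy').length with h0 | h1
          · exact absurd (SimpleGraph.Walk.eq_of_length_eq_zero h0) hvy
          · exact h1
        omega
      · intro z hz
        rw [SimpleGraph.Walk.support_cons, List.mem_cons] at hz ⊢
        rcases hz with rfl | hz
        · exact Or.inl rfl
        · exact Or.inr (p.support_dropUntil_subset hy' hz)
    rcases hx with rfl | hx
    · rcases hy with rfl | hy
      · exact absurd hadj (G.irrefl)
      · exact main x y rfl hy hadj hne
    · rcases hy with rfl | hy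
      · obtain ⟨w', hl, hs⟩ := main y x rfl hx hadj.symm (by rwa [Sym2.eq_swap])
        exact ⟨w', hl, hs⟩
      · obtain ⟨p', hl, hs⟩ := ih x y hx hy hadj hedge
        refine ⟨SimpleGraph.Walk.cons h p', by simpa using hl, ?_⟩
        intro z hz
        rw [SimpleGraph.Walk.support_cons, List.mem_cons] at hz ⊢
        exact hz.imp id (hs z)

open SimpleGraph Walk in
lemma exists_side_path {V : Type*} {G : SimpleGraph V} {x y : V} (hxy : x ≠ y)
    (hnadj : ¬G.Adj x y) (R : V → Prop)
    (hex : ∃ w0 : G.Walk x y, ∀ u ∈ w0.support, u = x ∨ u = y ∨ R u) :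
    ∃ w : G.Walk x y, w.IsPath ∧ 2 ≤ w.length ∧ (∀ u ∈ w.support, u = x ∨ u = y ∨ R u) ∧
      (∀ u u', u ∈ w.support → u' ∈ w.support → G.Adj u u' → s(u, u') ∈ w.edges) := by
  classical
  set P : ℕ → Prop := fun k => ∃ w : G.Walk x y,
    (∀ u ∈ w.support, u = x ∨ u = y ∨ R u) ∧ w.length = k with hP
  have hPex : ∃ k, P k := by
    obtain ⟨w0, h0⟩ := hex
    exact ⟨w0.length, w0, h0, rfl⟩
  obtain ⟨wm, hm, hLm⟩ := Nat.find_spec hPex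
  set w := wm.bypass with hw
  have hcond : ∀ u ∈ w.support, u = x ∨ u = y ∨ R u :=
    fun u hu => hm u (wm.support_bypass_subset hu)
  have hmin : ∀ w' : G.Walk x y, (∀ u ∈ w'.support, u = x ∨ u = y ∨ R u) →
      w.length ≤ w'.length := by
    intro w' h'
    calc w.length ≤ wm.length := wm.length_bypass_le
    _ = Nat.find hPex := hLm
    _ ≤ w'.length := Nat.find_min' hPex ⟨w', h', rfl⟩
  have hlen : 2 ≤ w.length := by
    by_contra hlt
    push_neg at hlt
    interval_cases h : w.length
    · exact hxy (SimpleGraph.Walk.eq_of_length_eq_zero h)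
    · exact hnadj (SimpleGraph.Walk.adj_of_length_eq_one h)
  refine ⟨w, wm.bypass_isPath, hlen, hcond, ?_⟩
  intro u u' hu hu' hadj
  by_contra hne
  obtain ⟨w'', hl, hs⟩ := exists_shorter w u u' hu hu' hadj hne
  exact absurd (hmin w'' fun z hz => hcond z (hs z hz)) (by omega)

open SimpleGraph Walk in
lemma cycle_contradiction {V : Type*} {G : SimpleGraph V} (hG : IsChordal G) {x y : V}
    (hxy : x ≠ y) (hnadj : ¬G.Adj x y) (RA RB : V → Prop)
    (hABadj : ∀ u u', RA u → RB u' → ¬G.Adj u u')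
    (hABdisj : ∀ u, RA u → RB u → False)
    (hexA : ∃ w0 : G.Walk x y, ∀ u ∈ w0.support, u = x ∨ u = y ∨ RA u)
    (hexB : ∃ w0 : G.Walk x y, ∀ u ∈ w0.support, u = x ∨ u = y ∨ RB u) : False := by
  obtain ⟨wA, hApath, hAlen, hAcond, hAchord⟩ := exists_side_path hxy hnadj RA hexA
  obtain ⟨wB, hBpath, hBlen, hBcond, hBchord⟩ := exists_side_path hxy hnadj RB hexB
  set C : G.Walk x x := wA.append wB.reverse with hC
  -- membership in both supports forces endpoint
  have hboth : ∀ u, u ∈ wA.support → u ∈ wB.support → u = x ∨ u = y := by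
    intro u h1 h2
    rcases hAcond u h1 with h | h | h
    · exact Or.inl h
    · exact Or.inr h
    rcases hBcond u h2 with h' | h' | h'
    · exact Or.inl h'
    · exact Or.inr h'
    exact (hABdisj u h h').elim
  have hxA : x ∈ wA.support := wA.start_mem_support
  have hyA : y ∈ wA.support := wA.end_mem_support
  have hxB : x ∈ wB.support := wB.start_mem_support
  have hyB : y ∈ wB.support := wB.end_mem_support
  -- supports of C
  have hCsupp : C.support = wA.support ++ wB.reverse.support.tail :=
    SimpleGraph.Walk.support_append _ _
  have hCmem : ∀ u, u ∈ C.support → u ∈ wA.support ∨ u ∈ wB.support := by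
    intro u hu
    rw [hCsupp, List.mem_append] at hu
    rcases hu with hu | hu
    · exact Or.inl hu
    · right
      have := List.mem_of_mem_tail hu
      rwa [SimpleGraph.Walk.support_reverse, List.mem_reverse] at this
  have hClen0 : C.length = wA.length + wB.length := by
    rw [hC, SimpleGraph.Walk.length_append, SimpleGraph.Walk.length_reverse]
  -- C is a cycle
  have hCcycle : C.IsCycle := by
    have hBrev : wB.reverse.IsPath := hBpath.reverse
    have hedges : C.edges.Nodup := by
      rw [hC, SimpleGraph.Walk.edges_append]
      refine List.Nodup.append hApath.isTrail.edges_nodup hBrev.isTrail.edges_nodup ?_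
      intro e he1 he2
      rw [SimpleGraph.Walk.edges_reverse, List.mem_reverse] at he2
      revert he1 he2
      induction e using Sym2.ind with
      | _ c d =>
        intro he1 he2
        have hcA := SimpleGraph.Walk.fst_mem_support_of_mem_edges wA he1
        have hdA := SimpleGraph.Walk.snd_mem_support_of_mem_edges wA he1
        have hcB := SimpleGraph.Walk.fst_mem_support_of_mem_edges wB he2
        have hdB := SimpleGraph.Walk.snd_mem_support_of_mem_edges wB he2
        have hadjcd : G.Adj c d := SimpleGraph.Walk.adj_of_mem_edges wA he1
        rcases hboth c hcA hcB with rfl | rfl <;> rcases hboth d hdA hdB with rfl | rfl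
        · exact hadjcd.ne rfl
        · exact hnadj hadjcd
        · exact hnadj hadjcd.symm
        · exact hadjcd.ne rfl
    have hnenil : C ≠ SimpleGraph.Walk.nil := by
      intro h
      have := congrArg SimpleGraph.Walk.length h
      rw [hClen0] at this
      simp only [SimpleGraph.Walk.length_nil] at this
      omega
    have htail : C.support.tail.Nodup := by
      have h1 : C.support.tail = wA.support.tail ++ wB.reverse.support.tail := by
        rw [hCsupp]
        conv_lhs => rw [SimpleGraph.Walk.support_eq_cons wA]
        rw [List.cons_append, List.tail_cons]
      rw [h1]
      have hnA : wA.support.Nodup := hApath.support_nodup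
      have hnB : wB.reverse.support.Nodup := hBrev.support_nodup
      refine List.Nodup.append (hnA.sublist (List.tail_sublist _))
        (hnB.sublist (List.tail_sublist _)) ?_
      intro u hu1 hu2
      have huA : u ∈ wA.support := List.mem_of_mem_tail hu1
      have huB : u ∈ wB.support := by
        have := List.mem_of_mem_tail hu2
        rwa [SimpleGraph.Walk.support_reverse, List.mem_reverse] at this
      rcases hboth u huA huB with rfl | rfl
      · rw [SimpleGraph.Walk.support_eq_cons wA] at hnA
        exact (List.nodup_cons.mp hnA).1 hu1
      · rw [SimpleGraph.Walk.support_eq_cons wB.reverse] at hnB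
        have : wB.reverse.support.tail = (SimpleGraph.Walk.support wB.reverse).tail := rfl
        exact (List.nodup_cons.mp hnB).1 (by
          have h2 := hu2
          rw [SimpleGraph.Walk.support_eq_cons wB.reverse, List.tail_cons] at h2
          exact h2)
    exact ⟨⟨⟨hedges⟩, hnenil⟩, htail⟩
  have hClen : 4 ≤ C.length := by
    rw [hC, SimpleGraph.Walk.length_append, SimpleGraph.Walk.length_reverse]
    omega
  obtain ⟨u, u', hu, hu', hadj, hnotE⟩ := hG C hCcycle hClen
  -- chords impossible
  have hedgeA : ∀ e ∈ wA.edges, e ∈ C.edges := by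
    intro e he
    rw [hC, SimpleGraph.Walk.edges_append, List.mem_append]
    exact Or.inl he
  have hedgeB : ∀ e ∈ wB.edges, e ∈ C.edges := by
    intro e he
    rw [hC, SimpleGraph.Walk.edges_append, List.mem_append]
    right
    rwa [SimpleGraph.Walk.edges_reverse, List.mem_reverse]
  have hmixed : ∀ p q, p ∈ wA.support → p ∉ wB.support → q ∈ wB.support →
      q ∉ wA.support → G.Adj p q → False := by
    intro p q hpA hpB hqB hqA hpq
    have hpR : RA p := by
      rcases hAcond p hpA with h | h | h
      · exact absurd (h ▸ hxB) hpB
      · exact absurd (h ▸ hyB) hpB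
      · exact h
    have hqR : RB q := by
      rcases hBcond q hqB with h | h | h
      · exact absurd (h ▸ hxA) hqA
      · exact absurd (h ▸ hyA) hqA
      · exact h
    exact hABadj p q hpR hqR hpq
  rcases hCmem u hu with huA | huB <;> rcases hCmem u' hu' with hu'A | hu'B
  · exact hnotE (hedgeA _ (hAchord u u' huA hu'A hadj))
  · by_cases huB : u ∈ wB.support
    · exact hnotE (hedgeB _ (hBchord u u' huB hu'B hadj))
    · by_cases hu'A : u' ∈ wA.support
      · exact hnotE (hedgeA _ (hAchord u u' huA hu'A hadj))
      · exact hmixed u u' huA huB hu'B hu'A hadj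
  · by_cases hu'B : u' ∈ wB.support
    · exact hnotE (hedgeB _ (hBchord u u' huB hu'B hadj))
    · by_cases huA : u ∈ wA.support
      · exact hnotE (hedgeA _ (hAchord u u' huA hu'A hadj))
      · exact hmixed u' u hu'A hu'B huB huA hadj.symm
  · exact hnotE (hedgeB _ (hBchord u u' huB hu'B hadj))

universe u

def IsSimplicial {V : Type*} (G : SimpleGraph V) (v : V) : Prop :=
  ∀ a b : V, G.Adj v a → G.Adj v b → a ≠ b → G.Adj a b

lemma extract_side {V : Type u} [Fintype V] {G : SimpleGraph V} {N : ℕ}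
    (ih : ∀ (W : Type u) [Fintype W] (H : SimpleGraph W), Fintype.card W ≤ N → IsChordal H →
      (∀ p q : W, p ≠ q → H.Adj p q) ∨
        ∃ p q : W, p ≠ q ∧ ¬H.Adj p q ∧ IsSimplicial H p ∧ IsSimplicial H q)
    (hG : IsChordal G) (S : Finset V)
    (hclique : ∀ p ∈ S, ∀ q ∈ S, p ≠ q → G.Adj p q)
    (RA : V → Prop)
    (hRA_notS : ∀ u, RA u → u ∉ S)
    (hstep : ∀ u u', RA u → G.Adj u u' → u' ∉ S → RA u')
    (c : V) (hc : RA c)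
    (z : V) (hzS : z ∉ S) (hzR : ¬RA z)
    (hcard : Fintype.card V ≤ N + 1) :
    ∃ v, RA v ∧ IsSimplicial G v := by
  classical
  set Va : Finset V := S ∪ Finset.univ.filter RA with hVa
  have hmemVa : ∀ u, u ∈ Va ↔ (u ∈ S ∨ RA u) := by
    intro u
    simp [hVa]
  have hzVa : z ∉ Va := by
    rw [hmemVa]
    rintro (h | h)
    · exact hzS h
    · exact hzR h
  have hcardVa : Fintype.card {u // u ∈ Va} ≤ N := by
    have h1 : Va.card < Fintype.card V := by
      rw [← Finset.card_univ]
      exact Finset.card_lt_card ⟨Finset.subset_univ Va, fun h => hzVa (h (Finset.mem_univ z))⟩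
    rw [Fintype.card_coe]
    omega
  set Ga : SimpleGraph {u // u ∈ Va} := G.comap (Subtype.val) with hGa
  have hGaAdj : ∀ p q : {u // u ∈ Va}, Ga.Adj p q ↔ G.Adj ↑p ↑q := fun p q => Iff.rfl
  have hGachordal : IsChordal Ga := hG.comap _ Subtype.coe_injective
  -- membership of G-neighbors of an RA vertex
  have hnbrVa : ∀ v u, RA v → G.Adj v u → u ∈ Va := by
    intro v u hv hadj
    rw [hmemVa]
    by_cases huS : u ∈ S
    · exact Or.inl huS
    · exact Or.inr (hstep v u hv hadj huS)
  -- lifting simpliciality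
  have hlift : ∀ r : {u // u ∈ Va}, RA ↑r → IsSimplicial Ga r → IsSimplicial G ↑r := by
    intro r hr hsimp p q hadj1 hadj2 hne
    have hp : p ∈ Va := hnbrVa _ _ hr hadj1
    have hq : q ∈ Va := hnbrVa _ _ hr hadj2
    exact hsimp ⟨p, hp⟩ ⟨q, hq⟩ hadj1 hadj2 (fun h => hne (congrArg Subtype.val h))
  rcases ih {u // u ∈ Va} Ga hcardVa hGachordal with hcomp | ⟨p, q, hpq, hnadjpq, hsp, hsq⟩
  · -- complete
    have hcVa : c ∈ Va := (hmemVa c).mpr (Or.inr hc)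
    refine ⟨c, hc, hlift ⟨c, hcVa⟩ hc ?_⟩
    intro p q _ _ hne
    exact hcomp p q hne
  · -- one of p, q avoids S
    have hkey : ∀ r : {u // u ∈ Va}, IsSimplicial Ga r → ↑r ∉ S → RA ↑r ∧ IsSimplicial G ↑r := by
      intro r hsimp hrS
      have hrRA : RA ↑r := by
        rcases (hmemVa ↑r).mp r.2 with h | h
        · exact absurd h hrS
        · exact h
      exact ⟨hrRA, hlift r hrRA hsimp⟩
    by_cases hpS : ↑p ∈ S
    · by_cases hqS : ↑q ∈ S
      · exact absurd (hclique _ hpS _ hqS (fun h => hpq (Subtype.ext h))) hnadjpq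
      · obtain ⟨h1, h2⟩ := hkey q hsq hqS
        exact ⟨↑q, h1, h2⟩
    · obtain ⟨h1, h2⟩ := hkey p hsp hpS
      exact ⟨↑p, h1, h2⟩

theorem dirac_aux : ∀ (N : ℕ) (V : Type u) [Fintype V] (G : SimpleGraph V),
    Fintype.card V ≤ N → IsChordal G →
    (∀ p q : V, p ≠ q → G.Adj p q) ∨
      ∃ p q : V, p ≠ q ∧ ¬G.Adj p q ∧ IsSimplicial G p ∧ IsSimplicial G q := by
  intro N
  induction N with
  | zero =>
    intro V _ G hcard _
    left
    intro p q _
    have : Fintype.card V > 0 := Fintype.card_pos_iff.mpr ⟨p⟩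
    omega
  | succ N ih =>
    intro V _ G hcard hG
    classical
    by_cases hcomp : ∀ p q : V, p ≠ q → G.Adj p q
    · exact Or.inl hcomp
    right
    push_neg at hcomp
    obtain ⟨a, b, hab, hnadj⟩ := hcomp
    -- separators
    set Sep : Finset V → Prop := fun s => a ∉ s ∧ b ∉ s ∧
      ∀ w : G.Walk a b, ∃ u ∈ w.support, u ∈ s with hSepDef
    have sep0 : Sep (Finset.univ \ {a, b}) := by
      refine ⟨by simp, by simp, ?_⟩
      intro w
      cases w with
      | nil => exact absurd rfl hab
      | @cons _ v _ h p =>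
        refine ⟨v, ?_, ?_⟩
        · rw [SimpleGraph.Walk.support_cons]
          exact List.mem_cons_of_mem _ p.start_mem_support
        · simp only [Finset.mem_sdiff, Finset.mem_univ, true_and, Finset.mem_insert,
            Finset.mem_singleton]
          push_neg
          refine ⟨fun hva => h.ne' hva, fun hvb => ?_⟩
          subst hvb
          exact hnadj h
    obtain ⟨S, hSmem, hSmin⟩ := Finset.exists_min_image (Finset.univ.filter Sep)
      Finset.card ⟨_, Finset.mem_filter.mpr ⟨Finset.mem_univ _, sep0⟩⟩
    have hS : Sep S := (Finset.mem_filter.mp hSmem).2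
    have hSmin' : ∀ s, Sep s → S.card ≤ s.card := fun s hs =>
      hSmin s (Finset.mem_filter.mpr ⟨Finset.mem_univ _, hs⟩)
    -- reachability avoiding S
    set R : V → V → Prop := fun c x => ∃ w : G.Walk c x, ∀ u ∈ w.support, u ∉ S with hRdef
    have hR_notS : ∀ c x, R c x → x ∉ S := fun c x ⟨w, hw⟩ => hw x w.end_mem_support
    have hRa : R a a := ⟨SimpleGraph.Walk.nil, by
      intro u hu
      rw [SimpleGraph.Walk.mem_support_nil_iff] at hu
      subst hu; exact hS.1⟩
    have hRb : R b b := ⟨SimpleGraph.Walk.nil, by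
      intro u hu
      rw [SimpleGraph.Walk.mem_support_nil_iff] at hu
      subst hu; exact hS.2.1⟩
    have hR_step : ∀ c x y, R c x → G.Adj x y → y ∉ S → R c y := by
      rintro c x y ⟨w, hw⟩ hadj hy
      refine ⟨w.concat hadj, ?_⟩
      intro u hu
      rw [SimpleGraph.Walk.support_concat, List.mem_append,
        List.mem_singleton] at hu
      rcases hu with hu | rfl
      · exact hw u hu
      · exact hy
    have hR_all : ∀ c x (w : G.Walk c x), (∀ u ∈ w.support, u ∉ S) →
        ∀ u ∈ w.support, R c u := fun c x w hw u hu =>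
      ⟨w.takeUntil u hu, fun z hz => hw z (w.support_takeUntil_subset hu hz)⟩
    have hdisj : ∀ x, R a x → R b x → False := by
      rintro x ⟨w1, h1⟩ ⟨w2, h2⟩
      obtain ⟨u, hu, huS⟩ := hS.2.2 (w1.append w2.reverse)
      rw [SimpleGraph.Walk.mem_support_append_iff] at hu
      rcases hu with hu | hu
      · exact h1 u hu huS
      · rw [SimpleGraph.Walk.support_reverse, List.mem_reverse] at hu
        exact h2 u hu huS
    -- every separator vertex has a neighbor in each side-component
    have hnbr_core : ∀ (c x : V), c ≠ x → ∀ (q : G.Walk c x), q.support.count x = 1 →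
        (∀ u ∈ q.support, u ∈ S → u = x) → ∃ y, G.Adj x y ∧ R c y := by
      intro c x hcx q hcount hq
      have hrsupp : q.reverse.support = q.support.reverse := q.support_reverse
      cases hrw : q.reverse with
      | nil =>
        have h0 : q.length = 0 := by
          have h1 := congrArg (SimpleGraph.Walk.length) hrw
          simpa using h1
        exact absurd (SimpleGraph.Walk.eq_of_length_eq_zero h0) hcx
      | @cons _ v _ h' r' =>
        -- h' : G.Adj x v, r' : G.Walk v c
        have hsupp' : q.reverse.support = x :: r'.support := by rw [hrw]; rfl
        have hxnot : x ∉ r'.support := by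
          have hcnt : q.reverse.support.count x = 1 := by
            rw [hrsupp, List.count_reverse]
            exact hcount
          rw [hsupp', List.count_cons_self] at hcnt
          have : r'.support.count x = 0 := by omega
          exact List.count_eq_zero.mp this
        refine ⟨v, h', r'.reverse, ?_⟩
        intro u hu
        rw [SimpleGraph.Walk.support_reverse, List.mem_reverse] at hu
        have huq : u ∈ q.support := by
          rw [← List.mem_reverse, ← hrsupp, hsupp']
          exact List.mem_cons_of_mem _ hu
        intro huS
        have := hq u huq huS
        subst this
        exact hxnot hu
    have hnbrA : ∀ x ∈ S, ∃ y, G.Adj x y ∧ R a y := by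
      intro x hxS
      have hax : a ≠ x := fun h => hS.1 (h ▸ hxS)
      have hne : ¬Sep (S.erase x) := by
        intro hsep
        have := hSmin' _ hsep
        have hlt := Finset.card_erase_lt_of_mem hxS
        omega
      simp only [hSepDef] at hne
      push_neg at hne
      have haE : a ∉ S.erase x := fun h => hS.1 (Finset.mem_of_mem_erase h)
      have hbE : b ∉ S.erase x := fun h => hS.2.1 (Finset.mem_of_mem_erase h)
      obtain ⟨w, hw⟩ := hne haE hbE
      have hxw : x ∈ w.support := by
        obtain ⟨u, hu, huS⟩ := hS.2.2 w
        have : u = x := by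
          by_contra hux
          exact hw u hu (Finset.mem_erase.mpr ⟨hux, huS⟩)
        exact this ▸ hu
      set qq := w.takeUntil x hxw with hqq
      refine hnbr_core a x hax qq (w.count_support_takeUntil_eq_one hxw) ?_
      intro u hu huS
      by_contra hux
      exact hw u (w.support_takeUntil_subset hxw hu) (Finset.mem_erase.mpr ⟨hux, huS⟩)
    have hnbrB : ∀ x ∈ S, ∃ y, G.Adj x y ∧ R b y := by
      intro x hxS
      have hbx : b ≠ x := fun h => hS.2.1 (h ▸ hxS)
      have hne : ¬Sep (S.erase x) := by
        intro hsep
        have := hSmin' _ hsep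
        have hlt := Finset.card_erase_lt_of_mem hxS
        omega
      simp only [hSepDef] at hne
      push_neg at hne
      have haE : a ∉ S.erase x := fun h => hS.1 (Finset.mem_of_mem_erase h)
      have hbE : b ∉ S.erase x := fun h => hS.2.1 (Finset.mem_of_mem_erase h)
      obtain ⟨w, hw⟩ := hne haE hbE
      have hxw : x ∈ w.reverse.support := by
        rw [SimpleGraph.Walk.support_reverse, List.mem_reverse]
        obtain ⟨u, hu, huS⟩ := hS.2.2 w
        have : u = x := by
          by_contra hux
          exact hw u hu (Finset.mem_erase.mpr ⟨hux, huS⟩)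
        exact this ▸ hu
      refine hnbr_core b x hbx (w.reverse.takeUntil x hxw)
        (w.reverse.count_support_takeUntil_eq_one hxw) ?_
      intro u hu huS
      by_contra hux
      have : u ∈ w.support := by
        have := w.reverse.support_takeUntil_subset hxw hu
        rwa [SimpleGraph.Walk.support_reverse, List.mem_reverse] at this
      exact hw u this (Finset.mem_erase.mpr ⟨hux, huS⟩)
    -- S is a clique
    have hclique : ∀ p ∈ S, ∀ q ∈ S, p ≠ q → G.Adj p q := by
      intro p hp q hq hpq
      by_contra hnpq
      -- build side walks
      have hside : ∀ (c : V), (∀ x ∈ S, ∃ y, G.Adj x y ∧ R c y) →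
          ∃ w0 : G.Walk p q, ∀ u ∈ w0.support, u = p ∨ u = q ∨ R c u := by
        intro c hnbr
        obtain ⟨p', hp', hRp'⟩ := hnbr p hp
        obtain ⟨q', hq', hRq'⟩ := hnbr q hq
        obtain ⟨w1, hw1⟩ := hRp'
        obtain ⟨w2, hw2⟩ := hRq'
        set mid : G.Walk p' q' := w1.reverse.append w2 with hmid
        have hmidcond : ∀ u ∈ mid.support, R c u := by
          intro u hu
          rw [SimpleGraph.Walk.mem_support_append_iff] at hu
          rcases hu with hu | hu
          · rw [SimpleGraph.Walk.support_reverse, List.mem_reverse] at hu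
            exact hR_all c _ w1 hw1 u hu
          · exact hR_all c _ w2 hw2 u hu
        refine ⟨SimpleGraph.Walk.cons hp' (mid.concat hq'.symm), ?_⟩
        intro u hu
        rw [SimpleGraph.Walk.support_cons, List.mem_cons] at hu
        rcases hu with rfl | hu
        · exact Or.inl rfl
        · rw [SimpleGraph.Walk.support_concat, List.mem_append,
            List.mem_singleton] at hu
          rcases hu with hu | rfl
          · exact Or.inr (Or.inr (hmidcond u hu))
          · exact Or.inr (Or.inl rfl)
      have hABadj : ∀ u u', R a u → R b u' → ¬G.Adj u u' := by
        intro u u' hu hu' hadj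
        exact hdisj u' (hR_step a u u' hu hadj (hR_notS b u' hu')) hu'
      exact cycle_contradiction hG hpq hnpq (R a) (R b) hABadj
        (fun u h1 h2 => hdisj u h1 h2) (hside a hnbrA) (hside b hnbrB)
    -- extract simplicial vertices on both sides
    have hstepA : ∀ u u', R a u → G.Adj u u' → u' ∉ S → R a u' :=
      fun u u' h1 h2 h3 => hR_step a u u' h1 h2 h3
    have hstepB : ∀ u u', R b u → G.Adj u u' → u' ∉ S → R b u' :=
      fun u u' h1 h2 h3 => hR_step b u u' h1 h2 h3
    have hbRa : ¬R a b := fun h => hdisj b h hRb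
    have haRb : ¬R b a := fun h => hdisj a hRa h
    obtain ⟨va, hva, hsimpa⟩ := extract_side ih hG S hclique (R a) (hR_notS a) hstepA
      a hRa b hS.2.1 hbRa hcard
    obtain ⟨vb, hvb, hsimpb⟩ := extract_side ih hG S hclique (R b) (hR_notS b) hstepB
      b hRb a hS.1 haRb hcard
    refine ⟨va, vb, ?_, ?_, hsimpa, hsimpb⟩
    · rintro rfl
      exact hdisj va hva hvb
    · intro hadj
      exact hdisj vb (hR_step a va vb hva hadj (hR_notS b vb hvb)) hvb

theorem chordal_exists_simplicial {V : Type u} [Fintype V] [Nonempty V]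
    {G : SimpleGraph V} (hG : IsChordal G) : ∃ v, IsSimplicial G v := by
  rcases dirac_aux (Fintype.card V) V G le_rfl hG with hcomp | ⟨p, _, _, _, hp, _⟩
  · obtain ⟨v⟩ := ‹Nonempty V›
    exact ⟨v, fun x y _ _ hxy => hcomp x y hxy⟩
  · exact ⟨p, hp⟩

lemma cliquePD {n : ℕ} {G : SimpleGraph (Fin n)} {A : Matrix (Fin n) (Fin n) ℂ}
    (hA : IsPartialPositive G A) {m : Type*} [Fintype m] [DecidableEq m]
    (g : m → Fin n) (hg : Function.Injective g)
    (hadj : ∀ k l : m, k ≠ l → G.Adj (g k) (g l)) : (A.submatrix g g).PosDef := by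
  classical
  have hK : G.IsClique ((Finset.univ.image g : Finset (Fin n)) : Set (Fin n)) := by
    intro x hx y hy hxy
    rw [Finset.coe_image, Set.mem_image] at hx hy
    obtain ⟨k, _, rfl⟩ := hx
    obtain ⟨l, _, rfl⟩ := hy
    exact hadj k l (fun h => hxy (congrArg g h))
  have hPD := hA.2 _ hK
  have hsub : A.submatrix g g = (cliqueSub A (Finset.univ.image g)).submatrix
      (fun k => (⟨g k, Finset.mem_image_of_mem g (Finset.mem_univ k)⟩ :
        {x // x ∈ Finset.univ.image g}))
      (fun k => ⟨g k, Finset.mem_image_of_mem g (Finset.mem_univ k)⟩) := rfl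
  rw [hsub]
  exact hPD.submatrix_inj (fun k l h => hg (congrArg Subtype.val h))

lemma posDef_unit_entry {N : Matrix Unit Unit ℂ} (h : N.PosDef) : 0 < N () () := by
  have := h.dotProduct_mulVec_pos (x := fun _ => 1) (by
    intro h0
    exact one_ne_zero (congrFun h0 ()))
  simpa [dotProduct, mulVec] using this





private lemma sum_dite_subtype {n : Type*} [Fintype n] (p : n → Prop) [DecidablePred p]
    (F : ∀ l, p l → ℂ) :
    ∑ l : n, (if h : p l then F l h else 0) = ∑ s : {l // p l}, F s.1 s.2 := by
  calc ∑ l : n, (if h : p l then F l h else 0)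
      = ∑ l ∈ Finset.univ.filter p, (if h : p l then F l h else 0) := by
        symm
        apply Finset.sum_filter_of_ne
        intro x _ hx
        by_contra hpx
        exact hx (dif_neg hpx)
    _ = ∑ s : {l // p l}, (if h : p s.1 then F s.1 h else 0) :=
        Finset.sum_subtype _ (by simp) _
    _ = ∑ s : {l // p l}, F s.1 s.2 := Finset.sum_congr rfl fun s _ => dif_pos s.2

private lemma quad_entry {m : Type*} [Fintype m] (E : Matrix m m ℂ) (w : m → ℂ) :
    ((Matrix.of (fun s (_ : Unit) => w s))ᴴ * E * Matrix.of (fun s (_ : Unit) => w s)) () ()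
      = star w ⬝ᵥ (E *ᵥ w) := by
  simp only [Matrix.mul_apply, Matrix.conjTranspose_apply, Matrix.of_apply, dotProduct, mulVec,
    Finset.sum_mul, Finset.mul_sum, Pi.star_apply]
  rw [Finset.sum_comm]
  exact Finset.sum_congr rfl fun t _ => Finset.sum_congr rfl fun s _ => by ring

theorem gjsw_main : ∀ (n : ℕ) (G : SimpleGraph (Fin n)), IsChordal G →
    ∀ A : Matrix (Fin n) (Fin n) ℂ, IsPartialPositive G A →
    ∃ M : Matrix (Fin n) (Fin n) ℂ, M.PosDef ∧
      ∀ i j : Fin n, (i = j ∨ G.Adj i j) → M i j = A i j := by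
  intro n
  induction n with
  | zero =>
    intro G _ A _
    refine ⟨A, Matrix.PosDef.of_dotProduct_mulVec_pos (by ext i; exact i.elim0) fun x hx => absurd (funext fun i => i.elim0) hx,
      fun i j _ => rfl⟩
  | succ n IH =>
    intro G hG A hA
    classical
    obtain ⟨v, hsimp⟩ := chordal_exists_simplicial hG
    set f : Fin n → Fin (n + 1) := v.succAbove with hf
    have hfinj : Function.Injective f := Fin.succAbove_right_injective
    have hfne : ∀ k, f k ≠ v := fun k => Fin.succAbove_ne v k
    set G' : SimpleGraph (Fin n) := G.comap f with hG'
    have hG'chordal : IsChordal G' := hG.comap f hfinj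
    set A' : Matrix (Fin n) (Fin n) ℂ := A.submatrix f f with hA'
    have hA'pp : IsPartialPositive G' A' := by
      refine ⟨⟨fun i => hA.1.1 (f i), fun i j hadj => hA.1.2 (f i) (f j) hadj⟩, ?_⟩
      intro K hK
      have heq : cliqueSub A' K = A.submatrix (fun k : {x // x ∈ K} => f k.1)
          (fun k : {x // x ∈ K} => f k.1) := rfl
      rw [heq]
      refine cliquePD hA (fun k : {x // x ∈ K} => f k.1)
        (fun k l h => Subtype.ext (hfinj h)) ?_
      intro k l hkl
      exact hK (Finset.mem_coe.mpr k.2) (Finset.mem_coe.mpr l.2)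
        (fun h => hkl (Subtype.ext h))
    obtain ⟨B, hBpd, hBeq⟩ := IH G' hG'chordal A' hA'pp
    have hvadj : ∀ (k l : {k : Fin n // G.Adj v (f k)}), k.1 ≠ l.1 → G.Adj (f k.1) (f l.1) :=
      fun k l h => hsimp (f k.1) (f l.1) k.2 l.2 (fun hh => h (hfinj hh))
    set α : ℂ := A v v with hα
    have hG'adj : ∀ k l : Fin n, G.Adj (f k) (f l) → G'.Adj k l := fun k l h => h
    have hBSA : ∀ k l : {k : Fin n // G.Adj v (f k)}, B k.1 l.1 = A (f k.1) (f l.1) := by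
      intro k l
      by_cases h : k.1 = l.1
      · rw [h]
        exact hBeq l.1 l.1 (Or.inl rfl)
      · exact hBeq k.1 l.1 (Or.inr (hG'adj _ _ (hvadj k l h)))
    set b : {k : Fin n // G.Adj v (f k)} → ℂ := fun k => A (f k.1) v with hb
    set BS : Matrix {k : Fin n // G.Adj v (f k)} {k : Fin n // G.Adj v (f k)} ℂ :=
      B.submatrix Subtype.val Subtype.val with hBS
    have hBSpd : BS.PosDef := hBpd.submatrix_inj Subtype.val_injective
    have hBSdet : IsUnit BS.det := hBSpd.det_pos.ne'.isUnit
    have hBdet : IsUnit B.det := hBpd.det_pos.ne'.isUnit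
    set y : {k : Fin n // G.Adj v (f k)} → ℂ := BS⁻¹ *ᵥ b with hy
    set z : Fin n → ℂ := fun l => if h : G.Adj v (f l) then y ⟨l, h⟩ else 0 with hz
    set c : Fin n → ℂ := B *ᵥ z with hc
    have hzdot : ∀ u : Fin n → ℂ, z ⬝ᵥ u = ∑ s : {k : Fin n // G.Adj v (f k)}, y s * u s.1 := by
      intro u
      have h1 : ∀ l, z l * u l = if h : G.Adj v (f l) then y ⟨l, h⟩ * u l else 0 := by
        intro l
        rw [hz]
        dsimp only
        split <;> simp
      calc z ⬝ᵥ u = ∑ l, (if h : G.Adj v (f l) then y ⟨l, h⟩ * u l else 0) :=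
            Finset.sum_congr rfl fun l _ => h1 l
        _ = ∑ s : {k : Fin n // G.Adj v (f k)}, y s * u s.1 :=
            sum_dite_subtype _ (fun l h => y ⟨l, h⟩ * u l)
    have fact1 : ∀ k : {k : Fin n // G.Adj v (f k)}, c k.1 = b k := by
      intro k
      have h1 : c k.1 = z ⬝ᵥ (fun l => B k.1 l) := by
        rw [hc, mulVec]
        exact dotProduct_comm _ _
      have h2 : ∑ s : {k : Fin n // G.Adj v (f k)}, y s * B k.1 s.1 = (BS *ᵥ y) k := by
        rw [mulVec, dotProduct_comm]
        rfl
      rw [h1, hzdot, h2, hy, mulVec_mulVec, Matrix.mul_nonsing_inv _ hBSdet, one_mulVec]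
    have hBinvc : B⁻¹ *ᵥ c = z := by
      rw [hc, mulVec_mulVec, Matrix.nonsing_inv_mul _ hBdet, one_mulVec]
    have fact2 : star c ⬝ᵥ (B⁻¹ *ᵥ c) = star b ⬝ᵥ (BS⁻¹ *ᵥ b) := by
      rw [hBinvc, dotProduct_comm, hzdot]
      calc ∑ s : {k : Fin n // G.Adj v (f k)}, y s * (star c) s.1
          = ∑ s : {k : Fin n // G.Adj v (f k)}, star (b s) * y s := by
            refine Finset.sum_congr rfl fun s _ => ?_
            rw [Pi.star_apply, fact1 s, mul_comm]
        _ = star b ⬝ᵥ (BS⁻¹ *ᵥ b) := rfl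
    -- Schur positivity from the clique S ∪ {v}
    set g : ({k : Fin n // G.Adj v (f k)} ⊕ Unit) → Fin (n + 1) :=
      Sum.elim (fun s => f s.1) (fun _ => v) with hg
    have hginj : Function.Injective g := by
      rintro (s | u) (t | w) h
      · simp only [hg, Sum.elim_inl] at h
        exact congrArg Sum.inl (Subtype.ext (hfinj h))
      · simp only [hg, Sum.elim_inl, Sum.elim_inr] at h
        exact absurd h (hfne s.1)
      · simp only [hg, Sum.elim_inl, Sum.elim_inr] at h
        exact absurd h.symm (hfne t.1)
      · cases u; cases w; rfl
    have hgadj : ∀ k l, k ≠ l → G.Adj (g k) (g l) := by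
      rintro (s | u) (t | w) hne
      · exact hvadj s t (fun h => hne (congrArg Sum.inl (Subtype.ext h)))
      · exact (s.2).symm
      · exact t.2
      · cases u; cases w; exact absurd rfl hne
    have hPpd : (A.submatrix g g).PosDef := cliquePD hA g hginj hgadj
    set Bc : Matrix {k : Fin n // G.Adj v (f k)} Unit ℂ := Matrix.of (fun s _ => b s) with hBc
    set Dm : Matrix Unit Unit ℂ := Matrix.of (fun _ _ => α) with hDm
    have hstarb : ∀ t : {k : Fin n // G.Adj v (f k)}, star (b t) = A v (f t.1) := by
      intro t
      rw [hb]
      dsimp only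
      rw [hA.1.2 v (f t.1) t.2, star_star]
    have hPblock : A.submatrix g g = fromBlocks BS Bc Bcᴴ Dm := by
      ext i j
      cases i with
      | inl s =>
        cases j with
        | inl t =>
          simp only [submatrix_apply, hg, Sum.elim_inl, fromBlocks_apply₁₁]
          exact (hBSA s t).symm
        | inr w =>
          simp only [submatrix_apply, hg, Sum.elim_inl, Sum.elim_inr, fromBlocks_apply₁₂]
          rfl
      | inr u =>
        cases j with
        | inl t =>
          simp only [submatrix_apply, hg, Sum.elim_inl, Sum.elim_inr, fromBlocks_apply₂₁,
            conjTranspose_apply, hBc, Matrix.of_apply]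
          exact (hstarb t).symm
        | inr w =>
          simp only [submatrix_apply, hg, Sum.elim_inr, fromBlocks_apply₂₂]
          rfl
    haveI : Invertible BS := BS.invertibleOfIsUnitDet hBSdet
    haveI : Invertible B := B.invertibleOfIsUnitDet hBdet
    have hSchur1 : (Dm - Bcᴴ * BS⁻¹ * Bc).PosDef :=
      (posDef_fromBlocks₁₁ Bc hBSpd).mp (hPblock ▸ hPpd)
    have hSchurEntry : (Dm - Bcᴴ * BS⁻¹ * Bc) () () = α - star b ⬝ᵥ (BS⁻¹ *ᵥ b) := by
      rw [Matrix.sub_apply, hBc, quad_entry]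
      rfl
    have fact3 : 0 < α - star b ⬝ᵥ (BS⁻¹ *ᵥ b) := by
      have h0 := posDef_unit_entry hSchur1
      rwa [hSchurEntry] at h0
    set Cc : Matrix (Fin n) Unit ℂ := Matrix.of (fun k _ => c k) with hCc
    have hSchur2 : (Dm - Ccᴴ * B⁻¹ * Cc).PosDef := by
      apply posDef_unit
      rw [Matrix.sub_apply, hCc, quad_entry, fact2]
      exact fact3
    have hM'pd : (fromBlocks B Cc Ccᴴ Dm).PosDef := (posDef_fromBlocks₁₁ Cc hBpd).mpr hSchur2
    set e : Fin (n + 1) ≃ (Fin n ⊕ Unit) :=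
      (finSuccEquiv' v).trans (Equiv.optionEquivSumPUnit (Fin n)) with he
    have hev : e v = Sum.inr () := by
      rw [he, Equiv.trans_apply, finSuccEquiv'_at]
      rfl
    have hef : ∀ k, e (f k) = Sum.inl k := by
      intro k
      rw [he, Equiv.trans_apply, hf, finSuccEquiv'_succAbove]
      rfl
    refine ⟨(fromBlocks B Cc Ccᴴ Dm).submatrix e e, hM'pd.submatrix_inj e.injective, ?_⟩
    intro i j hij
    by_cases hi : i = v <;> by_cases hj : j = v
    · rw [hi, hj, Matrix.submatrix_apply, hev, fromBlocks_apply₂₂]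
      rfl
    · obtain ⟨k, hkj⟩ := Fin.exists_succAbove_eq hj
      have hjk : j = f k := hkj.symm
      rcases hij with h | hadjv
      · exact absurd (h ▸ hi : j = v) hj
      have hk : G.Adj v (f k) := by rw [← hi, ← hjk]; exact hadjv
      rw [hi, hjk, Matrix.submatrix_apply, hev, hef, fromBlocks_apply₂₁, conjTranspose_apply]
      show star (Cc k ()) = A v (f k)
      rw [hCc]
      show star (c k) = A v (f k)
      rw [fact1 ⟨k, hk⟩]
      exact hstarb ⟨k, hk⟩
    · obtain ⟨k, hki⟩ := Fin.exists_succAbove_eq hi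
      have hik : i = f k := hki.symm
      rcases hij with h | hadjv
      · exact absurd (h ▸ hj : i = v) hi
      have hk : G.Adj v (f k) := by rw [← hj, ← hik]; exact hadjv.symm
      rw [hik, hj, Matrix.submatrix_apply, hev, hef, fromBlocks_apply₁₂]
      show Cc k () = A (f k) v
      rw [hCc]
      show c k = A (f k) v
      rw [fact1 ⟨k, hk⟩]
    · obtain ⟨k, hki⟩ := Fin.exists_succAbove_eq hi
      obtain ⟨l, hlj⟩ := Fin.exists_succAbove_eq hj
      have hik : i = f k := hki.symm
      have hjl : j = f l := hlj.symm
      rw [hik, hjl, Matrix.submatrix_apply, hef, hef, fromBlocks_apply₁₁]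
      have hBA : B k l = A (f k) (f l) := by
        rcases hij with h | hadjv
        · have hkl : k = l := hfinj (by rw [← hik, ← hjl]; exact h)
          subst hkl
          exact hBeq k k (Or.inl rfl)
        · refine hBeq k l (Or.inr (hG'adj _ _ ?_))
          rw [← hik, ← hjl]
          exact hadjv
      exact hBA

end AUX

/-- Grone–Johnson–Sá–Wolkowicz: every partial positive matrix with a chordal graph
admits a positive definite completion. -/
theorem stmt6 {n : ℕ} (G : SimpleGraph (Fin n)) (hG : IsChordal G)
    (A : Matrix (Fin n) (Fin n) ℂ) (hA : IsPartialPositive G A) :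
    ∃ M : Matrix (Fin n) (Fin n) ℂ, M.PosDef ∧
      ∀ i j : Fin n, (i = j ∨ G.Adj i j) → M i j = A i j :=
  gjsw_main n G hG A hA
end

section
/- The completion number of any chordal graph G is 0; that is, every partial positive Hermitian matrix with chordal graph G admits a Hermitian completion with no negative eigenvalues. -/
open Matrix ComplexOrder

-- ===== auxiliary development =====

open Matrix ComplexOrder


open Matrix ComplexOrder

variable {V : Type*} [Fintype V] [DecidableEq V]

lemma mysum_set_eq {s : Set V} [DecidablePred (· ∈ s)] [Fintype s] (f : V → ℂ)
    (hf : ∀ v, v ∉ s → f v = 0) : ∑ v, f v = ∑ v : s, f ↑v := by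
  classical
  rw [← Finset.sum_subtype s.toFinset (by simp) f]
  exact (Finset.sum_subset (Finset.subset_univ _)
    (fun x _ hx => hf x (by simpa using hx))).symm

/-- zero extension of a matrix on a subtype -/
noncomputable def myext (s : Set V) [DecidablePred (· ∈ s)] (M : Matrix s s ℂ) :
    Matrix V V ℂ :=
  fun i j => if hi : i ∈ s then (if hj : j ∈ s then M ⟨i, hi⟩ ⟨j, hj⟩ else 0) else 0

lemma myext_apply_mem {s : Set V} [DecidablePred (· ∈ s)] (M : Matrix s s ℂ) {i j : V} (hi : i ∈ s) (hj : j ∈ s) :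
    myext s M i j = M ⟨i, hi⟩ ⟨j, hj⟩ := by
  simp [myext, hi, hj]

lemma myext_apply_zero {s : Set V} [DecidablePred (· ∈ s)] (M : Matrix s s ℂ) {i j : V} (h : i ∉ s ∨ j ∉ s) :
    myext s M i j = 0 := by
  unfold myext
  rcases h with h | h
  · rw [dif_neg h]
  · by_cases hi : i ∈ s
    · rw [dif_pos hi, dif_neg h]
    · rw [dif_neg hi]

lemma myext_posSemidef {s : Set V} [DecidablePred (· ∈ s)] {M : Matrix s s ℂ}
    (hM : M.PosSemidef) : (myext s M).PosSemidef := by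
  classical
  refine posSemidef_iff_dotProduct_mulVec.mpr ⟨?_, ?_⟩
  · ext i j
    rw [Matrix.conjTranspose_apply]
    by_cases hi : i ∈ s <;> by_cases hj : j ∈ s
    · rw [myext_apply_mem M hi hj, myext_apply_mem M hj hi]
      exact hM.1.apply ⟨i, hi⟩ ⟨j, hj⟩
    · rw [myext_apply_zero M (Or.inr hj), myext_apply_zero M (Or.inl hj), star_zero]
    · rw [myext_apply_zero M (Or.inl hi), myext_apply_zero M (Or.inr hi), star_zero]
    · rw [myext_apply_zero M (Or.inl hi), myext_apply_zero M (Or.inl hj), star_zero]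
  · intro x
    have h1 : dotProduct (star x) ((myext s M) *ᵥ x)
        = dotProduct (star (fun i : s => x ↑i)) (M *ᵥ (fun i : s => x ↑i)) := by
      rw [dotProduct, dotProduct]
      rw [mysum_set_eq (s := s) _ ?hz]
      case hz =>
        intro v hv
        have : (myext s M *ᵥ x) v = 0 := by
          rw [mulVec, dotProduct]
          exact Finset.sum_eq_zero fun k _ => by
            rw [myext_apply_zero M (Or.inl hv), zero_mul]
        rw [this, mul_zero]
      refine Finset.sum_congr rfl fun v _ => ?_
      congr 1
      rw [mulVec, mulVec, dotProduct, dotProduct]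
      rw [mysum_set_eq (s := s) _ ?hz2]
      case hz2 =>
        intro w hw
        rw [myext_apply_zero M (Or.inr hw), zero_mul]
      exact Finset.sum_congr rfl fun w _ => by rw [myext_apply_mem M v.2 w.2]
    rw [h1]
    exact hM.dotProduct_mulVec_nonneg _

lemma posDef_submatrix_val {s : Set V} [DecidablePred (· ∈ s)] {M : Matrix V V ℂ}
    (hM : M.PosDef) :
    (M.submatrix ((↑) : s → V) ((↑) : s → V)).PosDef := by
  classical
  refine posDef_iff_dotProduct_mulVec.mpr ⟨?_, ?_⟩
  · exact hM.1.submatrix _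
  · intro x hx
    set y : V → ℂ := fun v => if hv : v ∈ s then x ⟨v, hv⟩ else 0 with hy
    have hyne : y ≠ 0 := by
      intro h
      apply hx
      funext i
      have := congrFun h ↑i
      simpa [hy, i.2] using this
    have hform : dotProduct (star x) ((M.submatrix ((↑) : s → V) ((↑) : s → V)) *ᵥ x)
        = dotProduct (star y) (M *ᵥ y) := by
      rw [dotProduct, dotProduct]
      rw [mysum_set_eq (s := s) (fun v => star y v * (M *ᵥ y) v) ?hz]
      case hz =>
        intro v hv
        simp [hy, hv]
      refine (Finset.sum_congr rfl fun v _ => ?_).symm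
      have hyv : y ↑v = x v := by simp [hy, v.2]
      rw [Pi.star_apply, Pi.star_apply, hyv]
      congr 1
      rw [mulVec, mulVec, dotProduct, dotProduct]
      rw [mysum_set_eq (s := s) (fun w => M ↑v w * y w) ?hz2]
      case hz2 =>
        intro w hw
        simp [hy, hw]
      exact Finset.sum_congr rfl fun w _ => by simp [hy, w.2, Matrix.submatrix_apply]
    rw [hform]
    exact hM.dotProduct_mulVec_pos hyne

lemma posDef_submatrix_equiv {m n : Type*} [Fintype m] [Fintype n] [DecidableEq m]
    [DecidableEq n] {M : Matrix n n ℂ} (hM : M.PosDef) (e : m ≃ n) :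
    (M.submatrix e e).PosDef := by
  refine posDef_iff_dotProduct_mulVec.mpr ⟨?_, ?_⟩
  · exact hM.1.submatrix _
  · intro x hx
    have hyne : (fun v => x (e.symm v)) ≠ 0 := by
      intro h
      apply hx
      funext i
      have := congrFun h (e i)
      simpa using this
    have hform : dotProduct (star x) ((M.submatrix e e) *ᵥ x)
        = dotProduct (star fun v => x (e.symm v)) (M *ᵥ fun v => x (e.symm v)) := by
      rw [dotProduct, dotProduct]
      refine Fintype.sum_equiv e _ _ fun v => ?_
      simp only [Pi.star_apply, Equiv.symm_apply_apply]
      congr 1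
      rw [mulVec, mulVec, dotProduct, dotProduct]
      refine Fintype.sum_equiv e _ _ fun w => ?_
      simp [Matrix.submatrix_apply]
    rw [hform]
    exact hM.dotProduct_mulVec_pos hyne


variable {V : Type*} [Fintype V] [DecidableEq V]

theorem myglue (s t : Set V) [DecidablePred (· ∈ s)]
    (N1 N2 Q : Matrix V V ℂ)
    (h1 : N1.PosSemidef) (h2 : N2.PosSemidef)
    (supp1 : ∀ i j, i ∉ s ∨ j ∉ s → N1 i j = 0)
    (hQh : Qᴴ = Q)
    (suppQ : ∀ i j, i ∉ s ∩ t ∨ j ∉ s ∩ t → Q i j = 0)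
    (hQinv : ∀ i j, i ∈ s ∩ t → j ∈ s ∩ t → (Q * N1) i j = if i = j then 1 else 0)
    (hagree : ∀ i j, i ∈ s ∩ t → j ∈ s ∩ t → N1 i j = N2 i j) :
    ∃ M : Matrix V V ℂ, M.PosSemidef ∧ (∀ i j, i ∈ s → j ∈ s → M i j = N1 i j) ∧
      (∀ i j, i ∈ t → j ∈ t → (i ∉ s ∨ j ∉ s) → M i j = N2 i j) := by
  classical
  set E1 : Matrix V V ℂ := Matrix.diagonal (fun i => if i ∈ s then (1:ℂ) else 0) with hE1
  set F : Matrix V V ℂ := Matrix.diagonal (fun i => if i ∈ s then (0:ℂ) else 1) with hF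
  set T : Matrix V V ℂ := Q * N2 * F with hT
  set L1 : Matrix V V ℂ := E1 + T with hL1
  set L2 : Matrix V V ℂ := F - T with hL2
  refine ⟨L1ᴴ * N1 * L1 + L2ᴴ * N2 * L2,
    (h1.conjTranspose_mul_mul_same L1).add (h2.conjTranspose_mul_mul_same L2), ?_⟩
  have hE1H : E1ᴴ = E1 := by
    ext i j
    simp only [hE1, Matrix.conjTranspose_apply, Matrix.diagonal_apply]
    by_cases h : i = j
    · subst h
      by_cases hi : i ∈ s <;> simp [hi]
    · rw [if_neg (fun hh => h hh.symm), if_neg h, star_zero]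
  have hFH : Fᴴ = F := by
    ext i j
    simp only [hF, Matrix.conjTranspose_apply, Matrix.diagonal_apply]
    by_cases h : i = j
    · subst h
      by_cases hi : i ∈ s <;> simp [hi]
    · rw [if_neg (fun hh => h hh.symm), if_neg h, star_zero]
  have hN1row : ∀ (X : Matrix V V ℂ) i j, i ∉ s → (N1 * X) i j = 0 := by
    intro X i j hi
    simp only [Matrix.mul_apply]
    exact Finset.sum_eq_zero fun k _ => by rw [supp1 i k (Or.inl hi), zero_mul]
  have hN1col : ∀ (X : Matrix V V ℂ) i j, j ∉ s → (X * N1) i j = 0 := by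
    intro X i j hj
    simp only [Matrix.mul_apply]
    exact Finset.sum_eq_zero fun k _ => by rw [supp1 k j (Or.inr hj), mul_zero]
  have hQrow : ∀ (X : Matrix V V ℂ) i j, i ∉ s ∩ t → (Q * X) i j = 0 := by
    intro X i j hi
    simp only [Matrix.mul_apply]
    exact Finset.sum_eq_zero fun k _ => by rw [suppQ i k (Or.inl hi), zero_mul]
  have hQcol : ∀ (X : Matrix V V ℂ) i j, j ∉ s ∩ t → (X * Q) i j = 0 := by
    intro X i j hj
    simp only [Matrix.mul_apply]
    exact Finset.sum_eq_zero fun k _ => by rw [suppQ k j (Or.inr hj), mul_zero]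
  have K1 : Q * N1 * Q = Q := by
    ext i j
    by_cases hi : i ∈ s ∩ t
    · rw [Matrix.mul_apply]
      rw [Finset.sum_eq_single i]
      · rw [hQinv i i hi hi, if_pos rfl, one_mul]
      · intro k _ hk
        by_cases hks : k ∈ s ∩ t
        · rw [hQinv i k hi hks, if_neg (fun h => hk h.symm), zero_mul]
        · rw [suppQ k j (Or.inl hks), mul_zero]
      · intro h; exact absurd (Finset.mem_univ i) h
    · rw [Matrix.mul_apply]
      rw [Finset.sum_eq_zero, suppQ i j (Or.inl hi)]
      intro k _
      rw [hQrow N1 i k hi, zero_mul]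
  have K2 : Q * N2 * Q = Q := by
    have h : Q * N2 * Q = Q * N1 * Q := by
      ext i j
      rw [Matrix.mul_apply, Matrix.mul_apply]
      refine Finset.sum_congr rfl fun l _ => ?_
      by_cases hl : l ∈ s ∩ t
      · congr 1
        rw [Matrix.mul_apply, Matrix.mul_apply]
        refine Finset.sum_congr rfl fun k _ => ?_
        by_cases hk : k ∈ s ∩ t
        · rw [hagree k l hk hl]
        · rw [suppQ i k (Or.inr hk), zero_mul, zero_mul]
      · rw [suppQ l j (Or.inl hl), mul_zero, mul_zero]
    rw [h, K1]
  have hN1Q : N1 * Q = (Q * N1)ᴴ := by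
    rw [Matrix.conjTranspose_mul, hQh, h1.1.eq]
  have hE1N1 : E1 * N1 = N1 := by
    ext i j
    rw [hE1, Matrix.diagonal_mul]
    by_cases hi : i ∈ s
    · rw [if_pos hi, one_mul]
    · rw [if_neg hi, zero_mul, supp1 i j (Or.inl hi)]
  have hN1E1 : N1 * E1 = N1 := by
    ext i j
    rw [hE1, Matrix.mul_diagonal]
    by_cases hj : j ∈ s
    · rw [if_pos hj, mul_one]
    · rw [if_neg hj, mul_zero, supp1 i j (Or.inr hj)]
  have hE1N1' : ∀ X : Matrix V V ℂ, E1 * (N1 * X) = N1 * X := by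
    intro X
    rw [← Matrix.mul_assoc, hE1N1]
  have K1r : ∀ X : Matrix V V ℂ, Q * (N1 * (Q * X)) = Q * X := by
    intro X
    rw [← Matrix.mul_assoc, ← Matrix.mul_assoc, K1]
  have K2r : ∀ X : Matrix V V ℂ, Q * (N2 * (Q * X)) = Q * X := by
    intro X
    rw [← Matrix.mul_assoc, ← Matrix.mul_assoc, K2]
  have hL1H : L1ᴴ = E1 + F * (N2 * Q) := by
    rw [hL1, Matrix.conjTranspose_add, hT, Matrix.conjTranspose_mul, Matrix.conjTranspose_mul,
      hQh, h2.1.eq, hE1H, hFH]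
  have hL2H : L2ᴴ = F - F * (N2 * Q) := by
    rw [hL2, Matrix.conjTranspose_sub, hT, Matrix.conjTranspose_mul, Matrix.conjTranspose_mul,
      hQh, h2.1.eq, hFH]
  have hMsimp : L1ᴴ * N1 * L1 + L2ᴴ * N2 * L2
      = N1 + (N1 * Q * N2) * F + F * (N2 * Q * N1) + F * (N2 * F) := by
    rw [hL1H, hL2H, hL1, hL2, hT]
    simp only [Matrix.add_mul, Matrix.mul_add, Matrix.sub_mul, Matrix.mul_sub, Matrix.mul_assoc]
    simp only [hN1E1]
    simp only [hE1N1', hE1N1]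
    simp only [K1r, K2r]
    abel
  rw [hMsimp]
  have hXF : ∀ (X : Matrix V V ℂ) i j, (X * F) i j = X i j * (if j ∈ s then 0 else 1) := by
    intro X i j
    rw [hF, Matrix.mul_diagonal]
  have hFX : ∀ (X : Matrix V V ℂ) i j, (F * X) i j = (if i ∈ s then 0 else 1) * X i j := by
    intro X i j
    rw [hF, Matrix.diagonal_mul]
  have key1 : ∀ i j, i ∈ s ∩ t → (N1 * Q * N2) i j = N2 i j := by
    intro i j hi
    have hNQ : ∀ l, (N1 * Q) i l = if l = i then 1 else 0 := by
      intro l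
      by_cases hl : l ∈ s ∩ t
      · rw [hN1Q, Matrix.conjTranspose_apply, hQinv l i hl hi]
        split_ifs <;> simp
      · rw [hQcol N1 i l hl, if_neg (fun h => hl (by rw [h]; exact hi))]
    rw [Matrix.mul_apply]
    rw [Finset.sum_eq_single i]
    · rw [hNQ i, if_pos rfl, one_mul]
    · intro k _ hk
      rw [hNQ k, if_neg hk, zero_mul]
    · intro h; exact absurd (Finset.mem_univ i) h
  have key2 : ∀ i j, j ∈ s ∩ t → (N2 * Q * N1) i j = N2 i j := by
    intro i j hj
    rw [Matrix.mul_assoc, Matrix.mul_apply]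
    rw [Finset.sum_eq_single j]
    · rw [hQinv j j hj hj, if_pos rfl, mul_one]
    · intro k _ hk
      by_cases hks : k ∈ s ∩ t
      · rw [hQinv k j hks hj, if_neg hk, mul_zero]
      · rw [hQrow N1 k j hks, mul_zero]
    · intro h; exact absurd (Finset.mem_univ j) h
  constructor
  · intro i j hi hj
    simp only [Matrix.add_apply]
    rw [hXF (N1 * Q * N2) i j, hFX (N2 * Q * N1) i j, hFX (N2 * F) i j,
      if_pos hj, if_pos hi, mul_zero, zero_mul, zero_mul]
    ring
  · intro i j hit hjt hout
    simp only [Matrix.add_apply]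
    rw [hXF (N1 * Q * N2) i j, hFX (N2 * Q * N1) i j, hFX (N2 * F) i j, hXF N2 i j]
    rcases hout with hi | hj
    · by_cases hj : j ∈ s
      · rw [supp1 i j (Or.inl hi), if_pos hj, if_neg hi, mul_zero, one_mul, one_mul,
          key2 i j ⟨hj, hjt⟩, mul_zero]
        ring
      · rw [supp1 i j (Or.inl hi), if_neg hj, if_neg hi, one_mul, one_mul, mul_one, mul_one]
        have hz1 : (N1 * Q * N2) i j = 0 := by
          rw [Matrix.mul_assoc]; exact hN1row (Q * N2) i j hi
        have hz2 : (N2 * Q * N1) i j = 0 := hN1col (N2 * Q) i j hj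
        rw [hz1, hz2]
        ring
    · by_cases hi : i ∈ s
      · rw [supp1 i j (Or.inr hj), if_neg hj, if_pos hi, mul_one, zero_mul, zero_mul,
          key1 i j ⟨hi, hit⟩]
        ring
      · rw [supp1 i j (Or.inl hi), if_neg hj, if_neg hi, one_mul, one_mul, mul_one, mul_one]
        have hz1 : (N1 * Q * N2) i j = 0 := by
          rw [Matrix.mul_assoc]; exact hN1row (Q * N2) i j hi
        have hz2 : (N2 * Q * N1) i j = 0 := hN1col (N2 * Q) i j hj
        rw [hz1, hz2]
        ring
section Graph

variable {V : Type*} [Fintype V] [DecidableEq V]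

/-- deleting a finite set of vertices (as a spanning subgraph) -/
def delG (G : SimpleGraph V) (S : Finset V) : SimpleGraph V where
  Adj x y := G.Adj x y ∧ x ∉ S ∧ y ∉ S
  symm := by
    constructor
    intro x y h
    exact ⟨h.1.symm, h.2.2, h.2.1⟩
  loopless := ⟨fun x h => G.loopless.irrefl x h.1⟩

lemma delG_le (G : SimpleGraph V) (S : Finset V) : delG G S ≤ G := fun _ _ h => h.1

lemma delG_support_not_mem {G : SimpleGraph V} {S : Finset V} :
    ∀ {c d : V} (w : (delG G S).Walk c d), c ∉ S → ∀ v ∈ w.support, v ∉ S := by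
  intro c d w
  induction w with
  | nil =>
    intro hc v hv
    rw [SimpleGraph.Walk.support_nil, List.mem_singleton] at hv
    subst hv; exact hc
  | cons h p ih =>
    intro hc v hv
    rw [SimpleGraph.Walk.support_cons, List.mem_cons] at hv
    rcases hv with rfl | hv
    · exact hc
    · exact ih h.2.2 v hv

lemma delG_reach_not_mem {G : SimpleGraph V} {S : Finset V} {p v : V}
    (hp : p ∉ S) (h : (delG G S).Reachable p v) : v ∉ S := by
  obtain ⟨w⟩ := h
  exact delG_support_not_mem w hp v w.end_mem_support

lemma delG_support_reach {G : SimpleGraph V} {S : Finset V} {a : V} :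
    ∀ {c d : V} (w : (delG G S).Walk c d), (delG G S).Reachable a c →
      ∀ v ∈ w.support, (delG G S).Reachable a v := by
  intro c d w
  induction w with
  | nil =>
    intro hr v hv
    rw [SimpleGraph.Walk.support_nil, List.mem_singleton] at hv
    subst hv; exact hr
  | cons h p ih =>
    intro hr v hv
    rw [SimpleGraph.Walk.support_cons, List.mem_cons] at hv
    rcases hv with rfl | hv
    · exact hr
    · exact ih (hr.trans h.reachable) v hv

lemma support_mapLe {G G' : SimpleGraph V} (hle : G ≤ G') {c d : V} (w : G.Walk c d) :
    (w.mapLe hle).support = w.support := by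
  exact SimpleGraph.Walk.support_mapLe_eq_support hle w

/-- the shortcut lemma: an off-walk edge between support vertices yields a shorter walk -/
lemma shortcut {G : SimpleGraph V} {x y : V} :
    ∀ (w : G.Walk x y) (u v : V), u ∈ w.support → v ∈ w.support → G.Adj u v →
      s(u, v) ∉ w.edges →
      ∃ w' : G.Walk x y, (∀ z ∈ w'.support, z ∈ w.support) ∧ w'.length < w.length := by
  intro w
  induction w with
  | nil =>
    intro u v hu hv huv _
    rw [SimpleGraph.Walk.support_nil, List.mem_singleton] at hu hv
    subst hu; subst hv
    exact absurd rfl huv.ne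
  | @cons a c y' h p ih =>
    intro u v hu hv huv he
    rw [SimpleGraph.Walk.support_cons, List.mem_cons] at hu hv
    rw [SimpleGraph.Walk.edges_cons, List.mem_cons] at he
    push_neg at he
    obtain ⟨he1, he2⟩ := he
    by_cases hup : u ∈ p.support <;> by_cases hvp : v ∈ p.support
    · obtain ⟨p', hsub, hlen⟩ := ih u v hup hvp huv he2
      refine ⟨SimpleGraph.Walk.cons h p', ?_, ?_⟩
      · intro z hz
        rw [SimpleGraph.Walk.support_cons, List.mem_cons] at hz ⊢
        rcases hz with rfl | hz
        · exact Or.inl rfl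
        · exact Or.inr (hsub z hz)
      · simpa [SimpleGraph.Walk.length_cons] using Nat.succ_lt_succ hlen
    · -- v = a, u ∈ p.support
      have hva : v = a := hv.resolve_right hvp
      subst hva
      refine ⟨SimpleGraph.Walk.cons huv.symm (p.dropUntil u hup), ?_, ?_⟩
      · intro z hz
        rw [SimpleGraph.Walk.support_cons, List.mem_cons] at hz ⊢
        rcases hz with rfl | hz
        · exact Or.inl rfl
        · exact Or.inr (p.support_dropUntil_subset hup hz)
      · rw [SimpleGraph.Walk.length_cons, SimpleGraph.Walk.length_cons]
        have hsplit : (p.takeUntil u hup).length + (p.dropUntil u hup).length = p.length := by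
          rw [← SimpleGraph.Walk.length_append, SimpleGraph.Walk.take_spec]
        have htu : (p.takeUntil u hup).length ≠ 0 := by
          intro h0
          have hcu : c = u := SimpleGraph.Walk.eq_of_length_eq_zero h0
          apply he1
          rw [← hcu, Sym2.eq_swap]
        omega
    · -- u = a, v ∈ p.support
      have hua : u = a := hu.resolve_right hup
      subst hua
      refine ⟨SimpleGraph.Walk.cons huv (p.dropUntil v hvp), ?_, ?_⟩
      · intro z hz
        rw [SimpleGraph.Walk.support_cons, List.mem_cons] at hz ⊢
        rcases hz with rfl | hz
        · exact Or.inl rfl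
        · exact Or.inr (p.support_dropUntil_subset hvp hz)
      · rw [SimpleGraph.Walk.length_cons, SimpleGraph.Walk.length_cons]
        have hsplit : (p.takeUntil v hvp).length + (p.dropUntil v hvp).length = p.length := by
          rw [← SimpleGraph.Walk.length_append, SimpleGraph.Walk.take_spec]
        have htu : (p.takeUntil v hvp).length ≠ 0 := by
          intro h0
          have hcv : c = v := SimpleGraph.Walk.eq_of_length_eq_zero h0
          exact he1 (by rw [← hcv])
        omega
    · have hua : u = a := hu.resolve_right hup
      have hva : v = a := hv.resolve_right hvp
      subst hua; subst hva
      exact absurd rfl huv.ne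

lemma exists_min_walk {G : SimpleGraph V} {x y : V} (Pr : G.Walk x y → Prop)
    (h : ∃ w, Pr w) : ∃ w, Pr w ∧ ∀ w', Pr w' → w.length ≤ w'.length := by
  classical
  have hn : ∃ n, ∃ w, Pr w ∧ w.length = n := ⟨h.choose.length, h.choose, h.choose_spec, rfl⟩
  obtain ⟨w, hw, hlen⟩ := Nat.find_spec hn
  refine ⟨w, hw, fun w' hw' => ?_⟩
  rw [hlen]
  exact Nat.find_min' hn ⟨w', hw', rfl⟩

theorem clique_separation (G : SimpleGraph V) (hG : IsChordal G) {a b : V} (hab : a ≠ b)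
    (hnadj : ¬ G.Adj a b) :
    ∃ s t : Set V, s ∪ t = Set.univ ∧ a ∉ t ∧ b ∉ s ∧ G.IsClique (s ∩ t) ∧
      (∀ x y, x ∈ s → x ∉ t → y ∈ t → y ∉ s → ¬ G.Adj x y) := by
  classical
  set P : Finset V → Prop :=
    fun S => a ∉ S ∧ b ∉ S ∧ ∀ w : G.Walk a b, ∃ v ∈ w.support, v ∈ S with hP
  have hP0 : P (Finset.univ \ {a, b}) := by
    refine ⟨by simp, by simp [hab.symm], ?_⟩
    intro w
    cases w with
    | nil => exact absurd rfl hab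
    | @cons a c b h p =>
      refine ⟨c, ?_, ?_⟩
      · rw [SimpleGraph.Walk.support_cons, List.mem_cons]
        exact Or.inr p.start_mem_support
      · simp only [Finset.mem_sdiff, Finset.mem_univ, true_and, Finset.mem_insert,
          Finset.mem_singleton]
        push_neg
        exact ⟨fun hc => G.loopless.irrefl a (hc ▸ h), fun hc => hnadj (hc ▸ h)⟩
  have hex : ∃ n, ∃ S, P S ∧ S.card = n := ⟨_, _, hP0, rfl⟩
  obtain ⟨S, hPS, hcard⟩ := Nat.find_spec hex
  have hmin : ∀ S', P S' → S.card ≤ S'.card := by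
    intro S' hS'
    rw [hcard]
    exact Nat.find_min' hex ⟨S', hS', rfl⟩
  obtain ⟨haS, hbS, hsep⟩ := hPS
  set H := delG G S with hH
  have hnreach : ¬ H.Reachable a b := by
    rintro ⟨w⟩
    obtain ⟨v, hv, hvS⟩ := hsep (w.mapLe (delG_le G S))
    rw [support_mapLe] at hv
    exact delG_support_not_mem w haS v hv hvS
  -- for x ∈ S and base point p ∈ {a,b}, get a neighbor of x in the p-component
  have nbr : ∀ x ∈ S, ∀ p : V, p ∉ S →
      (∀ w : G.Walk a b, ∃ v ∈ w.support, v ∈ S.erase x → False) → True := fun _ _ _ _ _ => trivial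
  -- walk-based neighbor lemma
  have nbr_lemma : ∀ {x : V}, x ∈ S → ∀ {p c : V} (w : G.Walk c x), p ∉ S →
      H.Reachable p c → (∀ v ∈ w.support, v ∈ S → v = x) →
      ∃ x', G.Adj x' x ∧ H.Reachable p x' := by
    intro x hx p c w
    induction w with
    | nil =>
      intro hp hr _
      exact absurd hx (delG_reach_not_mem hp hr)
    | @cons c d x' h q ih =>
      intro hp hr hs
      by_cases hd : d = x'
      · subst hd
        exact ⟨c, h, hr⟩
      · have hdsup : d ∈ (SimpleGraph.Walk.cons h q).support := by
          rw [SimpleGraph.Walk.support_cons, List.mem_cons]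
          exact Or.inr q.start_mem_support
        have hdS : d ∉ S := fun hdS => hd (hs d hdsup hdS)
        have hcS : c ∉ S := delG_reach_not_mem hp hr
        have hHadj : H.Adj c d := ⟨h, hcS, hdS⟩
        refine ih hx hp (hr.trans hHadj.reachable) ?_
        intro v hv hvS
        exact hs v (by rw [SimpleGraph.Walk.support_cons, List.mem_cons]; exact Or.inr hv) hvS
  -- for each x ∈ S obtain neighbors in the components of a and b
  have getnbrs : ∀ x ∈ S, (∃ x', G.Adj x' x ∧ H.Reachable a x') ∧
      (∃ x'', G.Adj x'' x ∧ H.Reachable b x'') := by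
    intro x hx
    have hcard' : ¬ P (S.erase x) := by
      intro hPe
      have := hmin _ hPe
      have hlt := Finset.card_erase_lt_of_mem hx
      omega
    simp only [hP] at hcard'
    push_neg at hcard'
    obtain ⟨w, hw⟩ := hcard' (fun h => haS (Finset.mem_of_mem_erase h))
      (fun h => hbS (Finset.mem_of_mem_erase h))
    -- hw : ∀ v ∈ w.support, v ∉ S.erase x
    have hxsupp : x ∈ w.support := by
      by_contra hxs
      obtain ⟨v, hv, hvS⟩ := hsep w
      have h2 := hw v hv
      rw [Finset.mem_erase] at h2
      push_neg at h2
      have hvx : v = x := by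
        by_contra h3
        exact h2 h3 hvS
      exact hxs (hvx ▸ hv)
    constructor
    · refine nbr_lemma hx (w.takeUntil x hxsupp) haS ((SimpleGraph.Reachable.refl a : H.Reachable a a)) ?_
      intro v hv hvS
      have hv' := w.support_takeUntil_subset hxsupp hv
      have h2 := hw v hv'
      rw [Finset.mem_erase] at h2
      push_neg at h2
      by_contra hvx
      exact h2 hvx hvS
    · have hxsupp' : x ∈ w.reverse.support := by
        rw [SimpleGraph.Walk.support_reverse, List.mem_reverse]
        exact hxsupp
      refine nbr_lemma hx (w.reverse.takeUntil x hxsupp') hbS ((SimpleGraph.Reachable.refl b : H.Reachable b b)) ?_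
      intro v hv hvS
      have hv' := w.reverse.support_takeUntil_subset hxsupp' hv
      rw [SimpleGraph.Walk.support_reverse, List.mem_reverse] at hv'
      have h2 := hw v hv'
      rw [Finset.mem_erase] at h2
      push_neg at h2
      by_contra hvx
      exact h2 hvx hvS
  -- S is a clique
  have hclique : ∀ x ∈ S, ∀ y ∈ S, x ≠ y → G.Adj x y := by
    intro x hxS y hyS hne
    by_contra hxy
    obtain ⟨⟨x', hx'adj, hx'r⟩, ⟨x'', hx''adj, hx''r⟩⟩ := getnbrs x hxS
    obtain ⟨⟨y', hy'adj, hy'r⟩, ⟨y'', hy''adj, hy''r⟩⟩ := getnbrs y hyS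
    have hdisj : ∀ v, H.Reachable a v → H.Reachable b v → False := by
      intro v h1 h2
      exact hnreach (h1.trans h2.symm)
    have hxa : ¬ H.Reachable a x := fun h => delG_reach_not_mem haS h hxS
    have hya : ¬ H.Reachable a y := fun h => delG_reach_not_mem haS h hyS
    have hxb : ¬ H.Reachable b x := fun h => delG_reach_not_mem hbS h hxS
    have hyb : ¬ H.Reachable b y := fun h => delG_reach_not_mem hbS h hyS
    -- the two walk classes
    set PrA : G.Walk x y → Prop :=
      fun w => ∀ v ∈ w.support, v = x ∨ v = y ∨ H.Reachable a v with hPrA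
    set PrB : G.Walk x y → Prop :=
      fun w => ∀ v ∈ w.support, v = x ∨ v = y ∨ H.Reachable b v with hPrB
    have hWAne : ∃ w, PrA w := by
      obtain ⟨hw⟩ := (hx'r.symm.trans hy'r : H.Reachable x' y')
      refine ⟨SimpleGraph.Walk.cons hx'adj.symm
        ((hw.mapLe (delG_le G S)).append (SimpleGraph.Walk.cons hy'adj SimpleGraph.Walk.nil)), ?_⟩
      intro v hv
      rw [SimpleGraph.Walk.support_cons, List.mem_cons] at hv
      rcases hv with rfl | hv
      · exact Or.inl rfl
      rw [SimpleGraph.Walk.mem_support_append_iff] at hv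
      rcases hv with hv | hv
      · rw [support_mapLe] at hv
        exact Or.inr (Or.inr (delG_support_reach hw hx'r v hv))
      · rw [SimpleGraph.Walk.support_cons, List.mem_cons] at hv
        rcases hv with rfl | hv
        · exact Or.inr (Or.inr hy'r)
        · rw [SimpleGraph.Walk.support_nil, List.mem_singleton] at hv
          exact Or.inr (Or.inl hv)
    have hWBne : ∃ w, PrB w := by
      obtain ⟨hw⟩ := (hx''r.symm.trans hy''r : H.Reachable x'' y'')
      refine ⟨SimpleGraph.Walk.cons hx''adj.symm
        ((hw.mapLe (delG_le G S)).append (SimpleGraph.Walk.cons hy''adj SimpleGraph.Walk.nil)), ?_⟩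
      intro v hv
      rw [SimpleGraph.Walk.support_cons, List.mem_cons] at hv
      rcases hv with rfl | hv
      · exact Or.inl rfl
      rw [SimpleGraph.Walk.mem_support_append_iff] at hv
      rcases hv with hv | hv
      · rw [support_mapLe] at hv
        exact Or.inr (Or.inr (delG_support_reach hw hx''r v hv))
      · rw [SimpleGraph.Walk.support_cons, List.mem_cons] at hv
        rcases hv with rfl | hv
        · exact Or.inr (Or.inr hy''r)
        · rw [SimpleGraph.Walk.support_nil, List.mem_singleton] at hv
          exact Or.inr (Or.inl hv)
    obtain ⟨wA0, hwA0, hminA0⟩ := exists_min_walk PrA hWAne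
    obtain ⟨wB0, hwB0, hminB0⟩ := exists_min_walk PrB hWBne
    obtain ⟨pA, hpApath, hPrApA, hminA⟩ :
        ∃ p : G.Walk x y, p.IsPath ∧ PrA p ∧ ∀ w', PrA w' → p.length ≤ w'.length :=
      ⟨wA0.bypass, wA0.bypass_isPath, fun v hv => hwA0 v (wA0.support_bypass_subset hv),
        fun w' hw' => le_trans wA0.length_bypass_le (hminA0 w' hw')⟩
    obtain ⟨pB, hpBpath, hPrBpB, hminB⟩ :
        ∃ p : G.Walk x y, p.IsPath ∧ PrB p ∧ ∀ w', PrB w' → p.length ≤ w'.length :=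
      ⟨wB0.bypass, wB0.bypass_isPath, fun v hv => hwB0 v (wB0.support_bypass_subset hv),
        fun w' hw' => le_trans wB0.length_bypass_le (hminB0 w' hw')⟩
    have hlenA : 2 ≤ pA.length := by
      by_contra hl
      push_neg at hl
      interval_cases h : pA.length
      · exact hne (SimpleGraph.Walk.eq_of_length_eq_zero h)
      · exact hxy (pA.adj_of_length_eq_one h)
    have hlenB : 2 ≤ pB.length := by
      by_contra hl
      push_neg at hl
      interval_cases h : pB.length
      · exact hne (SimpleGraph.Walk.eq_of_length_eq_zero h)
      · exact hxy (pB.adj_of_length_eq_one h)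
    clear hminA0 hminB0 hwA0 hwB0
    cases pB with
    | nil => simp at hlenB
    | @cons _ b1 _ hadj pB' =>
      rw [SimpleGraph.Walk.cons_isPath_iff] at hpBpath
      obtain ⟨hpB'path, hxnotB'⟩ := hpBpath
      have hlenB' : 1 ≤ pB'.length := by
        rw [SimpleGraph.Walk.length_cons] at hlenB
        omega
      have hb1r : H.Reachable b b1 := by
        have h := hPrBpB b1 (by
          rw [SimpleGraph.Walk.support_cons, List.mem_cons]
          exact Or.inr pB'.start_mem_support)
        rcases h with h | h | h
        · exact absurd h.symm hadj.ne
        · exact absurd (h ▸ hadj) hxy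
        · exact h
      -- the closed walk
      have hnodupP : (pA.append pB'.reverse).support.Nodup := by
        rw [SimpleGraph.Walk.support_append, List.nodup_append]
        refine ⟨hpApath.support_nodup, (List.tail_sublist _).nodup
          hpB'path.reverse.support_nodup, ?_⟩
        rintro z hzA z' hzB rfl
        have hzB' : z ∈ pB'.support := by
          have h := (List.tail_sublist _).subset hzB
          rw [SimpleGraph.Walk.support_reverse, List.mem_reverse] at h
          exact h
        have hzy : z ≠ y := by
          intro h
          subst h
          have hnd := hpB'path.reverse.support_nodup
          rw [pB'.reverse.support_eq_cons] at hnd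
          exact (List.nodup_cons.mp hnd).1 hzB
        have hzx : z ≠ x := fun h => hxnotB' (h ▸ hzB')
        have hzBt : H.Reachable b z := by
          have h := hPrBpB z (by
            rw [SimpleGraph.Walk.support_cons, List.mem_cons]
            exact Or.inr hzB')
          rcases h with h | h | h
          · exact absurd h hzx
          · exact absurd h hzy
          · exact h
        rcases hPrApA z hzA with h | h | h
        · exact hzx h
        · exact hzy h
        · exact hdisj z h hzBt
      have hchordedge : s(b1, x) ∉ (pA.append pB'.reverse).edges := by
        intro hmem
        rw [SimpleGraph.Walk.edges_append, List.mem_append] at hmem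
        rcases hmem with hmem | hmem
        · have hb1A : b1 ∈ pA.support := pA.fst_mem_support_of_mem_edges hmem
          rcases hPrApA b1 hb1A with h | h | h
          · exact hadj.ne h.symm
          · exact hxy (h ▸ hadj)
          · exact hdisj b1 h hb1r
        · rw [SimpleGraph.Walk.edges_reverse, List.mem_reverse] at hmem
          exact hxnotB' (pB'.snd_mem_support_of_mem_edges hmem)
      have hcyc : (SimpleGraph.Walk.cons hadj.symm (pA.append pB'.reverse)).IsCycle :=
        (SimpleGraph.Walk.cons_isCycle_iff _ _).mpr ⟨SimpleGraph.Walk.IsPath.mk' hnodupP,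
          hchordedge⟩
      have hlen4 : 4 ≤ (SimpleGraph.Walk.cons hadj.symm (pA.append pB'.reverse)).length := by
        rw [SimpleGraph.Walk.length_cons, SimpleGraph.Walk.length_append,
          SimpleGraph.Walk.length_reverse]
        omega
      obtain ⟨u, v, hu, hv, huv, hedge⟩ := hG _ hcyc hlen4
      -- support decomposition
      have hsupp_or : ∀ z, z ∈ (SimpleGraph.Walk.cons hadj.symm (pA.append pB'.reverse)).support →
          z ∈ pA.support ∨ z ∈ (SimpleGraph.Walk.cons hadj pB').support := by
        intro z hz
        rw [SimpleGraph.Walk.support_cons, List.mem_cons] at hz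
        rcases hz with rfl | hz
        · right
          rw [SimpleGraph.Walk.support_cons, List.mem_cons]
          exact Or.inr pB'.start_mem_support
        rw [SimpleGraph.Walk.mem_support_append_iff] at hz
        rcases hz with hz | hz
        · exact Or.inl hz
        · right
          rw [SimpleGraph.Walk.support_reverse, List.mem_reverse] at hz
          rw [SimpleGraph.Walk.support_cons, List.mem_cons]
          exact Or.inr hz
      have hedges1 : ∀ e, e ∈ pA.edges →
          e ∈ (SimpleGraph.Walk.cons hadj.symm (pA.append pB'.reverse)).edges := by
        intro e he
        rw [SimpleGraph.Walk.edges_cons, List.mem_cons]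
        right
        rw [SimpleGraph.Walk.edges_append, List.mem_append]
        exact Or.inl he
      have hedges2 : ∀ e, e ∈ (SimpleGraph.Walk.cons hadj pB').edges →
          e ∈ (SimpleGraph.Walk.cons hadj.symm (pA.append pB'.reverse)).edges := by
        intro e he
        rw [SimpleGraph.Walk.edges_cons, List.mem_cons] at he
        rw [SimpleGraph.Walk.edges_cons, List.mem_cons]
        rcases he with rfl | he
        · exact Or.inl Sym2.eq_swap.symm
        · right
          rw [SimpleGraph.Walk.edges_append, List.mem_append]
          right
          rw [SimpleGraph.Walk.edges_reverse, List.mem_reverse]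
          exact he
      have hinA : ∀ z, z ∈ (SimpleGraph.Walk.cons hadj.symm (pA.append pB'.reverse)).support →
          (z = x ∨ z = y ∨ H.Reachable a z) → z ∈ pA.support := by
        intro z hz hp
        rcases hp with rfl | rfl | hr
        · exact pA.start_mem_support
        · exact pA.end_mem_support
        · rcases hsupp_or z hz with h | h
          · exact h
          · rcases hPrBpB z h with rfl | rfl | hrb
            · exact absurd hr hxa
            · exact absurd hr hya
            · exact (hdisj z hr hrb).elim
      have hinB : ∀ z, z ∈ (SimpleGraph.Walk.cons hadj.symm (pA.append pB'.reverse)).support →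
          (z = x ∨ z = y ∨ H.Reachable b z) →
          z ∈ (SimpleGraph.Walk.cons hadj pB').support := by
        intro z hz hp
        rcases hp with rfl | rfl | hr
        · exact SimpleGraph.Walk.start_mem_support _
        · exact SimpleGraph.Walk.end_mem_support _
        · rcases hsupp_or z hz with h | h
          · rcases hPrApA z h with rfl | rfl | hra
            · exact absurd hr hxb
            · exact absurd hr hyb
            · exact (hdisj z hra hr).elim
          · exact h
      have hclassu : (u = x ∨ u = y ∨ H.Reachable a u) ∨ (u = x ∨ u = y ∨ H.Reachable b u) :=
        (hsupp_or u hu).imp (hPrApA u) (hPrBpB u)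
      have hclassv : (v = x ∨ v = y ∨ H.Reachable a v) ∨ (v = x ∨ v = y ∨ H.Reachable b v) :=
        (hsupp_or v hv).imp (hPrApA v) (hPrBpB v)
      by_cases hAu : u = x ∨ u = y ∨ H.Reachable a u <;>
        by_cases hAv : v = x ∨ v = y ∨ H.Reachable a v
      · obtain ⟨w', hsub, hlt⟩ := shortcut pA u v (hinA u hu hAu) (hinA v hv hAv) huv
          (fun h => hedge (hedges1 _ h))
        have hw' : PrA w' := fun z hz => hPrApA z (hsub z hz)
        have := hminA w' hw'
        omega
      · -- u is A-type, v is strictly B-type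
        have hBv : v = x ∨ v = y ∨ H.Reachable b v := hclassv.resolve_left hAv
        push_neg at hAv
        obtain ⟨hvx, hvy, hvra⟩ := hAv
        have hvrb : H.Reachable b v := by
          rcases hBv with h | h | h
          · exact absurd h hvx
          · exact absurd h hvy
          · exact h
        rcases hAu with rfl | rfl | hru
        · -- u = x : also B-type
          obtain ⟨w', hsub, hlt⟩ := shortcut (SimpleGraph.Walk.cons hadj pB') u v
            (SimpleGraph.Walk.start_mem_support _) (hinB v hv hBv) huv
            (fun h => hedge (hedges2 _ h))
          have hw' : PrB w' := fun z hz => hPrBpB z (hsub z hz)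
          have := hminB w' hw'
          omega
        · obtain ⟨w', hsub, hlt⟩ := shortcut (SimpleGraph.Walk.cons hadj pB') u v
            (SimpleGraph.Walk.end_mem_support _) (hinB v hv hBv) huv
            (fun h => hedge (hedges2 _ h))
          have hw' : PrB w' := fun z hz => hPrBpB z (hsub z hz)
          have := hminB w' hw'
          omega
        · -- u strictly A, v strictly B : edge inside H, contradiction
          have huS : u ∉ S := delG_reach_not_mem haS hru
          have hvS : v ∉ S := delG_reach_not_mem hbS hvrb
          exact hdisj v (hru.trans (SimpleGraph.Adj.reachable ⟨huv, huS, hvS⟩)) hvrb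
      · -- v is A-type, u is strictly B-type
        have hBu : u = x ∨ u = y ∨ H.Reachable b u := hclassu.resolve_left hAu
        push_neg at hAu
        obtain ⟨hux, huy, hura⟩ := hAu
        have hurb : H.Reachable b u := by
          rcases hBu with h | h | h
          · exact absurd h hux
          · exact absurd h huy
          · exact h
        rcases hAv with rfl | rfl | hrv
        · obtain ⟨w', hsub, hlt⟩ := shortcut (SimpleGraph.Walk.cons hadj pB') u v
            (hinB u hu hBu) (SimpleGraph.Walk.start_mem_support _) huv
            (fun h => hedge (hedges2 _ h))
          have hw' : PrB w' := fun z hz => hPrBpB z (hsub z hz)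
          have := hminB w' hw'
          omega
        · obtain ⟨w', hsub, hlt⟩ := shortcut (SimpleGraph.Walk.cons hadj pB') u v
            (hinB u hu hBu) (SimpleGraph.Walk.end_mem_support _) huv
            (fun h => hedge (hedges2 _ h))
          have hw' : PrB w' := fun z hz => hPrBpB z (hsub z hz)
          have := hminB w' hw'
          omega
        · have huS : u ∉ S := delG_reach_not_mem hbS hurb
          have hvS : v ∉ S := delG_reach_not_mem haS hrv
          exact hdisj u (hrv.trans (SimpleGraph.Adj.reachable ⟨huv.symm, hvS, huS⟩)) hurb
      · -- both strictly B-type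
        have hBu : u = x ∨ u = y ∨ H.Reachable b u := hclassu.resolve_left hAu
        have hBv : v = x ∨ v = y ∨ H.Reachable b v := hclassv.resolve_left hAv
        obtain ⟨w', hsub, hlt⟩ := shortcut (SimpleGraph.Walk.cons hadj pB') u v
          (hinB u hu hBu) (hinB v hv hBv) huv (fun h => hedge (hedges2 _ h))
        have hw' : PrB w' := fun z hz => hPrBpB z (hsub z hz)
        have := hminB w' hw'
        omega
  -- assemble the separation
  refine ⟨↑S ∪ {v | H.Reachable a v}, ↑S ∪ {v | ¬ H.Reachable a v}, ?_, ?_, ?_, ?_, ?_⟩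
  · ext v
    simp only [Set.mem_union, Set.mem_setOf_eq, Set.mem_univ, iff_true]
    by_cases h : H.Reachable a v
    · exact Or.inl (Or.inr h)
    · exact Or.inr (Or.inr h)
  · intro h
    rcases h with h | h
    · exact haS h
    · exact h ((SimpleGraph.Reachable.refl a : H.Reachable a a))
  · intro h
    rcases h with h | h
    · exact hbS h
    · exact hnreach h
  · have hST : (↑S ∪ {v | H.Reachable a v}) ∩ (↑S ∪ {v | ¬ H.Reachable a v}) = ↑S := by
      ext v
      simp only [Set.mem_inter_iff, Set.mem_union, Finset.coe_sort_coe, Set.mem_setOf_eq,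
        Finset.mem_coe]
      constructor
      · rintro ⟨h1 | h1, h2 | h2⟩ <;> first | exact h1 | exact h2 | exact absurd h1 h2
      · intro h; exact ⟨Or.inl h, Or.inl h⟩
    rw [hST]
    intro x hx y hy hne
    exact hclique x hx y hy hne
  · intro x y hxs hxt hyt hys hadj
    simp only [Set.mem_union, Set.mem_setOf_eq, Finset.mem_coe] at hxs hxt hyt hys
    push_neg at hxt hys
    have hxr : H.Reachable a x := by
      rcases hxs with h | h
      · exact absurd h hxt.1
      · exact h
    have hyr : ¬ H.Reachable a y := by
      rcases hyt with h | h
      · exact absurd h hys.1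
      · exact h
    exact hyr (hxr.trans (SimpleGraph.Adj.reachable ⟨hadj, hxt.1, hys.1⟩))

end Graph


section InduceChordal

variable {V : Type*} [Fintype V] [DecidableEq V]

lemma isChordal_induce {G : SimpleGraph V} (hG : IsChordal G) (s : Set V) :
    IsChordal (SimpleGraph.induce s G) := by
  intro v w hcyc hlen
  let f : SimpleGraph.induce s G ↪g G :=
    SimpleGraph.Embedding.comap (Function.Embedding.subtype _) G
  have hinj : Function.Injective f := f.injective
  have hcyc' : (w.map f.toHom).IsCycle := hcyc.map hinj
  have hlen' : 4 ≤ (w.map f.toHom).length := by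
    rw [SimpleGraph.Walk.length_map]
    exact hlen
  obtain ⟨x, y, hx, hy, hxy, hed⟩ := hG _ hcyc' hlen'
  rw [SimpleGraph.Walk.support_map, List.mem_map] at hx hy
  obtain ⟨x₀, hx₀, rfl⟩ := hx
  obtain ⟨y₀, hy₀, rfl⟩ := hy
  refine ⟨x₀, y₀, hx₀, hy₀, hxy, ?_⟩
  intro hmem
  apply hed
  rw [SimpleGraph.Walk.edges_map, List.mem_map]
  exact ⟨s(x₀, y₀), hmem, rfl⟩

end InduceChordal

section Main

variable {V : Type*} [Fintype V] [DecidableEq V]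

/-- generalization of `IsPartialPositive` to arbitrary finite vertex types -/
def GPP (G : SimpleGraph V) (A : Matrix V V ℂ) : Prop :=
  (∀ i, (A i i).im = 0) ∧ (∀ i j, G.Adj i j → A j i = star (A i j)) ∧
    ∀ K : Finset V, G.IsClique (K : Set V) →
      (A.submatrix (fun i : K => (i : V)) (fun j : K => (j : V))).PosDef

lemma GPP_induce {G : SimpleGraph V} {A : Matrix V V ℂ} (hA : GPP G A) (s : Set V) :
    GPP (SimpleGraph.induce s G) (A.submatrix ((↑) : s → V) ((↑) : s → V)) := by
  classical
  refine ⟨fun i => hA.1 ↑i, fun i j hadj => hA.2.1 ↑i ↑j hadj, ?_⟩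
  intro K hK
  set K' : Finset V := K.image ((↑) : s → V) with hK'
  have hK'c : G.IsClique (K' : Set V) := by
    intro u hu v hv huv
    simp only [hK', Finset.coe_image, Set.mem_image, Finset.mem_coe] at hu hv
    obtain ⟨u₀, hu₀, rfl⟩ := hu
    obtain ⟨v₀, hv₀, rfl⟩ := hv
    have hne : u₀ ≠ v₀ := fun h => huv (h ▸ rfl)
    exact hK (Finset.mem_coe.mpr hu₀) (Finset.mem_coe.mpr hv₀) hne
  have hPD := hA.2.2 K' hK'c
  have hbij : Function.Bijective (fun a : {x // x ∈ K} =>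
      (⟨↑↑a, Finset.mem_image_of_mem _ a.2⟩ : {x // x ∈ K'})) := by
    constructor
    · intro a b hab
      have h1 : (↑↑a : V) = ↑↑b := by simpa using Subtype.ext_iff.mp hab
      exact Subtype.ext (Subtype.ext h1)
    · rintro ⟨v, hv⟩
      rw [hK', Finset.mem_image] at hv
      obtain ⟨a, ha, rfl⟩ := hv
      exact ⟨⟨a, ha⟩, rfl⟩
  exact posDef_submatrix_equiv hPD (Equiv.ofBijective _ hbij)

lemma myext_herm {s : Set V} [DecidablePred (· ∈ s)] {M : Matrix s s ℂ}
    (hM : M.IsHermitian) : (myext s M).IsHermitian := by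
  ext i j
  rw [Matrix.conjTranspose_apply]
  by_cases hi : i ∈ s <;> by_cases hj : j ∈ s
  · rw [myext_apply_mem M hi hj, myext_apply_mem M hj hi]
    exact hM.apply ⟨i, hi⟩ ⟨j, hj⟩
  · rw [myext_apply_zero M (Or.inr hj), myext_apply_zero M (Or.inl hj), star_zero]
  · rw [myext_apply_zero M (Or.inl hi), myext_apply_zero M (Or.inr hi), star_zero]
  · rw [myext_apply_zero M (Or.inl hi), myext_apply_zero M (Or.inl hj), star_zero]

end Main

theorem mainAux : ∀ (N : ℕ) (V : Type) (_ : Fintype V) (_ : DecidableEq V),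
    Fintype.card V ≤ N → ∀ (G : SimpleGraph V), IsChordal G → ∀ A : Matrix V V ℂ, GPP G A →
    ∃ M : Matrix V V ℂ, M.PosSemidef ∧ ∀ i j, (i = j ∨ G.Adj i j) → M i j = A i j := by
  intro N
  induction N with
  | zero =>
    intro V _ _ hcard G hG A hA
    haveI : IsEmpty V := Fintype.card_eq_zero_iff.mp (Nat.le_zero.mp hcard)
    refine ⟨A, posSemidef_iff_dotProduct_mulVec.mpr ⟨?_, ?_⟩, fun i j _ => rfl⟩
    · ext i j
      exact isEmptyElim i
    · intro x
      have h : dotProduct (star x) (A *ᵥ x) = 0 := by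
        simp [dotProduct]
      rw [h]
  | succ n ih =>
    intro V _ _ hcard G hG A hA
    classical
    by_cases hcomp : ∀ x y : V, x ≠ y → G.Adj x y
    · -- complete graph : A itself is positive definite
      have hclique : G.IsClique ((Finset.univ : Finset V) : Set V) := by
        intro u _ v _ huv
        exact hcomp u v huv
      have hPD := hA.2.2 Finset.univ hclique
      have he : ∀ x : V, x ∈ Finset.univ := fun x => Finset.mem_univ x
      have hPD' := posDef_submatrix_equiv hPD (Equiv.subtypeUnivEquiv he).symm
      have hAA : (Matrix.submatrix A (fun i : (Finset.univ : Finset V) => (i : V))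
          (fun j : (Finset.univ : Finset V) => (j : V))).submatrix
          (Equiv.subtypeUnivEquiv he).symm (Equiv.subtypeUnivEquiv he).symm = A := by
        ext i j
        rfl
      rw [hAA] at hPD'
      exact ⟨A, hPD'.posSemidef, fun i j _ => rfl⟩
    · push_neg at hcomp
      obtain ⟨a, b, hab, hnadj⟩ := hcomp
      obtain ⟨s, t, hst, hat, hbs, hSclique, hcross⟩ := clique_separation G hG hab hnadj
      have hcards : Fintype.card s ≤ n := by
        have h1 : Fintype.card ↥s < Fintype.card V :=
          Fintype.card_subtype_lt (p := fun x => x ∈ s) (x := b) hbs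
        omega
      have hcardt : Fintype.card t ≤ n := by
        have h1 : Fintype.card ↥t < Fintype.card V :=
          Fintype.card_subtype_lt (p := fun x => x ∈ t) (x := a) hat
        omega
      -- the two induced problems
      obtain ⟨M1, hM1psd, hM1ent⟩ := ih ↥s inferInstance inferInstance hcards (SimpleGraph.induce s G)
        (isChordal_induce hG s) _ (GPP_induce hA s)
      obtain ⟨M2, hM2psd, hM2ent⟩ := ih ↥t inferInstance inferInstance hcardt (SimpleGraph.induce t G)
        (isChordal_induce hG t) _ (GPP_induce hA t)
      set N1 : Matrix V V ℂ := myext s M1 with hN1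
      set N2 : Matrix V V ℂ := myext t M2 with hN2
      -- basic entry identities with A
      have hN1A : ∀ i j, i ∈ s → j ∈ s → (i = j ∨ G.Adj i j) → N1 i j = A i j := by
        intro i j hi hj hij
        rw [hN1, myext_apply_mem M1 hi hj]
        refine (hM1ent ⟨i, hi⟩ ⟨j, hj⟩ ?_).trans rfl
        rcases hij with rfl | hij
        · exact Or.inl rfl
        · exact Or.inr hij
      have hN2A : ∀ i j, i ∈ t → j ∈ t → (i = j ∨ G.Adj i j) → N2 i j = A i j := by
        intro i j hi hj hij
        rw [hN2, myext_apply_mem M2 hi hj]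
        refine (hM2ent ⟨i, hi⟩ ⟨j, hj⟩ ?_).trans rfl
        rcases hij with rfl | hij
        · exact Or.inl rfl
        · exact Or.inr hij
      -- the intersection clique and its inverse matrix
      set S : Set V := s ∩ t with hS
      have hSspec : ∀ i j, i ∈ S → j ∈ S → i ≠ j → G.Adj i j := by
        intro i j hi hj hne
        exact hSclique hi hj hne
      set K : Finset V := S.toFinset with hK
      have hKclique : G.IsClique (K : Set V) := by
        rw [hK, Set.coe_toFinset]
        exact hSclique
      have hCK := hA.2.2 K hKclique
      set eSK : ↥S ≃ {x // x ∈ K} := Equiv.subtypeEquivRight (by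
        intro x
        rw [hK, Set.mem_toFinset]) with heSK
      have hCPD : (Matrix.submatrix A ((↑) : S → V) ((↑) : S → V)).PosDef := by
        have h := posDef_submatrix_equiv hCK eSK
        have hAA : (Matrix.submatrix A (fun i : K => (i : V)) (fun j : K => (j : V))).submatrix
            eSK eSK = Matrix.submatrix A ((↑) : S → V) ((↑) : S → V) := by
          ext i j
          simp [heSK, Equiv.subtypeEquivRight]
          rfl
        rwa [hAA] at h
      set C : Matrix S S ℂ := Matrix.submatrix A ((↑) : S → V) ((↑) : S → V) with hC
      have hdet : IsUnit C.det := (Matrix.isUnit_iff_isUnit_det C).mp hCPD.isUnit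
      set Q : Matrix V V ℂ := myext S C⁻¹ with hQ
      -- N1 agrees with A (hence C) on S × S
      have hN1S : ∀ i j, i ∈ S → j ∈ S → N1 i j = A i j := by
        intro i j hi hj
        by_cases hij : i = j
        · exact hN1A i j hi.1 hj.1 (Or.inl hij)
        · exact hN1A i j hi.1 hj.1 (Or.inr (hSspec i j hi hj hij))
      have hN2S : ∀ i j, i ∈ S → j ∈ S → N2 i j = A i j := by
        intro i j hi hj
        by_cases hij : i = j
        · exact hN2A i j hi.2 hj.2 (Or.inl hij)
        · exact hN2A i j hi.2 hj.2 (Or.inr (hSspec i j hi hj hij))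
      have hQinv : ∀ i j, i ∈ s ∩ t → j ∈ s ∩ t →
          ((myext S C⁻¹ : Matrix V V ℂ) * myext s M1) i j = if i = j then 1 else 0 := by
        intro i j hi hj
        have hmm : ((myext S C⁻¹ : Matrix V V ℂ) * myext s M1) i j
            = (C⁻¹ * C) ⟨i, hi⟩ ⟨j, hj⟩ := by
          rw [Matrix.mul_apply, Matrix.mul_apply]
          refine (mysum_set_eq (s := S) _ fun v hv => ?_).trans
            (Finset.sum_congr rfl fun k _ => ?_)
          · show myext S C⁻¹ i v * myext s M1 v j = 0
            rw [myext_apply_zero C⁻¹ (Or.inr hv), zero_mul]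
          · show myext S C⁻¹ i ↑k * myext s M1 ↑k j = _
            rw [myext_apply_mem C⁻¹ hi k.2]
            have h2 : myext s M1 ↑k j = C k ⟨j, hj⟩ := by
              have h3 := hN1S ↑k j k.2 hj
              rw [hN1] at h3
              rw [h3]
              rfl
            rw [h2]
        rw [hmm, Matrix.nonsing_inv_mul C hdet]
        by_cases hij : i = j
        · subst hij
          rw [if_pos rfl, Matrix.one_apply_eq]
        · rw [if_neg hij, Matrix.one_apply_ne (fun h => hij (congrArg Subtype.val h))]
      have hagree : ∀ i j, i ∈ s ∩ t → j ∈ s ∩ t → N1 i j = N2 i j := by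
        intro i j hi hj
        rw [hN1S i j hi hj, hN2S i j hi hj]
      -- apply the gluing lemma
      obtain ⟨M, hMpsd, hMs, hMt⟩ := myglue s t N1 N2 (myext S C⁻¹) (myext_posSemidef hM1psd)
        (myext_posSemidef hM2psd)
        (fun i j h => myext_apply_zero M1 h)
        (myext_herm hCPD.isHermitian.inv)
        (fun i j h => myext_apply_zero C⁻¹ h)
        hQinv hagree
      refine ⟨M, hMpsd, ?_⟩
      intro i j hij
      have hall : ∀ v : V, v ∈ s ∨ v ∈ t := by
        intro v
        have : v ∈ s ∪ t := by rw [hst]; trivial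
        exact this
      rcases hij with rfl | hadj
      · rcases hall i with hi | hi
        · rw [hMs i i hi hi]
          exact hN1A i i hi hi (Or.inl rfl)
        · by_cases hi' : i ∈ s
          · rw [hMs i i hi' hi']
            exact hN1A i i hi' hi' (Or.inl rfl)
          · rw [hMt i i hi hi (Or.inl hi')]
            exact hN2A i i hi hi (Or.inl rfl)
      · -- adjacent vertices are both in s or both in t
        by_cases his : i ∈ s <;> by_cases hjs : j ∈ s
        · rw [hMs i j his hjs]
          exact hN1A i j his hjs (Or.inr hadj)
        · -- i ∈ s, j ∉ s so j ∈ t; need i ∈ t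
          have hjt : j ∈ t := (hall j).resolve_left hjs
          have hit : i ∈ t := by
            by_contra hit
            exact hcross i j his hit hjt hjs hadj
          rw [hMt i j hit hjt (Or.inr hjs)]
          exact hN2A i j hit hjt (Or.inr hadj)
        · have hit : i ∈ t := (hall i).resolve_left his
          have hjt : j ∈ t := by
            by_contra hjt
            exact hcross j i hjs hjt hit his hadj.symm
          rw [hMt i j hit hjt (Or.inl his)]
          exact hN2A i j hit hjt (Or.inr hadj)
        · have hit : i ∈ t := (hall i).resolve_left his
          have hjt : j ∈ t := (hall j).resolve_left hjs
          rw [hMt i j hit hjt (Or.inl his)]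
          exact hN2A i j hit hjt (Or.inr hadj)


/-- Every chordal graph has completion number `0`: every partial positive matrix with
chordal graph admits a Hermitian completion with no negative eigenvalues. -/
theorem stmt9 {n : ℕ} (G : SimpleGraph (Fin n)) (hG : IsChordal G) :
    CompletionNumberIs G 0 := by
  constructor
  · intro A hA
    have hGPP : GPP G A := ⟨hA.1.1, hA.1.2, hA.2⟩
    obtain ⟨M, hMpsd, hMent⟩ := mainAux n (Fin n) inferInstance inferInstance
      (le_of_eq (Fintype.card_fin n)) G hG A hGPP
    refine ⟨M, hMpsd.isHermitian, hMent, ?_⟩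
    have hempty : IsEmpty {i // hMpsd.isHermitian.eigenvalues i < 0} :=
      ⟨fun x => absurd x.2 (not_lt.mpr (hMpsd.eigenvalues_nonneg x.1))⟩
    have hzero : negCount hMpsd.isHermitian = 0 := by
      rw [negCount]
      exact Fintype.card_eq_zero_iff.mpr hempty
    rw [hzero]
  · intro k _
    exact Nat.zero_le k
end

section
/- For every n ≥ 4, the completion number of the chordless cycle Cₙ on n vertices equals 1. -/
open Matrix ComplexOrder

lemma negCount_le_one {n : ℕ} {H : Matrix (Fin n) (Fin n) ℂ} (hH : H.IsHermitian)
    (i₀ : Fin n)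
    (hpos : ∀ x : Fin n → ℂ, x ≠ 0 → x i₀ = 0 → 0 < star x ⬝ᵥ H *ᵥ x) :
    negCount hH ≤ 1 := by
  rw [negCount, Fintype.card_le_one_iff]
  rintro ⟨i, hi⟩ ⟨j, hj⟩
  by_contra hne
  have hij : i ≠ j := fun h => hne (Subtype.ext h)
  set u : Fin n → ℂ := ⇑(hH.eigenvectorBasis i) with hu
  set v : Fin n → ℂ := ⇑(hH.eigenvectorBasis j) with hv
  have orth : ∀ p q : Fin n,
      star ⇑(hH.eigenvectorBasis p) ⬝ᵥ ⇑(hH.eigenvectorBasis q) = if p = q then 1 else 0 := by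
    intro p q
    have h := hH.eigenvectorBasis.orthonormal
    rw [orthonormal_iff_ite] at h
    rw [dotProduct_comm, ← EuclideanSpace.inner_eq_star_dotProduct]
    exact h p q
  have ouu : star u ⬝ᵥ u = 1 := by simpa using orth i i
  have ouv : star u ⬝ᵥ v = 0 := by simpa [hij] using orth i j
  have ovu : star v ⬝ᵥ u = 0 := by simpa [hij.symm] using orth j i
  have ovv : star v ⬝ᵥ v = 1 := by simpa using orth j j
  have key : ∀ a b : ℂ, ¬(a = 0 ∧ b = 0) → a * u i₀ + b * v i₀ = 0 → False := by
    intro a b hab h0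
    set x : Fin n → ℂ := a • u + b • v with hx
    have hxi₀ : x i₀ = 0 := by simpa [hx] using h0
    have hstarx : star x = (starRingEnd ℂ a) • star u + (starRingEnd ℂ b) • star v := by
      simp [hx, star_smul]
    have hxne : x ≠ 0 := by
      intro h
      apply hab
      constructor
      · have : star u ⬝ᵥ x = a := by
          rw [hx, dotProduct_add, dotProduct_smul, dotProduct_smul, ouu, ouv]
          simp
        rw [h, dotProduct_zero] at this; exact this.symm
      · have : star v ⬝ᵥ x = b := by
          rw [hx, dotProduct_add, dotProduct_smul, dotProduct_smul, ovu, ovv]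
          simp
        rw [h, dotProduct_zero] at this; exact this.symm
    have hmul : H *ᵥ x = (a * hH.eigenvalues i) • u + (b * hH.eigenvalues j) • v := by
      rw [hx, mulVec_add, mulVec_smul, mulVec_smul, hH.mulVec_eigenvectorBasis,
        hH.mulVec_eigenvectorBasis]
      funext k
      simp only [Pi.add_apply, Pi.smul_apply, smul_eq_mul, Complex.real_smul]
      ring
    have hq : star x ⬝ᵥ H *ᵥ x =
        (Complex.normSq a * hH.eigenvalues i + Complex.normSq b * hH.eigenvalues j : ℝ) := by
      rw [hmul, hstarx]
      rw [add_dotProduct, smul_dotProduct, smul_dotProduct, dotProduct_add, dotProduct_add,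
        dotProduct_smul, dotProduct_smul, dotProduct_smul, dotProduct_smul,
        ouu, ouv, ovu, ovv]
      simp only [smul_eq_mul, mul_zero, mul_one, add_zero, zero_add]
      rw [Complex.ofReal_add, Complex.ofReal_mul, Complex.ofReal_mul,
        Complex.normSq_eq_conj_mul_self, Complex.normSq_eq_conj_mul_self]
      ring
    have hposx := hpos x hxne hxi₀
    rw [hq] at hposx
    have : (0:ℝ) < Complex.normSq a * hH.eigenvalues i + Complex.normSq b * hH.eigenvalues j := by
      exact_mod_cast hposx
    have hle : Complex.normSq a * hH.eigenvalues i + Complex.normSq b * hH.eigenvalues j ≤ 0 := by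
      have h1 : Complex.normSq a * hH.eigenvalues i ≤ 0 :=
        mul_nonpos_iff.mpr (Or.inl ⟨Complex.normSq_nonneg a, le_of_lt hi⟩)
      have h2 : Complex.normSq b * hH.eigenvalues j ≤ 0 :=
        mul_nonpos_iff.mpr (Or.inl ⟨Complex.normSq_nonneg b, le_of_lt hj⟩)
      linarith
    linarith
  by_cases hui : u i₀ = 0
  · exact key 1 0 (by simp) (by simp [hui])
  · exact key (v i₀) (-(u i₀)) (by simp [hui]) (by ring)

lemma form_expand {l : ℕ} (M : Matrix (Fin (l+1)) (Fin (l+1)) ℂ)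
    (v : Fin (l+1) → ℂ) (c : ℂ) (M' : Matrix (Fin (l+2)) (Fin (l+2)) ℂ)
    (e1 : ∀ i j : Fin (l+1), M' i.castSucc j.castSucc = M i j)
    (e2 : ∀ i, M' i.castSucc (Fin.last (l+1)) = v i)
    (e3 : ∀ j, M' (Fin.last (l+1)) j.castSucc = star (v j))
    (e4 : M' (Fin.last (l+1)) (Fin.last (l+1)) = c)
    (z : Fin (l+2) → ℂ) :
    star z ⬝ᵥ M' *ᵥ z = star (z ∘ Fin.castSucc) ⬝ᵥ M *ᵥ (z ∘ Fin.castSucc)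
      + z (Fin.last _) * (star (z ∘ Fin.castSucc) ⬝ᵥ v)
      + star (z (Fin.last _)) * (star v ⬝ᵥ (z ∘ Fin.castSucc))
      + star (z (Fin.last _)) * z (Fin.last _) * c := by
  have hin : ∀ i : Fin (l+2), (∑ j, M' i j * z j)
      = (∑ j : Fin (l+1), M' i j.castSucc * z (j.castSucc)) + M' i (Fin.last _) * z (Fin.last _) :=
    fun i => Fin.sum_univ_castSucc (fun j => M' i j * z j)
  simp only [dotProduct, mulVec, Pi.star_apply, Function.comp_apply]
  rw [Fin.sum_univ_castSucc]
  simp only [hin, e1, e2, e3, e4, mul_add, Finset.sum_add_distrib]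
  have c1 : ∑ i : Fin (l+1), star (z i.castSucc) * (v i * z (Fin.last (l+1)))
      = z (Fin.last (l+1)) * ∑ i : Fin (l+1), star (z i.castSucc) * v i := by
    rw [Finset.mul_sum]; exact Finset.sum_congr rfl fun i _ => by ring
  rw [c1]; ring

lemma S_expand {k : ℕ} (M : Matrix (Fin k) (Fin k) ℂ) (x w : Fin k → ℂ) (t : ℂ) :
    star (x + t • w) ⬝ᵥ M *ᵥ (x + t • w)
      = star x ⬝ᵥ M *ᵥ x + t * (star x ⬝ᵥ M *ᵥ w) + star t * (star w ⬝ᵥ M *ᵥ x)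
        + star t * t * (star w ⬝ᵥ M *ᵥ w) := by
  have hs : star (x + t • w) = star x + star t • star w := by
    rw [star_add, star_smul]
  rw [hs, mulVec_add, mulVec_smul]
  simp only [dotProduct_add, add_dotProduct, smul_dotProduct, dotProduct_smul, smul_eq_mul]
  ring

lemma star_mulVec_dot {k : ℕ} {M : Matrix (Fin k) (Fin k) ℂ} (hM : M.IsHermitian)
    (w x : Fin k → ℂ) : star (M *ᵥ w) ⬝ᵥ x = star w ⬝ᵥ M *ᵥ x := by
  rw [star_mulVec, hM.eq, ← dotProduct_mulVec]

lemma path_completion : ∀ (m : ℕ) (d : ℕ → ℝ) (a : ℕ → ℂ),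
    (∀ i, i < m → 0 < d i) → (∀ i, i + 1 < m → Complex.normSq (a i) < d i * d (i+1)) →
    ∃ M : Matrix (Fin m) (Fin m) ℂ, M.PosDef ∧ (∀ i : Fin m, M i i = (d (i:ℕ) : ℂ)) ∧
      (∀ (i : ℕ) (h : i + 1 < m), M ⟨i, Nat.lt_of_succ_lt h⟩ ⟨i+1, h⟩ = a i) := by
  intro m
  induction m with
  | zero =>
    intro d a _ _
    refine ⟨0, ⟨?_, ?_⟩, ?_, ?_⟩
    · simp [Matrix.IsHermitian]
    · intro x hx
      exact (hx (Finsupp.ext fun i => i.elim0)).elim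
    · intro i; exact i.elim0
    · intro i h; omega
  | succ k IH =>
    cases k with
    | zero =>
      intro d a hd _
      refine ⟨Matrix.diagonal (fun _ => (d 0 : ℂ)), Matrix.PosDef.diagonal (fun _ => ?_), ?_, ?_⟩
      · exact_mod_cast hd 0 (by omega)
      · intro i
        have : i = 0 := Fin.ext (by omega)
        subst this; simp
      · intro i h; omega
    | succ l =>
      intro d a hd ha
      obtain ⟨M, hM, hdiag, hedge⟩ := IH d a (fun i h => hd i (by omega)) (fun i h => ha i (by omega))
      have hdl : 0 < d l := hd l (by omega)
      have hdl1 : 0 < d (l+1) := hd (l+1) (by omega)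
      set p : Fin (l+1) := ⟨l, by omega⟩ with hp
      set γ : ℂ := a l / (d l : ℂ) with hγ
      set w : Fin (l+1) → ℂ := fun i => if i = p then γ else 0 with hw
      set v : Fin (l+1) → ℂ := M *ᵥ w with hv
      set M' : Matrix (Fin (l+2)) (Fin (l+2)) ℂ := fun i j =>
        if hi : (i:ℕ) < l+1 then
          if hj : (j:ℕ) < l+1 then M ⟨(i:ℕ),hi⟩ ⟨(j:ℕ),hj⟩ else v ⟨(i:ℕ),hi⟩
        else if hj : (j:ℕ) < l+1 then star (v ⟨(j:ℕ),hj⟩) else ((d (l+1) : ℝ) : ℂ) with hM'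
      have e1 : ∀ i j : Fin (l+1), M' i.castSucc j.castSucc = M i j := by
        intro i j; simp [hM', Fin.is_lt, Fin.is_le]
      have e2 : ∀ i : Fin (l+1), M' i.castSucc (Fin.last (l+1)) = v i := by
        intro i; simp [hM', Fin.is_lt, Fin.is_le]
      have e3 : ∀ j : Fin (l+1), M' (Fin.last (l+1)) j.castSucc = star (v j) := by
        intro j; simp [hM', Fin.is_lt, Fin.is_le]
      have e4 : M' (Fin.last (l+1)) (Fin.last (l+1)) = ((d (l+1) : ℝ) : ℂ) := by
        simp [hM']
      -- value of v at p and the Schur quantity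
      have hvp : ∀ i, v i = γ * M i p := by
        intro i
        simp [hv, hw, Matrix.mulVec, dotProduct, mul_ite, mul_comm]
      have hMpp : M p p = (d l : ℂ) := by
        have := hdiag p; simpa [hp] using this
      have hSww : star w ⬝ᵥ v = ((Complex.normSq γ * d l : ℝ) : ℂ) := by
        have h1 : star w ⬝ᵥ v = starRingEnd ℂ γ * v p := by
          simp [hw, dotProduct, apply_ite (starRingEnd ℂ), ite_mul]
        rw [h1, hvp p, hMpp, Complex.ofReal_mul, Complex.normSq_eq_conj_mul_self]
        ring
      have hr : 0 < d (l+1) - Complex.normSq γ * d l := by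
        have hγsq : Complex.normSq γ = Complex.normSq (a l) / (d l)^2 := by
          rw [hγ, Complex.normSq_div]
          simp [Complex.normSq_ofReal, pow_two]
        rw [hγsq]
        rw [div_mul_eq_mul_div, sub_pos, div_lt_iff₀ (by positivity)]
        have := ha l (by omega)
        calc Complex.normSq (a l) * d l < d l * d (l+1) * d l := by
              apply mul_lt_mul_of_pos_right this hdl
          _ = d (l+1) * (d l)^2 := by ring
      -- hermitian
      have hherm : M'.IsHermitian := by
        rw [Matrix.IsHermitian]
        ext i j
        rcases Fin.eq_castSucc_or_eq_last i with ⟨i', rfl⟩ | rfl <;>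
          rcases Fin.eq_castSucc_or_eq_last j with ⟨j', rfl⟩ | rfl
        · simp only [Matrix.conjTranspose_apply, e1]
          exact hM.1.apply i' j'
        · simp [Matrix.conjTranspose_apply, e2, e3]
        · simp [Matrix.conjTranspose_apply, e2, e3]
        · simp [Matrix.conjTranspose_apply, e4, Complex.conj_ofReal]
      refine ⟨M', posDef_iff_dotProduct_mulVec.mpr ⟨hherm, ?_⟩, ?_, ?_⟩
      · -- positivity
        intro z hz
        have hform := form_expand M v _ M' e1 e2 e3 e4 z
        set x : Fin (l+1) → ℂ := z ∘ Fin.castSucc with hx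
        set t : ℂ := z (Fin.last (l+1)) with ht
        have hsv : star v ⬝ᵥ x = star w ⬝ᵥ M *ᵥ x := star_mulVec_dot hM.1 w x
        have hxv : star x ⬝ᵥ v = star x ⬝ᵥ M *ᵥ w := rfl
        have hkey : star z ⬝ᵥ M' *ᵥ z
            = star (x + t • w) ⬝ᵥ M *ᵥ (x + t • w)
              + star t * t * (((d (l+1) - Complex.normSq γ * d l : ℝ)) : ℂ) := by
          rw [hform, S_expand, hsv, hxv]
          have : star w ⬝ᵥ M *ᵥ w = ((Complex.normSq γ * d l : ℝ) : ℂ) := hSww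
          rw [this]
          simp only [Complex.star_def]
          push_cast
          ring
        rw [hkey]
        by_cases hu : x + t • w = 0
        · have htne : t ≠ 0 := by
            intro ht0
            apply hz
            have hx0 : x = 0 := by
              rw [ht0, zero_smul, add_zero] at hu; exact hu
            funext i
            rcases Fin.eq_castSucc_or_eq_last i with ⟨i', rfl⟩ | rfl
            · exact congrFun hx0 i'
            · exact ht0
          rw [hu]
          simp only [Matrix.mulVec_zero, dotProduct_zero, zero_add]
          have : star t * t = ((Complex.normSq t : ℝ) : ℂ) := by
            rw [Complex.normSq_eq_conj_mul_self]; rfl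
          rw [this, ← Complex.ofReal_mul]
          rw [Complex.zero_lt_real]
          exact mul_pos (Complex.normSq_pos.mpr htne) hr
        · have h1 : 0 < star (x + t • w) ⬝ᵥ M *ᵥ (x + t • w) := hM.dotProduct_mulVec_pos hu
          have h2 : (0:ℂ) ≤ star t * t * (((d (l+1) - Complex.normSq γ * d l : ℝ)) : ℂ) := by
            have hst : star t * t = ((Complex.normSq t : ℝ) : ℂ) := by
              rw [Complex.normSq_eq_conj_mul_self]; rfl
            rw [hst, ← Complex.ofReal_mul]
            rw [Complex.zero_le_real]
            exact mul_nonneg (Complex.normSq_nonneg t) (le_of_lt hr)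
          exact add_pos_of_pos_of_nonneg h1 h2
      · -- diagonal entries
        intro i
        rcases Fin.eq_castSucc_or_eq_last i with ⟨i', rfl⟩ | rfl
        · rw [e1, hdiag]; norm_num
        · rw [e4]; norm_num
      · -- path edges
        intro i h
        by_cases hlt : i + 1 < l + 1
        · have hthis := e1 ⟨i, by omega⟩ ⟨i+1, hlt⟩
          rw [Fin.castSucc_mk, Fin.castSucc_mk] at hthis
          rw [hthis]
          exact hedge i hlt
        · have hi : i = l := by omega
          subst hi
          have hthis := e2 p
          rw [hp, Fin.castSucc_mk] at hthis
          rw [show (Fin.last (i+1)) = (⟨i+1, h⟩ : Fin (i+2)) from rfl] at hthis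
          rw [hthis, hvp, hMpp, hγ]
          field_simp

lemma cycleG_adj {n : ℕ} {i j : Fin n} : (cycleG n).Adj i j ↔
    i ≠ j ∧ ((j:ℕ) = ((i:ℕ)+1) % n ∨ (i:ℕ) = ((j:ℕ)+1) % n) := by
  simp [cycleG, SimpleGraph.fromRel_adj]

lemma succ_mod_inj {n b c : ℕ} (hb : b < n) (hc : c < n) (h : (b+1) % n = (c+1) % n) :
    b = c := by
  have h2 : b % n = c % n := Nat.ModEq.add_right_cancel' 1 h
  rwa [Nat.mod_eq_of_lt hb, Nat.mod_eq_of_lt hc] at h2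

lemma dir3 {n : ℕ} (hn : 4 ≤ n) {x y z : Fin n}
    (h1 : (y:ℕ) = ((x:ℕ)+1) % n) (h2 : (z:ℕ) = ((y:ℕ)+1) % n)
    (h3 : (x:ℕ) = ((z:ℕ)+1) % n) : False := by
  have hz : (z:ℕ) = ((x:ℕ)+2) % n := by
    rw [h2, h1, Nat.mod_add_mod]
  have hx : ((z:ℕ)+1) % n = ((x:ℕ)+3) % n := by
    rw [hz, Nat.mod_add_mod]
  have hlt : (x:ℕ) < n := x.isLt
  have h4 : (x:ℕ) % n = ((x:ℕ)+3) % n :=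
    calc (x:ℕ) % n = (x:ℕ) := Nat.mod_eq_of_lt hlt
      _ = ((z:ℕ)+1) % n := h3
      _ = ((x:ℕ)+3) % n := hx
  have h5 : n ∣ (x:ℕ) + 3 - (x:ℕ) := (Nat.modEq_iff_dvd' (by omega)).mp h4
  have h6 : n ∣ 3 := by simpa using h5
  have := Nat.le_of_dvd (by norm_num) h6
  omega

lemma cycle_no_triangle {n : ℕ} (hn : 4 ≤ n) {x y z : Fin n}
    (hxy : (cycleG n).Adj x y) (hyz : (cycleG n).Adj y z) (hxz : (cycleG n).Adj x z) :
    False := by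
  rw [cycleG_adj] at hxy hyz hxz
  obtain ⟨nxy, hxy⟩ := hxy
  obtain ⟨nyz, hyz⟩ := hyz
  obtain ⟨nxz, hxz⟩ := hxz
  have inj1 : ∀ {u v w : Fin n}, (v:ℕ) = ((u:ℕ)+1) % n → (w:ℕ) = ((u:ℕ)+1) % n → v = w := by
    intro u v w h1 h2; exact Fin.ext (h1.trans h2.symm)
  have inj2 : ∀ {u v w : Fin n}, (u:ℕ) = ((v:ℕ)+1) % n → (u:ℕ) = ((w:ℕ)+1) % n → v = w := by
    intro u v w h1 h2
    exact Fin.ext (succ_mod_inj v.isLt w.isLt (h1.symm.trans h2))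
  rcases hxy with h1 | h1 <;> rcases hyz with h2 | h2 <;> rcases hxz with h3 | h3
  · exact nyz (inj1 h1 h3)
  · exact dir3 hn h1 h2 h3
  · exact nyz (inj1 h1 h3)
  · exact nxy (inj1 h2 h3).symm
  · exact nxz (inj1 h1 h2)
  · exact nxz (inj1 h1 h2)
  · exact dir3 hn h3 h2 h1
  · exact nxy (inj1 h2 h3).symm

lemma clique_card_le_two {n : ℕ} (hn : 4 ≤ n) {K : Finset (Fin n)}
    (hK : (cycleG n).IsClique (K : Set (Fin n))) : K.card ≤ 2 := by
  by_contra h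
  obtain ⟨x, y, z, hx, hy, hz, hxy, hxz, hyz⟩ := Finset.two_lt_card_iff.mp (show 2 < K.card by omega)
  exact cycle_no_triangle hn (hK hx hy hxy) (hK hy hz hyz) (hK hx hz hxz)

lemma form_attach {n : ℕ} (A : Matrix (Fin n) (Fin n) ℂ) (K : Finset (Fin n)) (g : Fin n → ℂ) :
    star (fun p : {a // a ∈ K} => g p.1) ⬝ᵥ (cliqueSub A K) *ᵥ (fun p => g p.1)
      = ∑ p ∈ K, star (g p) * ∑ q ∈ K, A p q * g q := by
  simp only [dotProduct, mulVec, cliqueSub, submatrix_apply, Pi.star_apply,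
    Finset.univ_eq_attach]
  have inner : ∀ p : {a // a ∈ K}, (∑ q ∈ K.attach, A p.1 q.1 * g q.1) = ∑ q ∈ K, A p.1 q * g q :=
    fun p => Finset.sum_attach K (fun q => A p.1 q * g q)
  calc ∑ p ∈ K.attach, star (g p.1) * ∑ q ∈ K.attach, A p.1 q.1 * g q.1
      = ∑ p ∈ K.attach, star (g p.1) * ∑ q ∈ K, A p.1 q * g q := by
        exact Finset.sum_congr rfl fun p _ => by rw [inner p]
    _ = ∑ p ∈ K, star (g p) * ∑ q ∈ K, A p q * g q :=
        Finset.sum_attach K (fun p => star (g p) * ∑ q ∈ K, A p q * g q)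

lemma subtype_vec_eq {n : ℕ} {K : Finset (Fin n)} (x : {a // a ∈ K} → ℂ) :
    x = fun p => (fun v => if h : v ∈ K then x ⟨v, h⟩ else 0) p.1 := by
  funext p
  simp only [p.2, dif_pos, Subtype.coe_eta]

lemma posdef_diag_pos {n : ℕ} {A : Matrix (Fin n) (Fin n) ℂ} {i : Fin n}
    (hPD : (cliqueSub A {i}).PosDef) : 0 < A i i := by
  have hmem : i ∈ ({i} : Finset (Fin n)) := Finset.mem_singleton_self i
  set g : Fin n → ℂ := fun v => if v = i then 1 else 0 with hg
  have hx : (fun p : {a // a ∈ ({i} : Finset (Fin n))} => g p.1) ≠ 0 := by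
    intro h
    have := congrFun h ⟨i, hmem⟩
    simp [hg] at this
  have := hPD.dotProduct_mulVec_pos hx
  rw [form_attach] at this
  simpa [hg] using this

lemma posdef_pair_form {n : ℕ} {A : Matrix (Fin n) (Fin n) ℂ} {i j : Fin n} (hij : i ≠ j)
    (hPD : (cliqueSub A {i,j}).PosDef) (t s : ℂ) (hts : ¬(t = 0 ∧ s = 0)) :
    0 < star t * A i i * t + star t * A i j * s + star s * A j i * t + star s * A j j * s := by
  have hmi : i ∈ ({i,j} : Finset (Fin n)) := by simp
  have hmj : j ∈ ({i,j} : Finset (Fin n)) := by simp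
  set g : Fin n → ℂ := fun v => if v = i then t else if v = j then s else 0 with hg
  have hx : (fun p : {a // a ∈ ({i,j} : Finset (Fin n))} => g p.1) ≠ 0 := by
    intro h
    rcases not_and_or.mp hts with ht | hs
    · have := congrFun h ⟨i, hmi⟩; simp [hg] at this; exact ht this
    · have := congrFun h ⟨j, hmj⟩; simp [hg, hij.symm] at this; exact hs this
  have hQ := hPD.dotProduct_mulVec_pos hx
  rw [form_attach] at hQ
  rw [Finset.sum_insert (by simp [hij]), Finset.sum_singleton,
    Finset.sum_insert (by simp [hij]), Finset.sum_insert (by simp [hij]),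
    Finset.sum_singleton, Finset.sum_singleton] at hQ
  have hgi : g i = t := by simp [hg]
  have hgj : g j = s := by simp [hg, hij.symm]
  rw [hgi, hgj] at hQ
  calc (0:ℂ) < star t * (A i i * t + A i j * s) + star s * (A j i * t + A j j * s) := hQ
    _ = star t * A i i * t + star t * A i j * s + star s * A j i * t + star s * A j j * s := by
        ring


lemma psd_of_negCount_zero {n : ℕ} {M : Matrix (Fin n) (Fin n) ℂ} (hM : M.IsHermitian)
    (h : negCount hM = 0) : M.PosSemidef := by
  apply hM.posSemidef_iff_eigenvalues_nonneg.mpr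
  intro i
  by_contra hneg
  push_neg at hneg
  rw [negCount, Fintype.card_eq_zero_iff] at h
  exact h.false ⟨i, hneg⟩

lemma cliqueSub_empty_posDef {n : ℕ} (A : Matrix (Fin n) (Fin n) ℂ) :
    (cliqueSub A (∅ : Finset (Fin n))).PosDef := by
  rw [posDef_iff_dotProduct_mulVec]
  constructor
  · ext p q
    exact absurd p.2 (Finset.notMem_empty _)
  · intro x hx
    exact absurd (funext fun p => absurd p.2 (Finset.notMem_empty _)) hx

lemma real_of_pos {z : ℂ} (h : 0 < z) : z = ((z.re : ℝ) : ℂ) := by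
  rw [Complex.lt_def] at h
  exact Complex.ext rfl (by simpa using h.2.symm)

lemma cliqueSub_singleton_posDef {n : ℕ} {A : Matrix (Fin n) (Fin n) ℂ} {i : Fin n}
    (h : 0 < A i i) : (cliqueSub A {i}).PosDef := by
  have hmem : i ∈ ({i} : Finset (Fin n)) := Finset.mem_singleton_self i
  have hre : 0 < (A i i).re := by
    rw [Complex.lt_def] at h; exact h.1
  have hAii : A i i = (((A i i).re : ℝ) : ℂ) := real_of_pos h
  rw [posDef_iff_dotProduct_mulVec]
  constructor
  · ext p q
    have hp : p = ⟨i, hmem⟩ := Subtype.ext (Finset.mem_singleton.mp p.2)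
    have hq : q = ⟨i, hmem⟩ := Subtype.ext (Finset.mem_singleton.mp q.2)
    subst hp; subst hq
    show star (A i i) = A i i
    rw [hAii]; exact Complex.conj_ofReal _
  · intro x hx
    set t : ℂ := x ⟨i, hmem⟩ with ht
    set g : Fin n → ℂ := fun v => if v = i then t else 0 with hg
    have hxg : x = fun p : {a // a ∈ ({i} : Finset (Fin n))} => g p.1 := by
      funext p
      have hp : p = ⟨i, hmem⟩ := Subtype.ext (Finset.mem_singleton.mp p.2)
      subst hp
      simp [hg, ht]
    have htne : t ≠ 0 := by
      intro h0
      apply hx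
      rw [hxg]
      funext p
      have hp : p = ⟨i, hmem⟩ := Subtype.ext (Finset.mem_singleton.mp p.2)
      subst hp
      simp [hg, h0]
    rw [hxg, form_attach]
    rw [Finset.sum_singleton, Finset.sum_singleton]
    have hgi : g i = t := by simp [hg]
    rw [hgi, hAii]
    have : star t * ((((A i i).re : ℝ) : ℂ) * t) = ((Complex.normSq t * (A i i).re : ℝ) : ℂ) := by
      rw [Complex.ofReal_mul, Complex.normSq_eq_conj_mul_self,
        show star t = (starRingEnd ℂ) t from rfl]
      ring
    rw [this, Complex.zero_lt_real]
    exact mul_pos (Complex.normSq_pos.mpr htne) hre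

lemma cliqueSub_pair_posDef {n : ℕ} {A : Matrix (Fin n) (Fin n) ℂ} {i j : Fin n} (hij : i ≠ j)
    (hii : A i i = 1) (hjj : A j j = 1) (hsym : A j i = star (A i j))
    (hb : ‖A i j‖ < 1) : (cliqueSub A {i,j}).PosDef := by
  have hmi : i ∈ ({i,j} : Finset (Fin n)) := by simp
  have hmj : j ∈ ({i,j} : Finset (Fin n)) := by simp
  have hcases : ∀ p : {a // a ∈ ({i,j} : Finset (Fin n))}, p.1 = i ∨ p.1 = j := by
    intro p
    have := p.2
    rw [Finset.mem_insert, Finset.mem_singleton] at this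
    exact this
  rw [posDef_iff_dotProduct_mulVec]
  constructor
  · ext p q
    show star (A q.1 p.1) = A p.1 q.1
    rcases hcases p with hp | hp <;> rcases hcases q with hq | hq <;> rw [hp, hq]
    · rw [hii]; simp
    · rw [hsym, star_star]
    · rw [hsym]
    · rw [hjj]; simp
  · intro x hx
    set t : ℂ := x ⟨i, hmi⟩ with ht
    set s : ℂ := x ⟨j, hmj⟩ with hs
    set g : Fin n → ℂ := fun v => if v = i then t else if v = j then s else 0 with hg
    have hxg : x = fun p : {a // a ∈ ({i,j} : Finset (Fin n))} => g p.1 := by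
      funext p
      rcases hcases p with hp | hp
      · have : p = ⟨i, hmi⟩ := Subtype.ext hp
        subst this; simp [hg, ht]
      · have : p = ⟨j, hmj⟩ := Subtype.ext hp
        subst this; simp [hg, hij.symm, hs]
    have hts : ¬(t = 0 ∧ s = 0) := by
      rintro ⟨ht0, hs0⟩
      apply hx
      rw [hxg]
      funext p
      rcases hcases p with hp | hp <;> simp [hg, hp, ht0, hs0, hij.symm]
    rw [hxg, form_attach]
    rw [Finset.sum_insert (by simp [hij]), Finset.sum_singleton,
      Finset.sum_insert (by simp [hij]), Finset.sum_insert (by simp [hij]),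
      Finset.sum_singleton, Finset.sum_singleton]
    have hgi : g i = t := by simp [hg]
    have hgj : g j = s := by simp [hg, hij.symm]
    rw [hgi, hgj, hii, hjj, hsym]
    set z : ℂ := star t * (A i j) * s with hz
    have hform : star t * (1 * t + A i j * s) + star s * (star (A i j) * t + 1 * s)
        = ((Complex.normSq t + Complex.normSq s + 2 * z.re : ℝ) : ℂ) := by
      have h1 : star s * (star (A i j) * t) = star z := by
        rw [hz, StarMul.star_mul, StarMul.star_mul, star_star]
        try ring
      have h2 : z + star z = ((2 * z.re : ℝ) : ℂ) := by
        rw [show star z = (starRingEnd ℂ) z from rfl, Complex.add_conj]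
        try push_cast
        try ring
      calc star t * (1 * t + A i j * s) + star s * (star (A i j) * t + 1 * s)
          = (star t * t + star s * s) + (z + star z) := by rw [← h1, hz]; ring
        _ = ((Complex.normSq t : ℝ) : ℂ) + ((Complex.normSq s : ℝ) : ℂ) + ((2 * z.re : ℝ) : ℂ) := by
            rw [h2, Complex.normSq_eq_conj_mul_self, Complex.normSq_eq_conj_mul_self]; rfl
        _ = ((Complex.normSq t + Complex.normSq s + 2 * z.re : ℝ) : ℂ) := by push_cast; ring
    rw [hform, Complex.zero_lt_real]
    have habs : ‖z‖ ≤ ‖t‖ * ‖A i j‖ * ‖s‖ := by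
      rw [hz, norm_mul, norm_mul]
      simp
    have hzre : -(‖t‖ * ‖A i j‖ * ‖s‖) ≤ z.re := by
      have h1 : -‖z‖ ≤ z.re := (abs_le.mp (Complex.abs_re_le_norm z)).1
      exact le_trans (neg_le_neg habs) h1
    have hsqt : Complex.normSq t = (‖t‖)^2 := (Complex.sq_norm t).symm
    have hsqs : Complex.normSq s = (‖s‖)^2 := (Complex.sq_norm s).symm
    have htpos : 0 < ‖t‖ ∨ 0 < ‖s‖ := by
      rcases not_and_or.mp hts with h0 | h0
      · exact Or.inl (by simpa using norm_pos_iff.mpr h0)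
      · exact Or.inr (by simpa using norm_pos_iff.mpr h0)
    have hsum : 0 < (‖t‖)^2 + (‖s‖)^2 := by
      rcases htpos with h0 | h0
      · have := norm_nonneg s; positivity
      · have := norm_nonneg t; positivity
    have hto : 0 ≤ ‖t‖ := norm_nonneg t
    have hso : 0 ≤ ‖s‖ := norm_nonneg s
    have habsnn : 0 ≤ ‖A i j‖ := norm_nonneg _
    rw [hsqt, hsqs]
    nlinarith [sq_nonneg (‖t‖ - ‖s‖), sq_nonneg (‖t‖ + ‖s‖),
      mul_nonneg hto hso]

lemma upper_bound {n : ℕ} (hn : 4 ≤ n) (A : Matrix (Fin n) (Fin n) ℂ)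
    (hA : IsPartialPositive (cycleG n) A) :
    ∃ M : Matrix (Fin n) (Fin n) ℂ, ∃ hM : M.IsHermitian,
      (∀ i j : Fin n, (i = j ∨ (cycleG n).Adj i j) → M i j = A i j) ∧ negCount hM ≤ 1 := by
  obtain ⟨⟨him, hsym⟩, hcl⟩ := hA
  have hsing : ∀ i : Fin n, 0 < A i i := by
    intro i
    apply posdef_diag_pos
    apply hcl
    rw [Finset.coe_singleton]
    intro p hp q hq hne
    rw [Set.mem_singleton_iff] at hp hq
    exact absurd (hp.trans hq.symm) hne
  have hAre : ∀ i : Fin n, A i i = (((A i i).re : ℝ) : ℂ) := fun i =>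
    Complex.ext rfl (by simpa using him i)
  have hrepos : ∀ i : Fin n, 0 < (A i i).re := fun i => (Complex.lt_def.mp (hsing i)).1
  set d : ℕ → ℝ := fun i => if h : i < n then (A ⟨i,h⟩ ⟨i,h⟩).re else 1 with hdd
  set a : ℕ → ℂ := fun i =>
    if h : i + 1 < n then A ⟨i, Nat.lt_of_succ_lt h⟩ ⟨i+1, h⟩ else 0 with haa
  have hdpos : ∀ i, i < n → 0 < d i := by
    intro i h
    rw [hdd]; simp only [h, dif_pos]
    exact hrepos _
  have hadj : ∀ (i : ℕ) (h : i+1 < n),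
      (cycleG n).Adj ⟨i, Nat.lt_of_succ_lt h⟩ ⟨i+1, h⟩ := by
    intro i h
    rw [cycleG_adj]
    refine ⟨?_, Or.inl ?_⟩
    · intro he
      have := congrArg Fin.val he
      simp only [Fin.val_mk] at this
      omega
    · simp [Nat.mod_eq_of_lt h]
  have hedge_ineq : ∀ (i : ℕ), i + 1 < n → Complex.normSq (a i) < d i * d (i+1) := by
    intro i h
    set p : Fin n := ⟨i, Nat.lt_of_succ_lt h⟩ with hip
    set q : Fin n := ⟨i+1, h⟩ with hiq
    have hadjpq := hadj i h
    have hpd := hcl {p,q} (by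
      rw [Finset.coe_insert, Finset.coe_singleton]
      exact SimpleGraph.isClique_pair.mpr (fun _ => hadjpq))
    set e : ℂ := A p q with he
    set r₁ : ℝ := (A p p).re with hr₁
    set r₂ : ℝ := (A q q).re with hr₂
    have hs0 : ((r₁ : ℝ) : ℂ) ≠ 0 := by
      simp only [ne_eq, Complex.ofReal_eq_zero]
      exact ne_of_gt (hrepos p)
    have hform := posdef_pair_form hadjpq.ne hpd (-e) ((r₁ : ℝ) : ℂ)
      (by rintro ⟨_, h0⟩; exact hs0 h0)
    rw [hAre p, hAre q, hsym p q hadjpq, ← he, ← hr₁, ← hr₂] at hform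
    have hstar : star (((r₁:ℝ)):ℂ) = ((r₁:ℝ):ℂ) := Complex.conj_ofReal _
    rw [hstar] at hform
    have key : star (-e) * ((r₁:ℝ):ℂ) * (-e) + star (-e) * e * ((r₁:ℝ):ℂ)
        + ((r₁:ℝ):ℂ) * star e * (-e) + ((r₁:ℝ):ℂ) * ((r₂:ℝ):ℂ) * ((r₁:ℝ):ℂ)
        = ((r₁ * (r₁ * r₂ - Complex.normSq e) : ℝ) : ℂ) := by
      simp only [Complex.star_def]
      rw [map_neg]
      push_cast
      rw [Complex.normSq_eq_conj_mul_self]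
      ring
    rw [key, Complex.zero_lt_real] at hform
    have h1 : Complex.normSq e < r₁ * r₂ := by nlinarith [hrepos p]
    have hda : d i = r₁ := by
      rw [hdd]; simp only [Nat.lt_of_succ_lt h, dif_pos]; rfl
    have hdb : d (i+1) = r₂ := by
      rw [hdd]; simp only [h, dif_pos]; rfl
    have hae : a i = e := by
      rw [haa]; simp only [h, dif_pos]; rfl
    rw [hda, hdb, hae]
    exact h1
  obtain ⟨M, hMpd, hMdiag, hMedge⟩ := path_completion n d a hdpos hedge_ineq
  set li : Fin n := ⟨n-1, by omega⟩ with hli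
  set zi : Fin n := ⟨0, by omega⟩ with hzi
  have hlzne : li ≠ zi := by
    intro h
    have := congrArg Fin.val h
    simp only [hli, hzi, Fin.val_mk] at this
    omega
  have hlz : (cycleG n).Adj li zi := by
    rw [cycleG_adj]
    refine ⟨hlzne, Or.inl ?_⟩
    simp only [hli, hzi, Fin.val_mk]
    have : n - 1 + 1 = n := by omega
    rw [this, Nat.mod_self]
  set M' : Matrix (Fin n) (Fin n) ℂ := fun i j =>
    if i = li ∧ j = zi then A li zi else if i = zi ∧ j = li then A zi li else M i j with hM'
  have hAzl : A zi li = star (A li zi) := hsym li zi hlz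
  have hM'app : ∀ i j : Fin n, M' i j =
      if i = li ∧ j = zi then A li zi else if i = zi ∧ j = li then A zi li else M i j :=
    fun i j => rfl
  have hherm : M'.IsHermitian := by
    rw [Matrix.IsHermitian]
    ext i j
    rw [Matrix.conjTranspose_apply, hM'app i j, hM'app j i]
    by_cases h1 : i = li ∧ j = zi
    · obtain ⟨rfl, rfl⟩ := h1
      simp [hlzne, Ne.symm hlzne, hAzl]
    · by_cases h2 : i = zi ∧ j = li
      · obtain ⟨rfl, rfl⟩ := h2
        simp [hlzne, Ne.symm hlzne, hAzl]
      · have h1' : ¬(j = li ∧ i = zi) := fun hc => h2 ⟨hc.2, hc.1⟩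
        have h2' : ¬(j = zi ∧ i = li) := fun hc => h1 ⟨hc.2, hc.1⟩
        rw [if_neg h1', if_neg h2', if_neg h1, if_neg h2]
        exact hMpd.1.apply i j
  have hmatch_r : ∀ i j : Fin n, (j:ℕ) = ((i:ℕ)+1) % n → i ≠ j → M' i j = A i j := by
    intro i j hr hne
    by_cases hi : (i:ℕ)+1 < n
    · have hj : j = ⟨(i:ℕ)+1, hi⟩ := Fin.ext (by rw [hr, Nat.mod_eq_of_lt hi])
      have h1 : ¬(i = li ∧ j = zi) := by
        rintro ⟨ha, _⟩
        have := congrArg Fin.val ha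
        simp only [hli, Fin.val_mk] at this
        omega
      have h2 : ¬(i = zi ∧ j = li) := by
        rintro ⟨ha, hb⟩
        have h3 := congrArg Fin.val ha
        have h4 := congrArg Fin.val hb
        simp only [hli, hzi, Fin.val_mk] at h3 h4
        rw [hj] at h4
        simp only [Fin.val_mk] at h4
        omega
      rw [hM'app, if_neg h1, if_neg h2]
      have := hMedge (i:ℕ) hi
      rw [Fin.eta] at this
      rw [hj, this, haa]
      simp only [hi, dif_pos]
    · have hival : (i:ℕ) = n-1 := by have := i.isLt; omega
      have hjval : (j:ℕ) = 0 := by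
        rw [hr, show (i:ℕ)+1 = n by omega, Nat.mod_self]
      have hi' : i = li := Fin.ext (by simp [hli, hival])
      have hj' : j = zi := Fin.ext (by simp [hzi, hjval])
      subst hi'; subst hj'
      rw [hM'app, if_pos ⟨rfl, rfl⟩]
  have hmatch : ∀ i j : Fin n, (i = j ∨ (cycleG n).Adj i j) → M' i j = A i j := by
    intro i j hij
    rcases hij with rfl | hadj'
    · have h1 : ¬(i = li ∧ i = zi) := by
        rintro ⟨ha, hb⟩
        exact hlzne (ha ▸ hb ▸ rfl)
      have h2 : ¬(i = zi ∧ i = li) := fun hc => h1 ⟨hc.2, hc.1⟩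
      rw [hM'app, if_neg h1, if_neg h2, hMdiag i, hAre i]
      congr 1
      rw [hdd]
      simp only [i.isLt, dif_pos, Fin.eta]
    · have hadj2 := hadj'
      rw [cycleG_adj] at hadj2
      obtain ⟨hne, hor⟩ := hadj2
      rcases hor with hr | hr
      · exact hmatch_r i j hr hne
      · have h1 : M' j i = A j i := hmatch_r j i hr hne.symm
        have h2 : star (M' j i) = M' i j := hherm.apply i j
        rw [← h2, h1, hsym i j hadj', star_star]
  refine ⟨M', hherm, hmatch, ?_⟩
  apply negCount_le_one hherm zi
  intro x hx h0
  have hformeq : star x ⬝ᵥ M' *ᵥ x = star x ⬝ᵥ M *ᵥ x := by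
    simp only [dotProduct, mulVec]
    apply Finset.sum_congr rfl
    intro i _
    by_cases hizi : i = zi
    · subst hizi
      rw [Pi.star_apply, h0]
      simp
    · congr 1
      apply Finset.sum_congr rfl
      intro j _
      by_cases hjzi : j = zi
      · subst hjzi
        rw [h0, mul_zero, mul_zero]
      · rw [hM'app, if_neg (fun hc => hjzi hc.2), if_neg (fun hc => hizi hc.1)]
  rw [hformeq]
  exact hMpd.dotProduct_mulVec_pos hx

open scoped MatrixOrder in
lemma psd_exists_conjTranspose_mul_self {n : ℕ} {M : Matrix (Fin n) (Fin n) ℂ}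
    (h : M.PosSemidef) : ∃ B : Matrix (Fin n) (Fin n) ℂ, M = Bᴴ * B := by
  obtain ⟨y, hy⟩ := CStarAlgebra.nonneg_iff_eq_star_mul_self.mp h.nonneg
  exact ⟨y, hy⟩

lemma lower_bound {n : ℕ} (hn : 4 ≤ n) :
    ∃ A : Matrix (Fin n) (Fin n) ℂ, IsPartialPositive (cycleG n) A ∧
      ∀ (M : Matrix (Fin n) (Fin n) ℂ) (hM : M.IsHermitian),
        (∀ i j : Fin n, (i = j ∨ (cycleG n).Adj i j) → M i j = A i j) →
          negCount hM ≠ 0 := by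
  have hN : (3:ℝ) ≤ (n:ℝ) - 1 := by
    have : (4:ℝ) ≤ (n:ℝ) := by exact_mod_cast hn
    linarith
  set N : ℝ := (n:ℝ) - 1 with hNdef
  have hNpos : 0 < N := by linarith
  set a : ℝ := 1 - 1/N^2 with hadef
  have ha1 : a < 1 := by
    rw [hadef]
    have h : 0 < 1/N^2 := by positivity
    linarith
  have ha0 : 0 < a := by
    have h9 : (9:ℝ) ≤ N^2 := by nlinarith
    have : 1/N^2 ≤ 1/9 := by
      apply one_div_le_one_div_of_le <;> linarith
    rw [hadef]; linarith
  set A : Matrix (Fin n) (Fin n) ℂ := fun i j =>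
    if i = j then 1
    else if ((j:ℕ) = (i:ℕ)+1 ∨ (i:ℕ) = (j:ℕ)+1) then ((a:ℝ):ℂ)
    else if (((i:ℕ) = n-1 ∧ (j:ℕ) = 0) ∨ ((i:ℕ) = 0 ∧ (j:ℕ) = n-1)) then (-(a:ℝ):ℂ)
    else 0 with hA
  have hAapp : ∀ i j : Fin n, A i j =
      if i = j then 1
      else if ((j:ℕ) = (i:ℕ)+1 ∨ (i:ℕ) = (j:ℕ)+1) then ((a:ℝ):ℂ)
      else if (((i:ℕ) = n-1 ∧ (j:ℕ) = 0) ∨ ((i:ℕ) = 0 ∧ (j:ℕ) = n-1)) then (-(a:ℝ):ℂ)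
      else 0 := fun i j => rfl
  have hdiagA : ∀ i : Fin n, A i i = 1 := by intro i; rw [hAapp]; simp
  have hsymA : ∀ i j : Fin n, A j i = A i j := by
    intro i j
    by_cases h : i = j
    · subst h; rfl
    · rw [hAapp, hAapp, if_neg h, if_neg (Ne.symm h)]
      have c2 : ((i:ℕ) = (j:ℕ)+1 ∨ (j:ℕ) = (i:ℕ)+1) ↔ ((j:ℕ) = (i:ℕ)+1 ∨ (i:ℕ) = (j:ℕ)+1) :=
        or_comm
      have c3 : (((j:ℕ) = n-1 ∧ (i:ℕ) = 0) ∨ ((j:ℕ) = 0 ∧ (i:ℕ) = n-1)) ↔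
          (((i:ℕ) = n-1 ∧ (j:ℕ) = 0) ∨ ((i:ℕ) = 0 ∧ (j:ℕ) = n-1)) := by
        constructor <;> rintro (⟨h1, h2⟩ | ⟨h1, h2⟩)
        · exact Or.inr ⟨h2, h1⟩
        · exact Or.inl ⟨h2, h1⟩
        · exact Or.inr ⟨h2, h1⟩
        · exact Or.inl ⟨h2, h1⟩
      rw [if_congr c2 rfl (if_congr c3 rfl rfl)]
  have hstarA : ∀ i j : Fin n, star (A i j) = A i j := by
    intro i j
    rw [hAapp]
    split_ifs <;> simp
  have habsA : ∀ i j : Fin n, i ≠ j → ‖A i j‖ < 1 := by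
    intro i j h
    rw [hAapp, if_neg h]
    split_ifs <;> simp [Complex.norm_real, Real.norm_eq_abs, abs_of_pos ha0, ha1]
  have hPP : IsPartialPositive (cycleG n) A := by
    refine ⟨⟨fun i => by rw [hdiagA]; rfl, fun i j _ => by rw [hstarA, hsymA]⟩, ?_⟩
    intro K hK
    have hcard := clique_card_le_two hn hK
    by_cases h0 : K.card = 0
    · rw [Finset.card_eq_zero] at h0; subst h0; exact cliqueSub_empty_posDef A
    by_cases h1 : K.card = 1
    · obtain ⟨i, rfl⟩ := Finset.card_eq_one.mp h1
      exact cliqueSub_singleton_posDef (by rw [hdiagA]; exact zero_lt_one)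
    · have h2 : K.card = 2 := by omega
      obtain ⟨i, j, hij, rfl⟩ := Finset.card_eq_two.mp h2
      exact cliqueSub_pair_posDef hij (hdiagA i) (hdiagA j)
        (by rw [hstarA, hsymA]) (habsA i j hij)
  refine ⟨A, hPP, ?_⟩
  intro M hM hmatch hneg
  have hpsd : M.PosSemidef := psd_of_negCount_zero hM hneg
  obtain ⟨B, hB⟩ := psd_exists_conjTranspose_mul_self hpsd
  set w : Fin n → EuclideanSpace ℂ (Fin n) :=
    fun i => (WithLp.equiv 2 (Fin n → ℂ)).symm (fun k => B k i) with hw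
  have hinner : ∀ i j : Fin n, (inner ℂ (w i) (w j) : ℂ) = M i j := by
    intro i j
    rw [hw]
    rw [EuclideanSpace.inner_eq_star_dotProduct, dotProduct_comm]
    simp only [Equiv.apply_symm_apply]
    rw [hB]
    rw [Matrix.mul_apply]
    simp [dotProduct, Matrix.conjTranspose_apply]
  -- adjacency facts
  have hadjpath : ∀ (i : ℕ) (h : i+1 < n),
      (cycleG n).Adj ⟨i, Nat.lt_of_succ_lt h⟩ ⟨i+1, h⟩ := by
    intro i h
    rw [cycleG_adj]
    refine ⟨?_, Or.inl ?_⟩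
    · intro he
      have := congrArg Fin.val he
      simp only [Fin.val_mk] at this
      omega
    · simp [Nat.mod_eq_of_lt h]
  set li : Fin n := ⟨n-1, by omega⟩ with hli
  set zi : Fin n := ⟨0, by omega⟩ with hzi
  have hlz : (cycleG n).Adj li zi := by
    rw [cycleG_adj]
    refine ⟨?_, Or.inl ?_⟩
    · intro h
      have := congrArg Fin.val h
      simp only [hli, hzi, Fin.val_mk] at this
      omega
    · simp only [hli, hzi, Fin.val_mk]
      rw [show n - 1 + 1 = n by omega, Nat.mod_self]
  -- entries of M
  have hMdiag : ∀ i : Fin n, M i i = 1 := by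
    intro i; rw [hmatch i i (Or.inl rfl), hdiagA]
  have hMedge : ∀ (i : ℕ) (h : i+1 < n),
      M ⟨i, Nat.lt_of_succ_lt h⟩ ⟨i+1, h⟩ = ((a:ℝ):ℂ) := by
    intro i h
    rw [hmatch _ _ (Or.inr (hadjpath i h)), hAapp]
    rw [if_neg (by intro he; have := congrArg Fin.val he; simp only [Fin.val_mk] at this; omega)]
    rw [if_pos (Or.inl rfl)]
  have hMzl : M zi li = (-(a:ℝ):ℂ) := by
    rw [hmatch _ _ (Or.inr hlz.symm), hAapp]
    rw [if_neg (by intro he; have := congrArg Fin.val he; simp only [hli, hzi, Fin.val_mk] at this; omega)]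
    rw [if_neg (by simp only [hli, hzi, Fin.val_mk]; omega)]
    rw [if_pos (Or.inr ⟨rfl, rfl⟩)]
  -- norms
  have hnorm : ∀ i : Fin n, ‖w i‖^2 = 1 := by
    intro i
    have h1 : RCLike.re (inner ℂ (w i) (w i) : ℂ) = ‖w i‖^2 := inner_self_eq_norm_sq (w i)
    rw [hinner, hMdiag] at h1
    rw [← h1]
    simp
  set c : ℝ := Real.sqrt (2 - 2*a) with hc
  have h2a : 0 ≤ 2 - 2*a := by linarith
  have hstepnorm : ∀ (i : ℕ) (h : i+1 < n),
      ‖w ⟨i, Nat.lt_of_succ_lt h⟩ - w ⟨i+1, h⟩‖ = c := by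
    intro i h
    have hsq : ‖w ⟨i, Nat.lt_of_succ_lt h⟩ - w ⟨i+1, h⟩‖^2 = 2 - 2*a := by
      rw [norm_sub_sq (𝕜 := ℂ), hinner, hMedge i h, hnorm, hnorm]
      simp
      ring
    rw [hc, ← hsq, Real.sqrt_sq (norm_nonneg _)]
  have claim : ∀ k : ℕ, ∀ hk : k < n, ‖w zi - w ⟨k, hk⟩‖ ≤ k * c := by
    intro k
    induction k with
    | zero =>
      intro hk
      have : (⟨0, hk⟩ : Fin n) = zi := rfl
      rw [this, sub_self, norm_zero]
      simp
    | succ k IH =>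
      intro hk
      have hk' : k < n := by omega
      have htri := dist_triangle (w zi) (w ⟨k, hk'⟩) (w ⟨k+1, hk⟩)
      rw [dist_eq_norm, dist_eq_norm, dist_eq_norm] at htri
      have hst : ‖w ⟨k, hk'⟩ - w ⟨k+1, hk⟩‖ = c := hstepnorm k hk
      have hcnn : 0 ≤ c := Real.sqrt_nonneg _
      calc ‖w zi - w ⟨k+1, hk⟩‖ ≤ ‖w zi - w ⟨k, hk'⟩‖ + ‖w ⟨k, hk'⟩ - w ⟨k+1, hk⟩‖ := htri
        _ ≤ k * c + c := add_le_add (IH hk') (le_of_eq hst)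
        _ = (k+1 : ℕ) * c := by push_cast; ring
  have hfin := claim (n-1) (by omega)
  have hfin' : ‖w zi - w li‖ ≤ N * c := by
    have hcast : ((n-1 : ℕ) : ℝ) = N := by
      rw [hNdef]; push_cast [Nat.cast_sub (by omega : 1 ≤ n)]; ring
    rw [← hcast]
    exact hfin
  have hsq2 : ‖w zi - w li‖^2 ≤ N^2 * (2 - 2*a) := by
    have h1 : ‖w zi - w li‖^2 ≤ (N * c)^2 := by
      apply sq_le_sq' _ hfin'
      have := norm_nonneg (w zi - w li)
      nlinarith [mul_nonneg (le_of_lt hNpos) (Real.sqrt_nonneg (2-2*a))]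
    have h2 : (N * c)^2 = N^2 * (2 - 2*a) := by
      rw [mul_pow, hc, Real.sq_sqrt h2a]
    linarith
  have hre : RCLike.re (inner ℂ (w zi) (w li) : ℂ) = -a := by
    rw [hinner, hMzl]
    simp
  have hns : ‖w zi - w li‖^2 = 2 + 2*a := by
    rw [norm_sub_sq (𝕜 := ℂ), hre, hnorm, hnorm]
    ring
  -- contradiction
  rw [hns] at hsq2
  have hNsq : N^2 * (2 - 2*a) = 2 := by
    rw [hadef]
    field_simp
    ring
  rw [hNsq] at hsq2
  linarith

/-- For every `n ≥ 4`, the completion number of the chordless cycle `Cₙ` equals `1`. -/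
theorem stmt11 (n : ℕ) (hn : 4 ≤ n) : CompletionNumberIs (cycleG n) 1 := by
  constructor
  · intro A hA
    exact upper_bound hn A hA
  · intro k hk
    by_contra hlt
    push_neg at hlt
    have hk0 : k = 0 := by omega
    subst hk0
    obtain ⟨A, hPP, hbad⟩ := lower_bound hn
    obtain ⟨M, hM, hmatch, hneg⟩ := hk A hPP
    exact hbad M hM hmatch (Nat.le_zero.mp hneg)
end

section
/- Let A be the 8×8 block-diagonal partial Hermitian matrix diag(B, B) where B is the 4×4 partial matrix with diagonal entries 1, specified entries b₁₂ = b₂₃ = b₃₄ = 1, b₁₄ = -1, and unspecified entries b₁₃, b₂₄; the off-diagonal blocks are entirely specified as 0. Then every Hermitian completion M of A satisfies i₋(M) ≥ 2. -/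
open Matrix ComplexOrder

lemma quad_re {n : Type*} [Fintype n] [DecidableEq n] {M : Matrix n n ℂ} (hM : M.IsHermitian)
    (z : n → ℂ) :
    (star z ⬝ᵥ M *ᵥ z).re
      = ∑ i, hM.eigenvalues i
          * Complex.normSq ((star (hM.eigenvectorUnitary : Matrix n n ℂ) *ᵥ z) i) := by
  set U := (hM.eigenvectorUnitary : Matrix n n ℂ) with hUdef
  set w := star U *ᵥ z with hw
  have hsw : star w = star z ᵥ* U := by
    rw [hw, star_mulVec, star_eq_conjTranspose, conjTranspose_conjTranspose]
  have key : star z ⬝ᵥ M *ᵥ z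
      = star w ⬝ᵥ (diagonal (RCLike.ofReal ∘ hM.eigenvalues) *ᵥ w) := by
    conv_lhs => rw [hM.spectral_theorem]
    rw [Unitary.conjStarAlgAut_apply, ← hUdef, ← mulVec_mulVec, ← mulVec_mulVec, ← hw, dotProduct_mulVec, ← hsw]
  rw [key]
  rw [dotProduct, Complex.re_sum]
  congr 1; funext i
  simp only [mulVec_diagonal, Function.comp_apply]
  have hcoe : (RCLike.ofReal (hM.eigenvalues i) : ℂ) = ((hM.eigenvalues i : ℝ) : ℂ) := rfl
  rw [hcoe, Pi.star_apply, Complex.star_def,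
    show (starRingEnd ℂ) (w i) * (((hM.eigenvalues i : ℝ) : ℂ) * w i)
      = ((hM.eigenvalues i : ℝ) : ℂ) * ((starRingEnd ℂ) (w i) * w i) from by ring,
    ← Complex.normSq_eq_conj_mul_self, ← Complex.ofReal_mul, Complex.ofReal_re]

lemma negCount_two {n : Type*} [Fintype n] [DecidableEq n] {M : Matrix n n ℂ}
    (hM : M.IsHermitian) (u1 u2 : n → ℂ)
    (h1 : (star u1 ⬝ᵥ M *ᵥ u1).re < 0) (h2 : (star u2 ⬝ᵥ M *ᵥ u2).re < 0)
    (h12 : star u1 ⬝ᵥ M *ᵥ u2 = 0) (h21 : star u2 ⬝ᵥ M *ᵥ u1 = 0) :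
    2 ≤ negCount hM := by
  by_contra hlt
  have hcard : Fintype.card {i // hM.eigenvalues i < 0} ≤ 1 := by
    unfold negCount at hlt; omega
  set U := (hM.eigenvectorUnitary : Matrix n n ℂ) with hU
  by_cases hneg : ∃ i0, hM.eigenvalues i0 < 0
  · obtain ⟨i0, hi0⟩ := hneg
    have huniq : ∀ j, hM.eigenvalues j < 0 → j = i0 := fun j hj =>
      congrArg Subtype.val (Fintype.card_le_one_iff.mp hcard ⟨j, hj⟩ ⟨i0, hi0⟩)
    set w1 := star U *ᵥ u1 with hw1
    set w2 := star U *ᵥ u2 with hw2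
    have nonneg_of_zero : ∀ z : n → ℂ, (star U *ᵥ z) i0 = 0 →
        0 ≤ (star z ⬝ᵥ M *ᵥ z).re := by
      intro z hz0
      rw [quad_re hM z]
      apply Finset.sum_nonneg
      intro i _
      by_cases hii : i = i0
      · subst hii; rw [hz0]; simp
      · have : 0 ≤ hM.eigenvalues i := le_of_not_gt fun h => hii (huniq i h)
        exact mul_nonneg this (Complex.normSq_nonneg _)
    by_cases h0 : w1 i0 = 0
    · exact absurd (nonneg_of_zero u1 h0) (not_le.mpr h1)
    · set t := w2 i0 / w1 i0 with ht
      set z := u2 - t • u1 with hz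
      have hwz : star U *ᵥ z = w2 - t • w1 := by
        rw [hz, mulVec_sub, mulVec_smul, hw1, hw2]
      have hz0 : (star U *ᵥ z) i0 = 0 := by
        rw [hwz]; simp only [Pi.sub_apply, Pi.smul_apply, smul_eq_mul, ht]
        field_simp
        simp
      have hq : star z ⬝ᵥ M *ᵥ z
          = star u2 ⬝ᵥ M *ᵥ u2 + (starRingEnd ℂ) t * t * (star u1 ⬝ᵥ M *ᵥ u1) := by
        simp only [hz, star_sub, star_smul, mulVec_sub, mulVec_smul, sub_dotProduct,
          dotProduct_sub, smul_dotProduct, dotProduct_smul, h12, h21, smul_eq_mul,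
          mul_zero, sub_zero, RCLike.star_def]
        ring
      have hre : (star z ⬝ᵥ M *ᵥ z).re
          = (star u2 ⬝ᵥ M *ᵥ u2).re + Complex.normSq t * (star u1 ⬝ᵥ M *ᵥ u1).re := by
        rw [hq, Complex.add_re, ← Complex.normSq_eq_conj_mul_self, Complex.re_ofReal_mul]
      have hzneg : (star z ⬝ᵥ M *ᵥ z).re < 0 := by
        rw [hre]
        have : 0 ≤ Complex.normSq t := Complex.normSq_nonneg t
        nlinarith
      exact absurd (nonneg_of_zero z hz0) (not_le.mpr hzneg)
  · push_neg at hneg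
    have : 0 ≤ (star u1 ⬝ᵥ M *ᵥ u1).re := by
      rw [quad_re hM u1]
      exact Finset.sum_nonneg fun i _ => mul_nonneg (hneg i) (Complex.normSq_nonneg _)
    exact absurd this (not_le.mpr h1)

lemma block_neg (x y : ℂ) : ∃ v : Fin 4 → ℂ,
    (star v ⬝ᵥ (!![1, 1, x, -1; 1, 1, 1, y; star x, 1, 1, 1; -1, star y, 1, 1] :
        Matrix (Fin 4) (Fin 4) ℂ) *ᵥ v).re < 0 := by
  by_cases hx : x.re < 1/2
  · refine ⟨![1, -1, 1, 0], ?_⟩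
    have h : (star ![(1:ℂ), -1, 1, 0] ⬝ᵥ
        (!![1, 1, x, -1; 1, 1, 1, y; star x, 1, 1, 1; -1, star y, 1, 1] :
          Matrix (Fin 4) (Fin 4) ℂ) *ᵥ ![1, -1, 1, 0]) = x + star x - 1 := by
      simp [Matrix.mulVec, dotProduct, Fin.sum_univ_four, Matrix.vecHead, Matrix.vecTail]
      ring
    rw [h]
    simp only [Complex.sub_re, Complex.add_re, Complex.one_re, RCLike.star_def, Complex.conj_re]
    linarith
  · by_cases hy : y.re < 1/2
    · refine ⟨![0, 1, -1, 1], ?_⟩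
      have h : (star ![(0:ℂ), 1, -1, 1] ⬝ᵥ
          (!![1, 1, x, -1; 1, 1, 1, y; star x, 1, 1, 1; -1, star y, 1, 1] :
            Matrix (Fin 4) (Fin 4) ℂ) *ᵥ ![0, 1, -1, 1]) = y + star y - 1 := by
        simp [Matrix.mulVec, dotProduct, Fin.sum_univ_four, Matrix.vecHead, Matrix.vecTail]
        ring
      rw [h]
      simp only [Complex.sub_re, Complex.add_re, Complex.one_re, RCLike.star_def, Complex.conj_re]
      linarith
    · refine ⟨![1, -1, -1, 1], ?_⟩
      have h : (star ![(1:ℂ), -1, -1, 1] ⬝ᵥ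
          (!![1, 1, x, -1; 1, 1, 1, y; star x, 1, 1, 1; -1, star y, 1, 1] :
            Matrix (Fin 4) (Fin 4) ℂ) *ᵥ ![1, -1, -1, 1]) = -(x + star x + y + star y) := by
        simp [Matrix.mulVec, dotProduct, Fin.sum_univ_four, Matrix.vecHead, Matrix.vecTail]
        ring
      rw [h]
      simp only [Complex.neg_re, Complex.add_re, RCLike.star_def, Complex.conj_re]
      push_neg at hx hy
      linarith


/-- Every Hermitian completion of `diag(B, B)` (with `B` the 4-cycle counterexample
partial matrix and zero off-diagonal blocks) has at least two negative eigenvalues. -/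
theorem stmt13 (x₁ y₁ x₂ y₂ : ℂ)
    (hM : (Matrix.fromBlocks
        !![1, 1, x₁, -1; 1, 1, 1, y₁; star x₁, 1, 1, 1; -1, star y₁, 1, 1] 0 0
        !![1, 1, x₂, -1; 1, 1, 1, y₂; star x₂, 1, 1, 1; -1, star y₂, 1, 1] :
        Matrix (Fin 4 ⊕ Fin 4) (Fin 4 ⊕ Fin 4) ℂ).IsHermitian) :
    2 ≤ negCount hM := by
  obtain ⟨v1, hv1⟩ := block_neg x₁ y₁
  obtain ⟨v2, hv2⟩ := block_neg x₂ y₂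
  set B1 := (!![1, 1, x₁, -1; 1, 1, 1, y₁; star x₁, 1, 1, 1; -1, star y₁, 1, 1] :
    Matrix (Fin 4) (Fin 4) ℂ) with hB1
  set B2 := (!![1, 1, x₂, -1; 1, 1, 1, y₂; star x₂, 1, 1, 1; -1, star y₂, 1, 1] :
    Matrix (Fin 4) (Fin 4) ℂ) with hB2
  set u1 : Fin 4 ⊕ Fin 4 → ℂ := Sum.elim v1 0 with hu1
  set u2 : Fin 4 ⊕ Fin 4 → ℂ := Sum.elim (0 : Fin 4 → ℂ) v2 with hu2
  have hsu1 : star u1 = Sum.elim (star v1) 0 := by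
    funext i; rcases i with i | i <;> simp [hu1]
  have hsu2 : star u2 = Sum.elim (0 : Fin 4 → ℂ) (star v2) := by
    funext i; rcases i with i | i <;> simp [hu2]
  have hm1 : Matrix.fromBlocks B1 0 0 B2 *ᵥ u1 = Sum.elim (B1 *ᵥ v1) 0 := by
    rw [hu1, fromBlocks_mulVec]
    simp
  have hm2 : Matrix.fromBlocks B1 0 0 B2 *ᵥ u2 = Sum.elim (0 : Fin 4 → ℂ) (B2 *ᵥ v2) := by
    rw [hu2, fromBlocks_mulVec]
    simp
  apply negCount_two hM u1 u2
  · rw [hm1, hsu1, sumElim_dotProduct_sumElim]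
    simpa using hv1
  · rw [hm2, hsu2, sumElim_dotProduct_sumElim]
    simpa using hv2
  · rw [hm2, hsu1, sumElim_dotProduct_sumElim]
    simp
  · rw [hm1, hsu2, sumElim_dotProduct_sumElim]
    simp
end
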